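/- arXiv:1307.3142 — 9 statements merged into one kernel-verified Lean document; each statement's English description precedes it below -/
import Mathlib

section
/- For every integer e ≥ 1 and every integer ℓ ≥ 2e + 1, there exists a nontrivial e-perfect code in the discrete 1-simplex Δ_ℓ^1, and every e-perfect code in Δ_ℓ^1 with at least two codewords has exactly ⌈(ℓ+1)/(2e+1)⌉ codewords. -/
/-- The discrete `n`-simplex `Δ_ℓ^n`: tuples of `n+1` nonnegative integers summing to `ℓ`. -/
def simplex (n : ℕ) (ℓ : ℤ) : Set (Fin (n + 1) → ℤ) :=
  {x | (∀ i, 0 ≤ x i) ∧ ∑ i, x i = ℓ}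

/-- The metric `d(x,y) = (1/2)∑|x_i − y_i| = ∑_{i : x_i > y_i}(x_i − y_i)` on the simplex. -/
def sdist {n : ℕ} (x y : Fin (n + 1) → ℤ) : ℤ :=
  ∑ i, max (x i - y i) 0

/-- The ball of radius `e` centered at `x` inside the simplex `Δ_ℓ^n`. -/
def ball (n : ℕ) (ℓ : ℤ) (x : Fin (n + 1) → ℤ) (e : ℤ) : Set (Fin (n + 1) → ℤ) :=
  {w ∈ simplex n ℓ | sdist x w ≤ e}

/-- `C` is an `e`-perfect code in `Δ_ℓ^n`: every element of the simplex is at distance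
at most `e` from exactly one codeword. -/
def IsPerfectCode (n : ℕ) (ℓ e : ℤ) (C : Set (Fin (n + 1) → ℤ)) : Prop :=
  C ⊆ simplex n ℓ ∧ ∀ w ∈ simplex n ℓ, ∃! c, c ∈ C ∧ sdist c w ≤ e

/-- The direction vector `f_{i,j}`: entry `1` at position `i`, `-1` at position `j`,
`0` elsewhere (for `i ≠ j`). -/
def fvec (n : ℕ) (i j : Fin (n + 1)) : Fin (n + 1) → ℤ :=
  fun k => (if k = i then 1 else 0) - (if k = j then 1 else 0)

/-- embedding of ℤ into the 1-simplex -/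
def phi (ℓ : ℤ) : ℤ → (Fin 2 → ℤ) := fun a => ![a, ℓ - a]

lemma phi_inj (ℓ : ℤ) : Function.Injective (phi ℓ) := by
  intro a b h
  have := congrFun h 0
  simpa [phi] using this

lemma phi_mem_simplex {ℓ a : ℤ} (h0 : 0 ≤ a) (h1 : a ≤ ℓ) : phi ℓ a ∈ simplex 1 ℓ := by
  refine ⟨fun i => ?_, ?_⟩
  · fin_cases i <;> simp [phi] <;> omega
  · show (∑ i : Fin 2, _) = _
    rw [Fin.sum_univ_two]; simp [phi]

lemma mem_simplex {ℓ : ℤ} {x : Fin 2 → ℤ} (hx : x ∈ simplex 1 ℓ) :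
    x = phi ℓ (x 0) ∧ 0 ≤ x 0 ∧ x 0 ≤ ℓ := by
  obtain ⟨hpos, hsum⟩ := hx
  rw [show (∑ i, x i) = x 0 + x 1 from Fin.sum_univ_two x] at hsum
  have h0 := hpos 0
  have h1 := hpos 1
  refine ⟨?_, h0, by omega⟩
  funext i; fin_cases i <;> simp [phi] <;> omega

lemma sdist_phi (ℓ a b : ℤ) : sdist (phi ℓ a) (phi ℓ b) = max (a - b) 0 + max (b - a) 0 := by
  show (∑ i : Fin 2, _) = _
  rw [Fin.sum_univ_two]
  simp [phi]

lemma perfect_of_good {e ℓ : ℤ} (S : Set ℤ) (hsub : S ⊆ Set.Icc 0 ℓ)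
    (hcov : ∀ a, 0 ≤ a → a ≤ ℓ → ∃! c, c ∈ S ∧ -e ≤ c - a ∧ c - a ≤ e) :
    IsPerfectCode 1 ℓ e (phi ℓ '' S) := by
  constructor
  · rintro x ⟨a, haS, rfl⟩
    have := hsub haS
    exact phi_mem_simplex this.1 this.2
  · intro w hw
    obtain ⟨hw_eq, hb0, hb1⟩ := mem_simplex hw
    obtain ⟨c, ⟨hcS, hc1, hc2⟩, huniq⟩ := hcov (w 0) hb0 hb1
    refine ⟨phi ℓ c, ⟨⟨c, hcS, rfl⟩, ?_⟩, ?_⟩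
    · rw [hw_eq, sdist_phi]; omega
    · rintro y ⟨⟨a, haS, rfl⟩, hd⟩
      rw [hw_eq, sdist_phi] at hd
      exact congrArg (phi ℓ) (huniq a ⟨haS, by omega, by omega⟩)

lemma good_of_perfect {e ℓ : ℤ} (C : Set (Fin 2 → ℤ)) (hC : IsPerfectCode 1 ℓ e C) :
    ∃ S : Set ℤ, C = phi ℓ '' S ∧ S ⊆ Set.Icc 0 ℓ ∧
      (∀ a, 0 ≤ a → a ≤ ℓ → ∃! c, c ∈ S ∧ -e ≤ c - a ∧ c - a ≤ e) := by
  obtain ⟨hsub, hcov⟩ := hC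
  refine ⟨(fun x => x 0) '' C, ?_, ?_, ?_⟩
  · ext x
    constructor
    · intro hx
      exact ⟨x 0, ⟨x, hx, rfl⟩, ((mem_simplex (hsub hx)).1).symm⟩
    · rintro ⟨a, ⟨y, hy, rfl⟩, rfl⟩
      rwa [← (mem_simplex (hsub hy)).1]
  · rintro a ⟨y, hy, rfl⟩
    have := mem_simplex (hsub hy)
    exact ⟨this.2.1, this.2.2⟩
  · intro a ha0 ha1
    have hwmem : phi ℓ a ∈ simplex 1 ℓ := phi_mem_simplex ha0 ha1
    obtain ⟨c, ⟨hcC, hcd⟩, huniq⟩ := hcov (phi ℓ a) hwmem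
    have hc_eq := (mem_simplex (hsub hcC)).1
    rw [hc_eq, sdist_phi] at hcd
    refine ⟨c 0, ⟨⟨c, hcC, rfl⟩, by omega, by omega⟩, ?_⟩
    rintro b ⟨⟨y, hyC, rfl⟩, hb1, hb2⟩
    beta_reduce at hb1 hb2 ⊢
    have hy_eq := (mem_simplex (hsub hyC)).1
    have : y = c := by
      apply huniq
      refine ⟨hyC, ?_⟩
      rw [hy_eq, sdist_phi]; omega
    rw [this]

lemma classify {e ℓ : ℤ} (he : 1 ≤ e) (hℓ : 0 ≤ ℓ) (S : Set ℤ)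
    (hS : S ⊆ Set.Icc 0 ℓ)
    (hP : ∀ a, 0 ≤ a → a ≤ ℓ → ∃! c, c ∈ S ∧ -e ≤ c - a ∧ c - a ≤ e) :
    ∃ I : ℤ, 0 ≤ I ∧ I * (2 * e + 1) ≤ ℓ ∧ ℓ + 1 ≤ (I + 1) * (2 * e + 1) ∧
      ((S.ncard : ℤ)) = I + 1 := by
  -- choose the covering function g
  have h' : ∀ a : ℤ, ∃ c, 0 ≤ a → a ≤ ℓ →
      c ∈ S ∧ (-e ≤ c - a ∧ c - a ≤ e) ∧ ∀ c' ∈ S, -e ≤ c' - a → c' - a ≤ e → c' = c := by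
    intro a
    by_cases h : 0 ≤ a ∧ a ≤ ℓ
    · obtain ⟨c, hc, hu⟩ := hP a h.1 h.2
      exact ⟨c, fun _ _ => ⟨hc.1, hc.2, fun c' h1 h2 h3 => hu c' ⟨h1, h2, h3⟩⟩⟩
    · exact ⟨0, fun h1 h2 => absurd ⟨h1, h2⟩ h⟩
  choose g hg using h'
  have hmem : ∀ a, 0 ≤ a → a ≤ ℓ → g a ∈ S := fun a h1 h2 => (hg a h1 h2).1
  have hcov1 : ∀ a, 0 ≤ a → a ≤ ℓ → -e ≤ g a - a ∧ g a - a ≤ e := fun a h1 h2 => (hg a h1 h2).2.1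
  have huniq : ∀ a, 0 ≤ a → a ≤ ℓ → ∀ c' ∈ S, -e ≤ c' - a → c' - a ≤ e → c' = g a :=
    fun a h1 h2 => (hg a h1 h2).2.2
  have hfix : ∀ c ∈ S, g c = c := by
    intro c hc
    have hb := hS hc
    exact (huniq c hb.1 hb.2 c hc (by omega) (by omega)).symm
  -- step lemma
  have hstep : ∀ a, 0 ≤ a → a + 1 ≤ ℓ → g (a + 1) = g a ∨ g (a + 1) = g a + (2 * e + 1) := by
    intro a h1 h2
    by_cases hgg : g (a + 1) = g a
    · exact Or.inl hgg
    · right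
      have hga := hcov1 a h1 (by omega)
      have hga1 := hcov1 (a + 1) (by omega) h2
      have hnot1 : ¬(-e ≤ g (a + 1) - a ∧ g (a + 1) - a ≤ e) := by
        intro hh
        exact hgg (huniq a h1 (by omega) (g (a + 1)) (hmem (a + 1) (by omega) h2) hh.1 hh.2)
      have hnot2 : ¬(-e ≤ g a - (a + 1) ∧ g a - (a + 1) ≤ e) := by
        intro hh
        exact hgg ((huniq (a + 1) (by omega) h2 (g a) (hmem a h1 (by omega)) hh.1 hh.2).symm)
      omega
  -- main induction
  have key : ∀ a, 0 ≤ a → a ≤ ℓ → ∃ i, 0 ≤ i ∧ g a = g 0 + i * (2 * e + 1) ∧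
      ∀ j, 0 ≤ j → j ≤ i → ∃ b, 0 ≤ b ∧ b ≤ a ∧ g b = g 0 + j * (2 * e + 1) := by
    intro a ha
    refine Int.le_induction (motive := fun a _ => a ≤ ℓ → ∃ i, 0 ≤ i ∧ g a = g 0 + i * (2 * e + 1) ∧
      ∀ j, 0 ≤ j → j ≤ i → ∃ b, 0 ≤ b ∧ b ≤ a ∧ g b = g 0 + j * (2 * e + 1)) ?_ ?_ a ha
    · intro _
      exact ⟨0, le_refl 0, by ring_nf, fun j hj1 hj2 => ⟨0, le_refl 0, le_refl 0, by
        have : j = 0 := le_antisymm hj2 hj1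
        rw [this]; ring_nf⟩⟩
    · intro a ha ih hal
      obtain ⟨i, hi0, hga, hsurj⟩ := ih (by omega)
      rcases hstep a ha hal with h | h
      · exact ⟨i, hi0, by rw [h, hga], fun j hj1 hj2 => by
          obtain ⟨b, hb1, hb2, hb3⟩ := hsurj j hj1 hj2
          exact ⟨b, hb1, by omega, hb3⟩⟩
      · refine ⟨i + 1, by omega, by rw [h, hga]; ring, fun j hj1 hj2 => ?_⟩
        by_cases hji : j ≤ i
        · obtain ⟨b, hb1, hb2, hb3⟩ := hsurj j hj1 hji
          exact ⟨b, hb1, by omega, hb3⟩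
        · have : j = i + 1 := by omega
          exact ⟨a + 1, by omega, le_refl _, by rw [this, h, hga]; ring⟩
  obtain ⟨I, hI0, hgl, hsurj⟩ := key ℓ hℓ (le_refl ℓ)
  -- bounds on g 0 and g ℓ
  have hg0 := hcov1 0 (le_refl 0) hℓ
  have hg0S := hS (hmem 0 (le_refl 0) hℓ)
  have hglc := hcov1 ℓ hℓ (le_refl ℓ)
  have hglS := hS (hmem ℓ hℓ (le_refl ℓ))
  simp only [Set.mem_Icc] at hg0S hglS
  refine ⟨I, hI0, ?_, ?_, ?_⟩
  · nlinarith [hg0S.1, hglS.2]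
  · nlinarith [hg0.2, hglc.1]
  · -- S = image
    have hSeq : S = (fun j => g 0 + j * (2 * e + 1)) '' Set.Icc 0 I := by
      ext c
      constructor
      · intro hc
        have hcb := hS hc
        simp only [Set.mem_Icc] at hcb
        obtain ⟨i, hi0, hgc, _⟩ := key c hcb.1 hcb.2
        rw [hfix c hc] at hgc
        have hiI : i ≤ I := by
          by_contra hcon
          push_neg at hcon
          have h1 : (I + 1) * (2 * e + 1) ≤ i * (2 * e + 1) :=
            mul_le_mul_of_nonneg_right (by omega) (by omega)
          nlinarith [hcb.2, hglc.1, hg0S.1]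
        exact ⟨i, Set.mem_Icc.mpr ⟨hi0, hiI⟩, hgc.symm⟩
      · rintro ⟨j, hj, rfl⟩
        simp only [Set.mem_Icc] at hj
        obtain ⟨b, hb1, hb2, hb3⟩ := hsurj j hj.1 hj.2
        show g 0 + j * (2 * e + 1) ∈ S
        rw [← hb3]
        exact hmem b hb1 hb2
    rw [hSeq, Set.ncard_image_of_injective _ (fun x y hxy => by
      have h2 : x * (2 * e + 1) = y * (2 * e + 1) := by
        beta_reduce at hxy
        linarith [hxy]
      exact mul_right_cancel₀ (show (2 * e + 1 : ℤ) ≠ 0 by omega) h2)]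
    rw [show Set.Icc (0:ℤ) I = ↑(Finset.Icc 0 I) by simp, Set.ncard_coe_finset]
    simp [Int.card_Icc]
    omega

lemma ceil_char {e ℓ K : ℤ} (he : 1 ≤ e) (h1 : (K - 1) * (2 * e + 1) ≤ ℓ)
    (h2 : ℓ + 1 ≤ K * (2 * e + 1)) : K = ⌈((ℓ : ℚ) + 1) / (2 * (e : ℚ) + 1)⌉ := by
  have hs : (0 : ℚ) < 2 * (e : ℚ) + 1 := by
    have : (1 : ℚ) ≤ (e : ℚ) := by exact_mod_cast he
    linarith
  symm
  rw [Int.ceil_eq_iff]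
  constructor
  · rw [lt_div_iff₀ hs]
    have h1' : ((K : ℚ) - 1) * (2 * (e : ℚ) + 1) ≤ (ℓ : ℚ) := by exact_mod_cast h1
    push_cast
    linarith
  · rw [div_le_iff₀ hs]
    exact_mod_cast h2

lemma ceil_bounds {e ℓ : ℤ} (he : 1 ≤ e) :
    (⌈((ℓ : ℚ) + 1) / (2 * (e : ℚ) + 1)⌉ - 1) * (2 * e + 1) ≤ ℓ ∧
    ℓ + 1 ≤ ⌈((ℓ : ℚ) + 1) / (2 * (e : ℚ) + 1)⌉ * (2 * e + 1) := by
  have hs : (0 : ℚ) < 2 * (e : ℚ) + 1 := by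
    have : (1 : ℚ) ≤ (e : ℚ) := by exact_mod_cast he
    linarith
  set K := ⌈((ℓ : ℚ) + 1) / (2 * (e : ℚ) + 1)⌉ with hK
  constructor
  · have hB : (K : ℚ) < ((ℓ : ℚ) + 1) / (2 * (e : ℚ) + 1) + 1 := Int.ceil_lt_add_one _
    have : ((K : ℚ) - 1) * (2 * (e : ℚ) + 1) < (ℓ : ℚ) + 1 := by
      rw [← lt_div_iff₀ hs] at *
      linarith
    have h2 : ((K - 1) * (2 * e + 1) : ℤ) < ℓ + 1 := by exact_mod_cast (by push_cast; linarith : ((K - 1) * (2 * e + 1) : ℚ) < (ℓ : ℚ) + 1)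
    omega
  · have hA : ((ℓ : ℚ) + 1) / (2 * (e : ℚ) + 1) ≤ (K : ℚ) := Int.le_ceil _
    rw [div_le_iff₀ hs] at hA
    exact_mod_cast hA

lemma exists_good {e ℓ : ℤ} (he : 1 ≤ e) (hℓ : 2 * e + 1 ≤ ℓ) :
    ∃ S : Set ℤ, S ⊆ Set.Icc 0 ℓ ∧
      (∀ a, 0 ≤ a → a ≤ ℓ → ∃! c, c ∈ S ∧ -e ≤ c - a ∧ c - a ≤ e) ∧ S.Nontrivial := by
  set K := ⌈((ℓ : ℚ) + 1) / (2 * (e : ℚ) + 1)⌉ with hKdef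
  obtain ⟨hK1, hK2⟩ := ceil_bounds (ℓ := ℓ) he
  rw [← hKdef] at hK1 hK2
  have hring : K * (2 * e + 1) = (K - 1) * (2 * e + 1) + (2 * e + 1) := by ring
  set c₁ := max 0 (ℓ - e - (K - 1) * (2 * e + 1)) with hc₁def
  have hc0 : 0 ≤ c₁ := le_max_left _ _
  have hc2 : ℓ - e - (K - 1) * (2 * e + 1) ≤ c₁ := le_max_right _ _
  have hc1 : c₁ ≤ e := max_le (by omega) (by linarith)
  have htop : c₁ + (K - 1) * (2 * e + 1) ≤ ℓ := by
    rcases le_or_gt (ℓ - e - (K - 1) * (2 * e + 1)) 0 with h | h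
    · rw [hc₁def, max_eq_left h]; linarith
    · rw [hc₁def, max_eq_right (le_of_lt h)]; linarith
  have hlast : ℓ + e + 1 ≤ c₁ + K * (2 * e + 1) := by
    rcases le_or_gt (ℓ - e - (K - 1) * (2 * e + 1)) 0 with h | h
    · rw [hc₁def, max_eq_left h]; linarith
    · rw [hc₁def, max_eq_right (le_of_lt h)]; linarith
  have hKge2 : 2 ≤ K := by
    by_contra hcon
    push_neg at hcon
    have : K * (2 * e + 1) ≤ 1 * (2 * e + 1) :=
      mul_le_mul_of_nonneg_right (by omega) (by omega)
    linarith
  refine ⟨(fun i => c₁ + i * (2 * e + 1)) '' Set.Icc 0 (K - 1), ?_, ?_, ?_⟩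
  · rintro x ⟨i, hi, rfl⟩
    simp only [Set.mem_Icc] at hi ⊢
    constructor
    · have := mul_nonneg hi.1 (show (0:ℤ) ≤ 2 * e + 1 by omega)
      linarith
    · have : i * (2 * e + 1) ≤ (K - 1) * (2 * e + 1) :=
        mul_le_mul_of_nonneg_right hi.2 (by omega)
      linarith
  · intro a ha0 ha1
    have hnum : 0 ≤ a - c₁ + e := by omega
    have hdm := Int.mul_ediv_add_emod (a - c₁ + e) (2 * e + 1)
    have hr0 := Int.emod_nonneg (a - c₁ + e) (show (2 * e + 1 : ℤ) ≠ 0 by omega)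
    have hr1 := Int.emod_lt_of_pos (a - c₁ + e) (show (0:ℤ) < 2 * e + 1 by omega)
    set i := (a - c₁ + e) / (2 * e + 1) with hidef
    set r := (a - c₁ + e) % (2 * e + 1) with hrdef
    have hi0 : 0 ≤ i := Int.ediv_nonneg hnum (by omega)
    have hiK : i ≤ K - 1 := by
      by_contra hcon
      push_neg at hcon
      have hKi : K * (2 * e + 1) ≤ i * (2 * e + 1) :=
        mul_le_mul_of_nonneg_right (by omega) (by omega)
      linarith
    refine ⟨c₁ + i * (2 * e + 1), ⟨⟨i, Set.mem_Icc.mpr ⟨hi0, hiK⟩, rfl⟩, by linarith, by linarith⟩, ?_⟩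
    rintro c' ⟨⟨j, hj, rfl⟩, hb1, hb2⟩
    simp only [Set.mem_Icc] at hj
    beta_reduce at hb1 hb2 ⊢
    have hji : j = i := by
      rcases lt_trichotomy j i with h | h | h
      · exfalso
        have hmul : (j + 1) * (2 * e + 1) ≤ i * (2 * e + 1) :=
          mul_le_mul_of_nonneg_right (by omega) (by omega)
        linarith
      · exact h
      · exfalso
        have hmul : (i + 1) * (2 * e + 1) ≤ j * (2 * e + 1) :=
          mul_le_mul_of_nonneg_right (by omega) (by omega)
        linarith
    rw [hji]
  · refine ⟨c₁ + 0 * (2 * e + 1), ⟨0, Set.mem_Icc.mpr ⟨le_refl 0, by omega⟩, rfl⟩,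
      c₁ + 1 * (2 * e + 1), ⟨1, Set.mem_Icc.mpr ⟨by omega, by omega⟩, rfl⟩, by
        intro h
        have : (0 : ℤ) * (2 * e + 1) = 1 * (2 * e + 1) := by omega
        simp at this
        omega⟩

theorem stmt_0 (e ℓ : ℤ) (he : 1 ≤ e) (hℓ : 2 * e + 1 ≤ ℓ) :
    (∃ C : Set (Fin 2 → ℤ), IsPerfectCode 1 ℓ e C ∧ C.Nontrivial) ∧
    (∀ C : Set (Fin 2 → ℤ), IsPerfectCode 1 ℓ e C → C.Nontrivial →
      (C.ncard : ℤ) = ⌈((ℓ : ℚ) + 1) / (2 * (e : ℚ) + 1)⌉) := by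
  constructor
  · obtain ⟨S, hsub, hcov, hnt⟩ := exists_good he hℓ
    refine ⟨phi ℓ '' S, perfect_of_good S hsub hcov, ?_⟩
    obtain ⟨x, hx, y, hy, hxy⟩ := hnt
    exact ⟨phi ℓ x, ⟨x, hx, rfl⟩, phi ℓ y, ⟨y, hy, rfl⟩, fun h => hxy (phi_inj ℓ h)⟩
  · intro C hC _
    obtain ⟨S, rfl, hsub, hcov⟩ := good_of_perfect C hC
    obtain ⟨I, hI0, hIa, hIb, hIcard⟩ := classify he (by omega) S hsub hcov
    rw [Set.ncard_image_of_injective _ (phi_inj ℓ), hIcard]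
    exact ceil_char he (by linarith [hIa]) (by linarith [hIb])
end

section
/- For every integer e ≥ 1, a nontrivial e-perfect code in the discrete 2-simplex Δ_ℓ^2 exists if and only if ℓ = 3e + 1. -/
namespace Stmt2

def P (ℓ a t : ℤ) : Fin 3 → ℤ := fun i => if i = 0 then a else if i = 1 then ℓ - a - t else t

@[simp] lemma P0 (ℓ a t : ℤ) : P ℓ a t 0 = a := rfl
@[simp] lemma P1 (ℓ a t : ℤ) : P ℓ a t 1 = ℓ - a - t := rfl
@[simp] lemma P2 (ℓ a t : ℤ) : P ℓ a t 2 = t := rfl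

lemma mem_simplex_iff {ℓ : ℤ} {x : Fin 3 → ℤ} :
    x ∈ simplex 2 ℓ ↔ 0 ≤ x 0 ∧ 0 ≤ x 1 ∧ 0 ≤ x 2 ∧ x 0 + x 1 + x 2 = ℓ := by
  unfold simplex
  simp only [Set.mem_setOf_eq]
  constructor
  · rintro ⟨h1, h2⟩
    exact ⟨h1 0, h1 1, h1 2, (Fin.sum_univ_three x).symm.trans h2⟩
  · rintro ⟨h0, h1, h2, hs⟩
    refine ⟨fun i => ?_, (Fin.sum_univ_three x).trans hs⟩
    fin_cases i
    · exact h0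
    · exact h1
    · exact h2

lemma sdist_eq (x y : Fin 3 → ℤ) :
    sdist x y = max (x 0 - y 0) 0 + max (x 1 - y 1) 0 + max (x 2 - y 2) 0 := by
  unfold sdist
  exact Fin.sum_univ_three _

def Cv (e : ℤ) (c : Fin 3 → ℤ) (a t : ℤ) : Prop :=
  a - e ≤ c 0 ∧ c 0 ≤ a + e ∧ t - e ≤ c 2 ∧ c 2 ≤ t + e ∧
    a + t - e ≤ c 0 + c 2 ∧ c 0 + c 2 ≤ a + t + e

lemma covIff {e ℓ : ℤ} {c : Fin 3 → ℤ} (hc : c ∈ simplex 2 ℓ) (a t : ℤ) :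
    sdist c (P ℓ a t) ≤ e ↔ Cv e c a t := by
  obtain ⟨h0, h1, h2, hs⟩ := mem_simplex_iff.mp hc
  rw [sdist_eq, P0, P1, P2]
  unfold Cv
  omega

lemma Pmem {ℓ a t : ℤ} (ha : 0 ≤ a) (ht : 0 ≤ t) (hat : a + t ≤ ℓ) : P ℓ a t ∈ simplex 2 ℓ :=
  mem_simplex_iff.mpr ⟨by rw [P0]; omega, by rw [P1]; omega, by rw [P2]; omega, by
    rw [P0, P1, P2]; ring⟩

lemma memCf {e ℓ : ℤ} {C : Set (Fin 3 → ℤ)} (hC : IsPerfectCode 2 ℓ e C) {c} (hc : c ∈ C) :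
    0 ≤ c 0 ∧ 0 ≤ c 1 ∧ 0 ≤ c 2 ∧ c 0 + c 1 + c 2 = ℓ :=
  mem_simplex_iff.mp (hC.1 hc)

lemma covP {e ℓ : ℤ} {C : Set (Fin 3 → ℤ)} (hC : IsPerfectCode 2 ℓ e C)
    (a t : ℤ) (ha : 0 ≤ a) (ht : 0 ≤ t) (hat : a + t ≤ ℓ) :
    ∃ c ∈ C, Cv e c a t := by
  obtain ⟨c, ⟨hc, hd⟩, -⟩ := hC.2 (P ℓ a t) (Pmem ha ht hat)
  exact ⟨c, hc, (covIff (hC.1 hc) a t).mp hd⟩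

lemma unqP {e ℓ : ℤ} {C : Set (Fin 3 → ℤ)} (hC : IsPerfectCode 2 ℓ e C)
    {c c' : Fin 3 → ℤ} (hc : c ∈ C) (hc' : c' ∈ C) (a t : ℤ)
    (ha : 0 ≤ a) (ht : 0 ≤ t) (hat : a + t ≤ ℓ)
    (H1 : Cv e c a t) (H2 : Cv e c' a t) : c = c' :=
  (hC.2 (P ℓ a t) (Pmem ha ht hat)).unique ⟨hc, (covIff (hC.1 hc) a t).mpr H1⟩
    ⟨hc', (covIff (hC.1 hc') a t).mpr H2⟩

lemma sep {e ℓ : ℤ} {C : Set (Fin 3 → ℤ)} (he : 1 ≤ e) (hC : IsPerfectCode 2 ℓ e C)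
    {c c' : Fin 3 → ℤ} (hc : c ∈ C) (hc' : c' ∈ C)
    (H : c 0 - c' 0 ≤ 2*e ∧ c' 0 - c 0 ≤ 2*e ∧ c 1 - c' 1 ≤ 2*e ∧ c' 1 - c 1 ≤ 2*e ∧
      c 2 - c' 2 ≤ 2*e ∧ c' 2 - c 2 ≤ 2*e) : c = c' := by
  obtain ⟨a0, a1, a2, as⟩ := memCf hC hc
  obtain ⟨b0, b1, b2, bs⟩ := memCf hC hc'
  obtain ⟨H1, H2, H3, H4, H5, H6⟩ := H
  obtain ⟨l0, hl0⟩ : ∃ v : ℤ, v = max (max (c 0) (c' 0) - e) 0 := ⟨_, rfl⟩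
  obtain ⟨l1, hl1⟩ : ∃ v : ℤ, v = max (max (c 1) (c' 1) - e) 0 := ⟨_, rfl⟩
  obtain ⟨l2, hl2⟩ : ∃ v : ℤ, v = max (max (c 2) (c' 2) - e) 0 := ⟨_, rfl⟩
  obtain ⟨u1, hu1⟩ : ∃ v : ℤ, v = min (c 1) (c' 1) + e := ⟨_, rfl⟩
  obtain ⟨u2, hu2⟩ : ∃ v : ℤ, v = min (c 2) (c' 2) + e := ⟨_, rfl⟩
  obtain ⟨x0, hx0⟩ : ∃ v : ℤ, v = max l0 (ℓ - u1 - u2) := ⟨_, rfl⟩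
  obtain ⟨x1, hx1⟩ : ∃ v : ℤ, v = max l1 (ℓ - x0 - u2) := ⟨_, rfl⟩
  have hA : c 0 - e ≤ x0 ∧ c' 0 - e ≤ x0 ∧ 0 ≤ x0 := by
    clear hl1 hl2 hu1 hu2 hx1; omega
  have hB : x0 ≤ c 0 + e ∧ x0 ≤ c' 0 + e := by
    clear hl1 hl2 hx1; omega
  have hC1 : c 1 - e ≤ x1 ∧ c' 1 - e ≤ x1 ∧ 0 ≤ x1 := by
    clear hl0 hl2 hu1 hu2 hx0; omega
  have hD : x1 ≤ c 1 + e ∧ x1 ≤ c' 1 + e := by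
    clear hl0 hl2 hu2; omega
  have hS : l0 + l1 + l2 ≤ ℓ := by
    clear hu1 hu2 hx0 hx1; omega
  have hL1 : l1 ≤ u1 := by
    clear hl0 hl2 hu2 hx0 hx1; omega
  have hL2 : l2 ≤ u2 := by
    clear hl0 hl1 hu1 hx0 hx1; omega
  have hxx : x0 ≤ ℓ - l1 - l2 := by
    clear hl0 hl1 hl2 hu1 hu2 hx1; omega
  have hT' : l2 ≤ ℓ - x0 - x1 := by
    clear hl0 hl1 hl2 hu1 hu2 hx0; omega
  have hT : c 2 - e ≤ ℓ - x0 - x1 ∧ c' 2 - e ≤ ℓ - x0 - x1 ∧ 0 ≤ ℓ - x0 - x1 := by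
    clear hl0 hl1 hu1 hu2 hx0 hx1; omega
  have hU : ℓ - x0 - x1 ≤ c 2 + e ∧ ℓ - x0 - x1 ≤ c' 2 + e := by
    clear hl0 hl1 hl2 hu1 hx0; omega
  clear hl0 hl1 hl2 hu1 hu2 hx0 hx1 hS hL1 hL2 hxx hT'
  refine unqP hC hc hc' x0 (ℓ - x0 - x1) (by omega) (by omega) (by omega) ?_ ?_
  · unfold Cv; omega
  · unfold Cv; omega


lemma overlapL {e ℓ : ℤ} {C : Set (Fin 3 → ℤ)} (he : 1 ≤ e) (hC : IsPerfectCode 2 ℓ e C)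
    {x y : Fin 3 → ℤ} (hx : x ∈ C) (hy : y ∈ C) (hxy : x ≠ y)
    (hx2a : 1 ≤ x 2) (hx2b : x 2 ≤ e) (hy2a : 1 ≤ y 2) (hy2b : y 2 ≤ e)
    (hj : y 0 + y 2 = x 0 + 2*e + 1) (hx0 : 0 ≤ x 0) : False := by
  obtain ⟨xa, xb, xc, xs⟩ := memCf hC hx
  obtain ⟨ya, yb, yc, ys⟩ := memCf hC hy
  exact hxy (unqP hC hx hy (x 0 + e) 1 (by omega) (by omega) (by omega)
    (by unfold Cv; omega) (by unfold Cv; omega))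

lemma gap00 {e ℓ : ℤ} {C : Set (Fin 3 → ℤ)} (he : 1 ≤ e) (hC : IsPerfectCode 2 ℓ e C)
    {m n : Fin 3 → ℤ} (hm : m ∈ C) (hn : n ∈ C) (hm2 : m 2 = 0) (hn2 : n 2 = 0)
    (hj : n 0 = m 0 + 2*e + 1) (hm0 : 0 ≤ m 0) : False := by
  obtain ⟨ma, mb, mc, ms⟩ := memCf hC hm
  obtain ⟨na, nb, nc, ns⟩ := memCf hC hn
  have hmn : m ≠ n := by
    intro hEq
    have := congrFun hEq 0
    omega
  obtain ⟨k, hkC, hk⟩ := covP hC (m 0 + e) 1 (by omega) (by omega) (by omega)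
  obtain ⟨ka, kb, kc, ks⟩ := memCf hC hkC
  unfold Cv at hk
  have hkm : k ≠ m := by
    intro hEq; rw [hEq] at hk; omega
  have hkn : k ≠ n := by
    intro hEq; rw [hEq] at hk; omega
  have hk2eq : k 2 = e + 1 := by
    rcases le_or_gt (k 2) e with hle | hlt
    · exfalso
      rcases le_or_gt (min (k 0 + e) ℓ) (m 0 + e) with hb | hb
      · exact hkm (unqP hC hkC hm (min (k 0 + e) ℓ) 0 (by omega) le_rfl (by omega)
          (by unfold Cv; omega) (by unfold Cv; omega))
      · exact hkn (unqP hC hkC hn (min (k 0 + e) ℓ) 0 (by omega) le_rfl (by omega)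
          (by unfold Cv; omega) (by unfold Cv; omega))
    · omega
  have hnc : ¬ Cv e k (m 0 + e + 1) 1 := fun hcv =>
    hkn (unqP hC hkC hn (m 0 + e + 1) 1 (by omega) (by omega) (by omega) hcv
      (by unfold Cv; omega))
  unfold Cv at hnc
  have hk0 : k 0 = m 0 := by omega
  have : k = m := sep he hC hkC hm ⟨by omega, by omega, by omega, by omega, by omega, by omega⟩
  rw [this] at hk2eq
  omega

lemma gapMiddle {e ℓ : ℤ} {C : Set (Fin 3 → ℤ)} (he : 1 ≤ e) (hC : IsPerfectCode 2 ℓ e C)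
    {m n : Fin 3 → ℤ} (hm : m ∈ C) (hn : n ∈ C) (hm2 : m 2 = 0)
    (hn2a : 1 ≤ n 2) (hn2b : n 2 ≤ e - 1)
    (hj : n 0 + n 2 = m 0 + 2*e + 1) (hm0 : 0 ≤ m 0) : False := by
  obtain ⟨ma, mb, mc, ms⟩ := memCf hC hm
  obtain ⟨na, nb, nc, ns⟩ := memCf hC hn
  obtain ⟨k, hkC, hk⟩ := covP hC (m 0 + e - n 2) (n 2 + 1) (by omega) (by omega) (by omega)
  obtain ⟨ka, kb, kc, ks⟩ := memCf hC hkC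
  unfold Cv at hk
  have hkm : k ≠ m := by
    intro hEq; rw [hEq] at hk; omega
  have hkn : k ≠ n := by
    intro hEq; rw [hEq] at hk; omega
  have hk2 : n 2 + 1 ≤ k 2 := by
    by_contra hcon
    exact hkm (unqP hC hkC hm (m 0 + e - n 2) (n 2) (by omega) (by omega) (by omega)
      (by unfold Cv; omega) (by unfold Cv; omega))
  have hnc1 : ¬ Cv e k (m 0 + e - n 2 + 1) (n 2 + 1) := fun hcv =>
    hkn (unqP hC hkC hn (m 0 + e - n 2 + 1) (n 2 + 1) (by omega) (by omega) (by omega) hcv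
      (by unfold Cv; omega))
  have hnc2 : ¬ Cv e k (m 0 + e - n 2 - 1) (n 2 + 1) := fun hcv =>
    hkm (unqP hC hkC hm (m 0 + e - n 2 - 1) (n 2 + 1) (by omega) (by omega) (by omega) hcv
      (by unfold Cv; omega))
  unfold Cv at hnc1 hnc2
  omega


lemma gap_q0 {e ℓ : ℤ} {C : Set (Fin 3 → ℤ)} (he : 1 ≤ e) (hC : IsPerfectCode 2 ℓ e C)
    {x m : Fin 3 → ℤ} (hx : x ∈ C) (hm : m ∈ C)
    (hx2a : 1 ≤ x 2) (hx2b : x 2 ≤ e - 1) (hm2 : m 2 = 0)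
    (hj : m 0 = x 0 + 2*e + 1) (hx0 : 0 ≤ x 0) : False := by
  obtain ⟨xa, xb, xc, xs⟩ := memCf hC hx
  obtain ⟨ma, mb, mc, ms⟩ := memCf hC hm
  obtain ⟨k, hkC, hk⟩ := covP hC (x 0 + e) (x 2 + 1) (by omega) (by omega) (by omega)
  obtain ⟨ka, kb, kc, ks⟩ := memCf hC hkC
  unfold Cv at hk
  have hkx : k ≠ x := by
    intro hEq; rw [hEq] at hk; omega
  have hkm : k ≠ m := by
    intro hEq; rw [hEq] at hk; omega
  have hk2 : x 2 + 1 ≤ k 2 := by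
    by_contra hcon
    exact hkx (unqP hC hkC hx (x 0 + e) (x 2) (by omega) (by omega) (by omega)
      (by unfold Cv; omega) (by unfold Cv; omega))
  have hnc2 : ¬ Cv e k (x 0 + e - 1) (x 2 + 1) := fun hcv =>
    hkx (unqP hC hkC hx (x 0 + e - 1) (x 2 + 1) (by omega) (by omega) (by omega) hcv
      (by unfold Cv; omega))
  unfold Cv at hnc2
  rcases le_or_gt (x 0 + e + x 2 + 2) ℓ with hcell | hcell
  · have hnc1 : ¬ Cv e k (x 0 + e + 1) (x 2 + 1) := fun hcv =>
      hkm (unqP hC hkC hm (x 0 + e + 1) (x 2 + 1) (by omega) (by omega) (by omega) hcv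
        (by unfold Cv; omega))
    unfold Cv at hnc1
    omega
  · omega

lemma gap_e0 {e ℓ : ℤ} {C : Set (Fin 3 → ℤ)} (he : 1 ≤ e) (hC : IsPerfectCode 2 ℓ e C)
    {x m : Fin 3 → ℤ} (hx : x ∈ C) (hm : m ∈ C)
    (hx2 : x 2 = e) (hm2 : m 2 = 0)
    (hj : m 0 = x 0 + 2*e + 1) (hx0 : 0 ≤ x 0) :
    ∃ k ∈ C, k 0 = x 0 + e ∧ k 2 = 2*e + 1 := by
  obtain ⟨xa, xb, xc, xs⟩ := memCf hC hx
  obtain ⟨ma, mb, mc, ms⟩ := memCf hC hm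
  obtain ⟨k, hkC, hk⟩ := covP hC (x 0 + e) (e + 1) (by omega) (by omega) (by omega)
  obtain ⟨ka, kb, kc, ks⟩ := memCf hC hkC
  unfold Cv at hk
  have hkx : k ≠ x := by
    intro hEq; rw [hEq] at hk; omega
  have hkm : k ≠ m := by
    intro hEq; rw [hEq] at hk; omega
  have hk2 : e + 1 ≤ k 2 := by
    by_contra hcon
    exact hkx (unqP hC hkC hx (x 0 + e) e (by omega) (by omega) (by omega)
      (by unfold Cv; omega) (by unfold Cv; omega))
  have hnc : ¬ Cv e k (x 0 + e - 1) (e + 1) := fun hcv =>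
    hkx (unqP hC hkC hx (x 0 + e - 1) (e + 1) (by omega) (by omega) (by omega) hcv
      (by unfold Cv; omega))
  unfold Cv at hnc
  have hsum : k 0 + k 2 = x 0 + 3*e + 1 := by omega
  have hk22 : k 2 = 2*e + 1 := by
    by_contra hcon
    have hkmEq : k = m := sep he hC hkC hm
      ⟨by omega, by omega, by omega, by omega, by omega, by omega⟩
    rw [hkmEq] at hk2
    omega
  exact ⟨k, hkC, by omega, hk22⟩

lemma gap0e_ctx {e ℓ : ℤ} {C : Set (Fin 3 → ℤ)} (he : 1 ≤ e) (hC : IsPerfectCode 2 ℓ e C)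
    {m n kL : Fin 3 → ℤ} (hm : m ∈ C) (hn : n ∈ C) (hkL : kL ∈ C)
    (hm2 : m 2 = 0) (hn2 : n 2 = e) (hj : n 0 = m 0 + e + 1)
    (hkL0 : kL 0 = m 0 - e - 1) (hkL2 : kL 2 = 2*e + 1) : False := by
  obtain ⟨ma, mb, mc, ms⟩ := memCf hC hm
  obtain ⟨na, nb, nc, ns⟩ := memCf hC hn
  obtain ⟨la, lb, lc, ls⟩ := memCf hC hkL
  obtain ⟨k, hkC, hk⟩ := covP hC (m 0) (e + 1) (by omega) (by omega) (by omega)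
  obtain ⟨ka, kb, kc, ks⟩ := memCf hC hkC
  unfold Cv at hk
  have hkm : k ≠ m := by
    intro hEq; rw [hEq] at hk; omega
  have hkn : k ≠ n := by
    intro hEq; rw [hEq] at hk; omega
  have hkkL : k ≠ kL := by
    intro hEq; rw [hEq] at hk; omega
  have hk2 : e + 1 ≤ k 2 := by
    by_contra hcon
    exact hkm (unqP hC hkC hm (m 0) e (by omega) (by omega) (by omega)
      (by unfold Cv; omega) (by unfold Cv; omega))
  have hnc1 : ¬ Cv e k (m 0 + 1) (e + 1) := fun hcv =>
    hkn (unqP hC hkC hn (m 0 + 1) (e + 1) (by omega) (by omega) (by omega) hcv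
      (by unfold Cv; omega))
  have hnc2 : ¬ Cv e k (m 0 - 1) (e + 1) := fun hcv =>
    hkkL (unqP hC hkC hkL (m 0 - 1) (e + 1) (by omega) (by omega) (by omega) hcv
      (by unfold Cv; omega))
  unfold Cv at hnc1 hnc2
  omega


lemma forward (e ℓ : ℤ) (he : 1 ≤ e) (C : Set (Fin 3 → ℤ))
    (hC : IsPerfectCode 2 ℓ e C) (hnt : C.Nontrivial) : ℓ = 3 * e + 1 := by
  -- ℓ ≥ 2e+1 from two distinct codewords
  obtain ⟨c, hcM, c', hcM', hne⟩ := hnt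
  have hl : 2*e + 1 ≤ ℓ := by
    by_contra hcon
    obtain ⟨a0, a1, a2, as⟩ := memCf hC hcM
    obtain ⟨b0, b1, b2, bs⟩ := memCf hC hcM'
    exact hne (sep he hC hcM hcM'
      ⟨by omega, by omega, by omega, by omega, by omega, by omega⟩)
  clear hne hcM hcM'
  -- corner codeword d covering (0, ℓ, 0)
  obtain ⟨d, hdC, hd⟩ := covP hC 0 0 le_rfl le_rfl (by omega)
  obtain ⟨da, db, dc, ds⟩ := memCf hC hdC
  unfold Cv at hd
  -- next codeword h covering (d0+e+1, 0)
  obtain ⟨h, hhC, hh⟩ := covP hC (d 0 + e + 1) 0 (by omega) (by omega) (by omega)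
  obtain ⟨ha', hb', hc', hs'⟩ := memCf hC hhC
  unfold Cv at hh
  have hdh : h ≠ d := by
    intro hEq; rw [hEq] at hh; omega
  have hjn : h 0 + h 2 = d 0 + 2*e + 1 := by
    by_contra hcon
    exact hdh (unqP hC hhC hdC (d 0 + e) 0 (by omega) (by omega) (by omega)
      (by unfold Cv; omega) (by unfold Cv; omega))
  by_cases hd2 : d 2 = 0
  · -- branch D : d has height 0
    by_cases hh2e : h 2 = e
    · -- main branch D
      have hh0v : h 0 = d 0 + e + 1 := by omega
      obtain ⟨q, hqC, hq⟩ := covP hC (d 0) (e + 1) (by omega) (by omega) (by omega)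
      obtain ⟨qa, qb, qc, qs⟩ := memCf hC hqC
      unfold Cv at hq
      have hqd : q ≠ d := by
        intro hEq; rw [hEq] at hq; omega
      have hqh : q ≠ h := by
        intro hEq; rw [hEq] at hq; omega
      have hq2 : e + 1 ≤ q 2 := by
        by_contra hcon
        exact hqd (unqP hC hqC hdC (d 0) e (by omega) (by omega) (by omega)
          (by unfold Cv; omega) (by unfold Cv; omega))
      have hnc1 : ¬ Cv e q (d 0 + 1) (e + 1) := fun hcv =>
        hqh (unqP hC hqC hhC (d 0 + 1) (e + 1) (by omega) (by omega) (by omega) hcv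
          (by unfold Cv; omega))
      unfold Cv at hnc1
      have hd0e : d 0 = e := by omega
      have hq0 : q 0 = 0 := by omega
      have hq22 : q 2 = 2*e + 1 := by
        by_contra hcon
        have hqdEq : q = d := sep he hC hqC hdC
          ⟨by omega, by omega, by omega, by omega, by omega, by omega⟩
        rw [hqdEq] at hq2
        omega
      have hl31 : 3*e + 1 ≤ ℓ := by omega
      by_contra hneq
      have hl32 : 3*e + 2 ≤ ℓ := by omega
      obtain ⟨g, hgC, hg⟩ := covP hC (3*e + 2) 0 (by omega) (by omega) (by omega)
      obtain ⟨ga, gb, gc, gs⟩ := memCf hC hgC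
      unfold Cv at hg
      have hgh : g ≠ h := by
        intro hEq; rw [hEq] at hg; omega
      have hgsum : g 0 + g 2 = 4*e + 2 := by
        by_contra hcon
        exact hgh (unqP hC hgC hhC (3*e + 1) 0 (by omega) (by omega) (by omega)
          (by unfold Cv; omega) (by unfold Cv; omega))
      have hle42 : 4*e + 2 ≤ ℓ := by omega
      by_cases hg20 : g 2 = 0
      · -- second junction type (e,0): second layer r, then k₃ contradiction
        obtain ⟨r, hrC, hr0, hr2⟩ := gap_e0 he hC hhC hgC hh2e hg20 (by omega) (by omega)
        obtain ⟨ra, rb, rc, rs⟩ := memCf hC hrC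
        obtain ⟨w, hwC, hw⟩ := covP hC (e + 1) (2*e + 1) (by omega) (by omega) (by omega)
        obtain ⟨wa, wb, wc, ws⟩ := memCf hC hwC
        unfold Cv at hw
        have hwq : w ≠ q := by
          intro hEq; rw [hEq] at hw; omega
        have hwr : w ≠ r := by
          intro hEq; rw [hEq] at hw; omega
        have hn1 : ¬ Cv e w e (2*e + 1) := fun hcv =>
          hwq (unqP hC hwC hqC e (2*e + 1) (by omega) (by omega) (by omega) hcv
            (by unfold Cv; omega))
        have hn2 : ¬ Cv e w (2*e + 1) (2*e + 1) := fun hcv =>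
          hwr (unqP hC hwC hrC (2*e + 1) (2*e + 1) (by omega) (by omega) (by omega) hcv
            (by unfold Cv; omega))
        unfold Cv at hn1 hn2
        omega
      · -- g2 ≥ 1 : overlap with h at (3e+1, 1)
        exact overlapL he hC hhC hgC (Ne.symm hgh) (by omega) (by omega) (by omega)
          (by omega) (by omega) (by omega)
    · -- h2 ≠ e
      by_cases hh20 : h 2 = 0
      · exact (gap00 he hC hdC hhC hd2 hh20 (by omega) (by omega)).elim
      · exact (gapMiddle he hC hdC hhC hd2 (by omega) (by omega) (by omega) (by omega)).elim
  · -- d2 ≥ 1 : branch C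
    by_cases hh20 : h 2 = 0
    · by_cases hd2e : d 2 = e
      · -- branch C2
        have hd0 : d 0 = 0 := by omega
        have hh0v : h 0 = 2*e + 1 := by omega
        obtain ⟨k, hkC, hk0, hk2⟩ := gap_e0 he hC hdC hhC hd2e hh20 (by omega) (by omega)
        obtain ⟨ka, kb, kc, ks⟩ := memCf hC hkC
        have hl31 : 3*e + 1 ≤ ℓ := by omega
        by_contra hneq
        have hl32 : 3*e + 2 ≤ ℓ := by omega
        obtain ⟨g, hgC, hg⟩ := covP hC (3*e + 2) 0 (by omega) (by omega) (by omega)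
        obtain ⟨ga, gb, gc, gs⟩ := memCf hC hgC
        unfold Cv at hg
        have hgh : g ≠ h := by
          intro hEq; rw [hEq] at hg; omega
        have hgsum : g 0 + g 2 = 4*e + 2 := by
          by_contra hcon
          exact hgh (unqP hC hgC hhC (3*e + 1) 0 (by omega) (by omega) (by omega)
            (by unfold Cv; omega) (by unfold Cv; omega))
        have hle42 : 4*e + 2 ≤ ℓ := by omega
        by_cases hg20 : g 2 = 0
        · exact gap00 he hC hhC hgC hh20 hg20 (by omega) (by omega)
        · by_cases hg2e : g 2 = e
          · exact gap0e_ctx he hC hhC hgC hkC hh20 hg2e (by omega) (by omega) (by omega)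
          · exact gapMiddle he hC hhC hgC hh20 (by omega) (by omega) (by omega) (by omega)
      · exact (gap_q0 he hC hdC hhC (by omega) (by omega) hh20 (by omega) (by omega)).elim
    · -- h2 ≥ 1 : overlap at first junction
      exact (overlapL he hC hdC hhC (Ne.symm hdh) (by omega) (by omega) (by omega)
        (by omega) (by omega) (by omega)).elim


def c1 (e : ℤ) : Fin 3 → ℤ := fun i => if i = 0 then 2*e+1 else if i = 1 then e else 0
def c2 (e : ℤ) : Fin 3 → ℤ := fun i => if i = 0 then 0 else if i = 1 then 2*e+1 else e
def c3 (e : ℤ) : Fin 3 → ℤ := fun i => if i = 0 then e else if i = 1 then 0 else 2*e+1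

@[simp] lemma c1_0 (e : ℤ) : c1 e 0 = 2*e+1 := rfl
@[simp] lemma c1_1 (e : ℤ) : c1 e 1 = e := rfl
@[simp] lemma c1_2 (e : ℤ) : c1 e 2 = 0 := rfl
@[simp] lemma c2_0 (e : ℤ) : c2 e 0 = 0 := rfl
@[simp] lemma c2_1 (e : ℤ) : c2 e 1 = 2*e+1 := rfl
@[simp] lemma c2_2 (e : ℤ) : c2 e 2 = e := rfl
@[simp] lemma c3_0 (e : ℤ) : c3 e 0 = e := rfl
@[simp] lemma c3_1 (e : ℤ) : c3 e 1 = 0 := rfl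
@[simp] lemma c3_2 (e : ℤ) : c3 e 2 = 2*e+1 := rfl

lemma backward (e : ℤ) (he : 1 ≤ e) :
    IsPerfectCode 2 (3*e+1) e {c1 e, c2 e, c3 e} := by
  constructor
  · intro c hcm
    simp only [Set.mem_insert_iff, Set.mem_singleton_iff] at hcm
    rcases hcm with rfl | rfl | rfl
    · exact mem_simplex_iff.mpr ⟨by rw [c1_0]; omega, by rw [c1_1]; omega,
        by rw [c1_2], by rw [c1_0, c1_1, c1_2]; ring⟩
    · exact mem_simplex_iff.mpr ⟨by rw [c2_0], by rw [c2_1]; omega,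
        by rw [c2_2]; omega, by rw [c2_0, c2_1, c2_2]; ring⟩
    · exact mem_simplex_iff.mpr ⟨by rw [c3_0]; omega, by rw [c3_1],
        by rw [c3_2]; omega, by rw [c3_0, c3_1, c3_2]; ring⟩
  · intro w hw
    obtain ⟨h0, h1, h2, hs⟩ := mem_simplex_iff.mp hw
    have d1 : sdist (c1 e) w = max (2*e+1 - w 0) 0 + max (e - w 1) 0 + max (0 - w 2) 0 := by
      rw [sdist_eq, c1_0, c1_1, c1_2]
    have d2 : sdist (c2 e) w = max (0 - w 0) 0 + max (2*e+1 - w 1) 0 + max (e - w 2) 0 := by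
      rw [sdist_eq, c2_0, c2_1, c2_2]
    have d3 : sdist (c3 e) w = max (e - w 0) 0 + max (0 - w 1) 0 + max (2*e+1 - w 2) 0 := by
      rw [sdist_eq, c3_0, c3_1, c3_2]
    by_cases h1c : sdist (c1 e) w ≤ e
    · refine ⟨c1 e, ⟨by simp, h1c⟩, ?_⟩
      rintro c' ⟨hc', hd'⟩
      simp only [Set.mem_insert_iff, Set.mem_singleton_iff] at hc'
      rcases hc' with rfl | rfl | rfl
      · rfl
      · exfalso; rw [d2] at hd'; rw [d1] at h1c; omega
      · exfalso; rw [d3] at hd'; rw [d1] at h1c; omega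
    · by_cases h2c : sdist (c2 e) w ≤ e
      · refine ⟨c2 e, ⟨by simp, h2c⟩, ?_⟩
        rintro c' ⟨hc', hd'⟩
        simp only [Set.mem_insert_iff, Set.mem_singleton_iff] at hc'
        rcases hc' with rfl | rfl | rfl
        · exact absurd hd' h1c
        · rfl
        · exfalso; rw [d3] at hd'; rw [d2] at h2c; omega
      · have h3c : sdist (c3 e) w ≤ e := by
          rw [d1] at h1c; rw [d2] at h2c; rw [d3]; omega
        refine ⟨c3 e, ⟨by simp, h3c⟩, ?_⟩
        rintro c' ⟨hc', hd'⟩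
        simp only [Set.mem_insert_iff, Set.mem_singleton_iff] at hc'
        rcases hc' with rfl | rfl | rfl
        · exact absurd hd' h1c
        · exact absurd hd' h2c
        · rfl

lemma backward_nt (e : ℤ) (he : 1 ≤ e) :
    ({c1 e, c2 e, c3 e} : Set (Fin 3 → ℤ)).Nontrivial := by
  refine ⟨c1 e, by simp, c2 e, by simp, ?_⟩
  intro hEq
  have h := congrFun hEq 0
  rw [c1_0, c2_0] at h
  omega

end Stmt2

theorem stmt_2 (e ℓ : ℤ) (he : 1 ≤ e) (hℓ : 0 ≤ ℓ) :
    (∃ C : Set (Fin 3 → ℤ), IsPerfectCode 2 ℓ e C ∧ C.Nontrivial) ↔ ℓ = 3 * e + 1 := by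
  constructor
  · rintro ⟨C, hC, hnt⟩
    exact Stmt2.forward e ℓ he C hC hnt
  · rintro rfl
    exact ⟨{Stmt2.c1 e, Stmt2.c2 e, Stmt2.c3 e}, Stmt2.backward e he, Stmt2.backward_nt e he⟩
end

section
/- For every integer e ≥ 1, every nontrivial e-perfect code in the discrete 2-simplex Δ_{3e+1}^2 equals either C₂^(1) = {(2e+1, e, 0), (0, 2e+1, e), (e, 0, 2e+1)} or C₂^(2) = {(2e+1, 0, e), (e, 2e+1, 0), (0, e, 2e+1)}; in particular there are exactly two nontrivial e-perfect codes in Δ_{3e+1}^2, each having three codewords. -/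
set_option maxHeartbeats 1000000


lemma sdist3 (x y : Fin 3 → ℤ) :
    sdist x y = max (x 0 - y 0) 0 + max (x 1 - y 1) 0 + max (x 2 - y 2) 0 := by
  simp [sdist, Fin.sum_univ_three]

lemma mem_simplex3 {ℓ : ℤ} {x : Fin 3 → ℤ} :
    x ∈ simplex 2 ℓ ↔ (0 ≤ x 0 ∧ 0 ≤ x 1 ∧ 0 ≤ x 2) ∧ x 0 + x 1 + x 2 = ℓ := by
  constructor
  · rintro ⟨h1, h2⟩
    exact ⟨⟨h1 0, h1 1, h1 2⟩, by simpa [Fin.sum_univ_three] using h2⟩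
  · rintro ⟨⟨h0, h1, h2⟩, hs⟩
    exact ⟨fun i => by fin_cases i <;> assumption, by simpa [Fin.sum_univ_three] using hs⟩

lemma sdist_vec (x : Fin 3 → ℤ) (a b c : ℤ) :
    sdist x ![a, b, c] = max (x 0 - a) 0 + max (x 1 - b) 0 + max (x 2 - c) 0 := by
  rw [sdist3]; simp

lemma sdist_vecl (a b c : ℤ) (x : Fin 3 → ℤ) :
    sdist ![a, b, c] x = max (a - x 0) 0 + max (b - x 1) 0 + max (c - x 2) 0 := by
  rw [sdist3]; simp

lemma mem_simplex_vec {ℓ a b c : ℤ} :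
    (![a, b, c] : Fin 3 → ℤ) ∈ simplex 2 ℓ ↔ (0 ≤ a ∧ 0 ≤ b ∧ 0 ≤ c) ∧ a + b + c = ℓ := by
  rw [mem_simplex3]; simp

lemma eq_vec {x : Fin 3 → ℤ} {a b c : ℤ} (h0 : x 0 = a) (h1 : x 1 = b) (h2 : x 2 = c) :
    x = ![a, b, c] := by
  funext i; fin_cases i <;> simpa

lemma vec_ne0 {a b c a' b' c' : ℤ} (h : a ≠ a') : (![a,b,c] : Fin 3 → ℤ) ≠ ![a',b',c'] :=
  fun h' => h (by simpa using congrFun h' 0)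

lemma vec_ne1 {a b c a' b' c' : ℤ} (h : b ≠ b') : (![a,b,c] : Fin 3 → ℤ) ≠ ![a',b',c'] :=
  fun h' => h (by simpa using congrFun h' 1)

def rotv (x : Fin 3 → ℤ) : Fin 3 → ℤ := ![x 1, x 2, x 0]

lemma rotv_inj {x y : Fin 3 → ℤ} (h : rotv x = rotv y) : x = y := by
  funext i
  have h0 := congrFun h 0
  have h1 := congrFun h 1
  have h2 := congrFun h 2
  simp [rotv] at h0 h1 h2
  fin_cases i <;> assumption

lemma sdist_rotv (x y : Fin 3 → ℤ) : sdist (rotv x) (rotv y) = sdist x y := by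
  rw [sdist3, sdist3]; simp [rotv]; ring

lemma rotv_mem {ℓ : ℤ} {x : Fin 3 → ℤ} (hx : x ∈ simplex 2 ℓ) : rotv x ∈ simplex 2 ℓ := by
  rw [mem_simplex3] at hx ⊢
  simp [rotv]
  omega

lemma rotv_rotv_rotv (x : Fin 3 → ℤ) : rotv (rotv (rotv x)) = x := by
  funext i; fin_cases i <;> simp [rotv]

lemma perfect_rotv {ℓ e : ℤ} {C : Set (Fin 3 → ℤ)} (hC : IsPerfectCode 2 ℓ e C) :
    IsPerfectCode 2 ℓ e (rotv '' C) := by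
  obtain ⟨hsub, huni⟩ := hC
  constructor
  · rintro _ ⟨x, hx, rfl⟩; exact rotv_mem (hsub hx)
  · intro w hw
    obtain ⟨c, ⟨hcC, hcd⟩, hu⟩ := huni (rotv (rotv w)) (rotv_mem (rotv_mem hw))
    have hrw : rotv (rotv (rotv w)) = w := rotv_rotv_rotv w
    refine ⟨rotv c, ⟨⟨c, hcC, rfl⟩, ?_⟩, ?_⟩
    · rw [← hrw]; rw [sdist_rotv]; exact hcd
    · rintro _ ⟨⟨x, hxC, rfl⟩, hxd⟩
      rw [← hrw, sdist_rotv] at hxd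
      rw [hu x ⟨hxC, hxd⟩]

lemma edge_base {e : ℤ} (he : 1 ≤ e) {C : Set (Fin 3 → ℤ)}
    (hC : IsPerfectCode 2 (3*e+1) e C)
    {c0 c1 : Fin 3 → ℤ} (hc0 : c0 ∈ C) (hc1 : c1 ∈ C)
    (hd0 : sdist c0 ![3*e+1, 0, 0] ≤ e) (hd1 : sdist c1 ![0, 3*e+1, 0] ≤ e) :
    c0 1 + c1 0 = e ∧ ∀ c ∈ C, c 2 ≤ e → c = c0 ∨ c = c1 := by
  obtain ⟨hsub, huni⟩ := hC
  have key : ∀ w ∈ simplex 2 (3*e+1), ∀ c ∈ C, ∀ c' ∈ C,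
      sdist c w ≤ e → sdist c' w ≤ e → c = c' := by
    intro w hw c hc c' hc' h h'
    obtain ⟨u, _, hu⟩ := huni w hw
    rw [hu c ⟨hc, h⟩, hu c' ⟨hc', h'⟩]
  obtain ⟨⟨hn00, hn01, hn02⟩, hsum0⟩ := mem_simplex3.1 (hsub hc0)
  obtain ⟨⟨hn10, hn11, hn12⟩, hsum1⟩ := mem_simplex3.1 (hsub hc1)
  rw [sdist_vec] at hd0 hd1
  have hb0 : c0 1 + c0 2 ≤ e := by omega
  have hb1 : c1 0 + c1 2 ≤ e := by omega
  clear hd0 hd1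
  have hne : c0 ≠ c1 := by
    intro h
    have := congrFun h 0
    omega
  have hle : c0 1 + c1 0 ≤ e := by
    by_contra hgt
    push_neg at hgt
    have hw : (![2*e+1 - c0 1, e + c0 1, 0] : Fin 3 → ℤ) ∈ simplex 2 (3*e+1) := by
      rw [mem_simplex_vec]; omega
    have h1 : sdist c0 ![2*e+1 - c0 1, e + c0 1, 0] ≤ e := by rw [sdist_vec]; omega
    have h2 : sdist c1 ![2*e+1 - c0 1, e + c0 1, 0] ≤ e := by rw [sdist_vec]; omega
    exact hne (key _ hw c0 hc0 c1 hc1 h1 h2)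
  have hge : e ≤ c0 1 + c1 0 := by
    by_contra hlt
    push_neg at hlt
    have hw : (![e + c1 0 + 1, 2*e - c1 0, 0] : Fin 3 → ℤ) ∈ simplex 2 (3*e+1) := by
      rw [mem_simplex_vec]; omega
    obtain ⟨c, ⟨hcC, hcd⟩, -⟩ := huni _ hw
    obtain ⟨⟨hnc0, hnc1, hnc2⟩, hsumc⟩ := mem_simplex3.1 (hsub hcC)
    rw [sdist_vec] at hcd
    by_cases hAB : c 0 + c 2 ≤ c1 0 + 2*e
    · have hw' : (![c1 0 + e, 2*e+1 - c1 0, 0] : Fin 3 → ℤ) ∈ simplex 2 (3*e+1) := by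
        rw [mem_simplex_vec]; omega
      have h1 : sdist c ![c1 0 + e, 2*e+1 - c1 0, 0] ≤ e := by rw [sdist_vec]; omega
      have h2 : sdist c1 ![c1 0 + e, 2*e+1 - c1 0, 0] ≤ e := by rw [sdist_vec]; omega
      have hcc : c = c1 := key _ hw' c hcC c1 hc1 h1 h2
      rw [hcc] at hcd
      omega
    · have hw'' : (![2*e+1 - c0 1, e + c0 1, 0] : Fin 3 → ℤ) ∈ simplex 2 (3*e+1) := by
        rw [mem_simplex_vec]; omega
      have h1 : sdist c ![2*e+1 - c0 1, e + c0 1, 0] ≤ e := by rw [sdist_vec]; omega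
      have h2 : sdist c0 ![2*e+1 - c0 1, e + c0 1, 0] ≤ e := by rw [sdist_vec]; omega
      have hcc : c = c0 := key _ hw'' c hcC c0 hc0 h1 h2
      rw [hcc] at hcd
      omega
  refine ⟨le_antisymm hle hge, ?_⟩
  intro c hc hc2
  obtain ⟨⟨hnc0, hnc1, hnc2⟩, hsumc⟩ := mem_simplex3.1 (hsub hc)
  have hw : (![c 0, 3*e+1 - c 0, 0] : Fin 3 → ℤ) ∈ simplex 2 (3*e+1) := by
    rw [mem_simplex_vec]; omega
  have hcw : sdist c ![c 0, 3*e+1 - c 0, 0] ≤ e := by rw [sdist_vec]; omega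
  by_cases ht : c 0 ≤ c1 0 + e
  · exact Or.inr (key _ hw c hc c1 hc1 hcw (by rw [sdist_vec]; omega))
  · exact Or.inl (key _ hw c hc c0 hc0 hcw (by rw [sdist_vec]; omega))

lemma classify_s3 {e : ℤ} (he : 1 ≤ e) {C : Set (Fin 3 → ℤ)}
    (hC : IsPerfectCode 2 (3*e+1) e C) :
    C = {![2*e+1, e, 0], ![0, 2*e+1, e], ![e, 0, 2*e+1]} ∨
    C = {![2*e+1, 0, e], ![e, 2*e+1, 0], ![0, e, 2*e+1]} := by
  have hsub := hC.1
  have huni := hC.2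
  have key : ∀ w ∈ simplex 2 (3*e+1), ∀ c ∈ C, ∀ c' ∈ C,
      sdist c w ≤ e → sdist c' w ≤ e → c = c' := by
    intro w hw c hc c' hc' h h'
    obtain ⟨u, _, hu⟩ := huni w hw
    rw [hu c ⟨hc, h⟩, hu c' ⟨hc', h'⟩]
  obtain ⟨c0, ⟨hc0C, hc0d⟩, -⟩ := huni ![3*e+1, 0, 0] (by rw [mem_simplex_vec]; omega)
  obtain ⟨c1, ⟨hc1C, hc1d⟩, -⟩ := huni ![0, 3*e+1, 0] (by rw [mem_simplex_vec]; omega)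
  obtain ⟨c2, ⟨hc2C, hc2d⟩, -⟩ := huni ![0, 0, 3*e+1] (by rw [mem_simplex_vec]; omega)
  obtain ⟨⟨hn00, hn01, hn02⟩, hs0⟩ := mem_simplex3.1 (hsub hc0C)
  obtain ⟨⟨hn10, hn11, hn12⟩, hs1⟩ := mem_simplex3.1 (hsub hc1C)
  obtain ⟨⟨hn20, hn21, hn22⟩, hs2⟩ := mem_simplex3.1 (hsub hc2C)
  obtain ⟨hE1, hcov2⟩ := edge_base he hC hc0C hc1C hc0d hc1d
  have hCr := perfect_rotv hC
  have hc1r : rotv c1 ∈ rotv '' C := ⟨c1, hc1C, rfl⟩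
  have hc2r : rotv c2 ∈ rotv '' C := ⟨c2, hc2C, rfl⟩
  have hd1r : sdist (rotv c1) ![3*e+1, 0, 0] ≤ e := by
    have hv : rotv ![(0:ℤ), 3*e+1, 0] = ![3*e+1, 0, 0] := by
      funext i; fin_cases i <;> simp [rotv]
    calc sdist (rotv c1) ![3*e+1, 0, 0] = sdist c1 ![0, 3*e+1, 0] := by
          rw [← hv, sdist_rotv]
      _ ≤ e := hc1d
  have hd2r : sdist (rotv c2) ![0, 3*e+1, 0] ≤ e := by
    have hv : rotv ![(0:ℤ), 0, 3*e+1] = ![0, 3*e+1, 0] := by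
      funext i; fin_cases i <;> simp [rotv]
    calc sdist (rotv c2) ![0, 3*e+1, 0] = sdist c2 ![0, 0, 3*e+1] := by
          rw [← hv, sdist_rotv]
      _ ≤ e := hc2d
  obtain ⟨hE2, hcov0⟩ := edge_base he hCr hc1r hc2r hd1r hd2r
  have hE2' : c1 2 + c2 1 = e := by simpa [rotv] using hE2
  have hCrr := perfect_rotv hCr
  have hc2rr : rotv (rotv c2) ∈ rotv '' (rotv '' C) := ⟨rotv c2, hc2r, rfl⟩
  have hc0rr : rotv (rotv c0) ∈ rotv '' (rotv '' C) := ⟨rotv c0, ⟨c0, hc0C, rfl⟩, rfl⟩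
  have hd2rr : sdist (rotv (rotv c2)) ![3*e+1, 0, 0] ≤ e := by
    have hv : rotv ![(0:ℤ), 3*e+1, 0] = ![3*e+1, 0, 0] := by
      funext i; fin_cases i <;> simp [rotv]
    calc sdist (rotv (rotv c2)) ![3*e+1, 0, 0] = sdist (rotv c2) ![0, 3*e+1, 0] := by
          rw [← hv, sdist_rotv]
      _ ≤ e := hd2r
  have hd0rr : sdist (rotv (rotv c0)) ![0, 3*e+1, 0] ≤ e := by
    have hv : rotv ![(0:ℤ), 0, 3*e+1] = ![0, 3*e+1, 0] := by
      funext i; fin_cases i <;> simp [rotv]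
    have hv' : rotv ![(3*e+1 : ℤ), 0, 0] = ![0, 0, 3*e+1] := by
      funext i; fin_cases i <;> simp [rotv]
    calc sdist (rotv (rotv c0)) ![0, 3*e+1, 0] = sdist (rotv c0) ![0, 0, 3*e+1] := by
          rw [← hv, sdist_rotv]
      _ = sdist c0 ![3*e+1, 0, 0] := by rw [← hv', sdist_rotv]
      _ ≤ e := hc0d
  obtain ⟨hE3, hcov1⟩ := edge_base he hCrr hc2rr hc0rr hd2rr hd0rr
  have hE3' : c2 0 + c0 2 = e := by simpa [rotv] using hE3
  rw [sdist_vec] at hc0d hc1d hc2d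
  have hb0 : c0 1 + c0 2 ≤ e := by omega
  have hb1 : c1 0 + c1 2 ≤ e := by omega
  have hb2 : c2 0 + c2 1 ≤ e := by omega
  clear hc0d hc1d hc2d
  have hae : c0 1 = 0 ∨ c0 1 = e := by
    by_contra hcon
    push_neg at hcon
    have hw : (![e+1, e + c0 1, e - c0 1] : Fin 3 → ℤ) ∈ simplex 2 (3*e+1) := by
      rw [mem_simplex_vec]; omega
    have h1 : sdist c0 ![e+1, e + c0 1, e - c0 1] ≤ e := by rw [sdist_vec]; omega
    have h2 : sdist c1 ![e+1, e + c0 1, e - c0 1] ≤ e := by rw [sdist_vec]; omega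
    have hcc := key _ hw c0 hc0C c1 hc1C h1 h2
    have := congrFun hcc 0
    omega
  have hCeq : C = {c0, c1, c2} := by
    apply Set.Subset.antisymm
    · intro c hc
      obtain ⟨⟨hx0, hx1, hx2⟩, hxs⟩ := mem_simplex3.1 (hsub hc)
      simp only [Set.mem_insert_iff, Set.mem_singleton_iff]
      by_cases h2 : c 2 ≤ e
      · rcases hcov2 c hc h2 with h | h
        · exact Or.inl h
        · exact Or.inr (Or.inl h)
      · by_cases h0 : c 0 ≤ e
        · rcases hcov0 (rotv c) ⟨c, hc, rfl⟩ (by simpa [rotv] using h0) with h | h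
          · exact Or.inr (Or.inl (rotv_inj h))
          · exact Or.inr (Or.inr (rotv_inj h))
        · have h1 : c 1 ≤ e := by omega
          rcases hcov1 (rotv (rotv c)) ⟨rotv c, ⟨c, hc, rfl⟩, rfl⟩
              (by simpa [rotv] using h1) with h | h
          · exact Or.inr (Or.inr (rotv_inj (rotv_inj h)))
          · exact Or.inl (rotv_inj (rotv_inj h))
    · intro c hc
      simp only [Set.mem_insert_iff, Set.mem_singleton_iff] at hc
      rcases hc with rfl | rfl | rfl <;> assumption
  rcases hae with ha | ha
  · right
    rw [hCeq]
    have e0 : c0 = ![2*e+1, 0, e] := eq_vec (by omega) (by omega) (by omega)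
    have e1 : c1 = ![e, 2*e+1, 0] := eq_vec (by omega) (by omega) (by omega)
    have e2 : c2 = ![0, e, 2*e+1] := eq_vec (by omega) (by omega) (by omega)
    rw [e0, e1, e2]
  · left
    rw [hCeq]
    have e0 : c0 = ![2*e+1, e, 0] := eq_vec (by omega) (by omega) (by omega)
    have e1 : c1 = ![0, 2*e+1, e] := eq_vec (by omega) (by omega) (by omega)
    have e2 : c2 = ![e, 0, 2*e+1] := eq_vec (by omega) (by omega) (by omega)
    rw [e0, e1, e2]

lemma perfect_S1 {e : ℤ} (he : 1 ≤ e) :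
    IsPerfectCode 2 (3*e+1) e {![2*e+1, e, 0], ![0, 2*e+1, e], ![e, 0, 2*e+1]} := by
  constructor
  · intro c hc
    simp only [Set.mem_insert_iff, Set.mem_singleton_iff] at hc
    rcases hc with rfl | rfl | rfl <;> (rw [mem_simplex_vec]; omega)
  · intro w hw
    obtain ⟨⟨h0, h1, h2⟩, hs⟩ := mem_simplex3.1 hw
    have hex : sdist ![2*e+1, e, 0] w ≤ e ∨ sdist ![0, 2*e+1, e] w ≤ e ∨
        sdist ![e, 0, 2*e+1] w ≤ e := by
      rw [sdist_vecl, sdist_vecl, sdist_vecl]; omega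
    have h01 : ¬(sdist ![2*e+1, e, 0] w ≤ e ∧ sdist ![0, 2*e+1, e] w ≤ e) := by
      rw [sdist_vecl, sdist_vecl]; omega
    have h02 : ¬(sdist ![2*e+1, e, 0] w ≤ e ∧ sdist ![e, 0, 2*e+1] w ≤ e) := by
      rw [sdist_vecl, sdist_vecl]; omega
    have h12 : ¬(sdist ![0, 2*e+1, e] w ≤ e ∧ sdist ![e, 0, 2*e+1] w ≤ e) := by
      rw [sdist_vecl, sdist_vecl]; omega
    rcases hex with h | h | h
    · refine ⟨![2*e+1, e, 0], ⟨by simp, h⟩, ?_⟩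
      rintro c ⟨hm, hd⟩
      simp only [Set.mem_insert_iff, Set.mem_singleton_iff] at hm
      rcases hm with rfl | rfl | rfl
      · rfl
      · exact absurd ⟨h, hd⟩ h01
      · exact absurd ⟨h, hd⟩ h02
    · refine ⟨![0, 2*e+1, e], ⟨by simp, h⟩, ?_⟩
      rintro c ⟨hm, hd⟩
      simp only [Set.mem_insert_iff, Set.mem_singleton_iff] at hm
      rcases hm with rfl | rfl | rfl
      · exact absurd ⟨hd, h⟩ h01
      · rfl
      · exact absurd ⟨h, hd⟩ h12
    · refine ⟨![e, 0, 2*e+1], ⟨by simp, h⟩, ?_⟩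
      rintro c ⟨hm, hd⟩
      simp only [Set.mem_insert_iff, Set.mem_singleton_iff] at hm
      rcases hm with rfl | rfl | rfl
      · exact absurd ⟨hd, h⟩ h02
      · exact absurd ⟨hd, h⟩ h12
      · rfl

lemma perfect_S2 {e : ℤ} (he : 1 ≤ e) :
    IsPerfectCode 2 (3*e+1) e {![2*e+1, 0, e], ![e, 2*e+1, 0], ![0, e, 2*e+1]} := by
  constructor
  · intro c hc
    simp only [Set.mem_insert_iff, Set.mem_singleton_iff] at hc
    rcases hc with rfl | rfl | rfl <;> (rw [mem_simplex_vec]; omega)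
  · intro w hw
    obtain ⟨⟨h0, h1, h2⟩, hs⟩ := mem_simplex3.1 hw
    have hex : sdist ![2*e+1, 0, e] w ≤ e ∨ sdist ![e, 2*e+1, 0] w ≤ e ∨
        sdist ![0, e, 2*e+1] w ≤ e := by
      rw [sdist_vecl, sdist_vecl, sdist_vecl]; omega
    have h01 : ¬(sdist ![2*e+1, 0, e] w ≤ e ∧ sdist ![e, 2*e+1, 0] w ≤ e) := by
      rw [sdist_vecl, sdist_vecl]; omega
    have h02 : ¬(sdist ![2*e+1, 0, e] w ≤ e ∧ sdist ![0, e, 2*e+1] w ≤ e) := by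
      rw [sdist_vecl, sdist_vecl]; omega
    have h12 : ¬(sdist ![e, 2*e+1, 0] w ≤ e ∧ sdist ![0, e, 2*e+1] w ≤ e) := by
      rw [sdist_vecl, sdist_vecl]; omega
    rcases hex with h | h | h
    · refine ⟨![2*e+1, 0, e], ⟨by simp, h⟩, ?_⟩
      rintro c ⟨hm, hd⟩
      simp only [Set.mem_insert_iff, Set.mem_singleton_iff] at hm
      rcases hm with rfl | rfl | rfl
      · rfl
      · exact absurd ⟨h, hd⟩ h01
      · exact absurd ⟨h, hd⟩ h02
    · refine ⟨![e, 2*e+1, 0], ⟨by simp, h⟩, ?_⟩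
      rintro c ⟨hm, hd⟩
      simp only [Set.mem_insert_iff, Set.mem_singleton_iff] at hm
      rcases hm with rfl | rfl | rfl
      · exact absurd ⟨hd, h⟩ h01
      · rfl
      · exact absurd ⟨h, hd⟩ h12
    · refine ⟨![0, e, 2*e+1], ⟨by simp, h⟩, ?_⟩
      rintro c ⟨hm, hd⟩
      simp only [Set.mem_insert_iff, Set.mem_singleton_iff] at hm
      rcases hm with rfl | rfl | rfl
      · exact absurd ⟨hd, h⟩ h02
      · exact absurd ⟨hd, h⟩ h12
      · rfl

theorem stmt_3 (e : ℤ) (he : 1 ≤ e) :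
    (∀ C : Set (Fin 3 → ℤ), IsPerfectCode 2 (3 * e + 1) e C → C.Nontrivial →
      C = {![2 * e + 1, e, 0], ![0, 2 * e + 1, e], ![e, 0, 2 * e + 1]} ∨
      C = {![2 * e + 1, 0, e], ![e, 2 * e + 1, 0], ![0, e, 2 * e + 1]}) ∧
    {C : Set (Fin 3 → ℤ) | IsPerfectCode 2 (3 * e + 1) e C ∧ C.Nontrivial}.ncard = 2 ∧
    (∀ C : Set (Fin 3 → ℤ), IsPerfectCode 2 (3 * e + 1) e C → C.Nontrivial →
      C.ncard = 3) := by
  have hS1 := perfect_S1 he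
  have hS2 := perfect_S2 he
  have hne12 : ({![2*e+1, e, 0], ![0, 2*e+1, e], ![e, 0, 2*e+1]} : Set (Fin 3 → ℤ)) ≠
      {![2*e+1, 0, e], ![e, 2*e+1, 0], ![0, e, 2*e+1]} := by
    intro h
    have hm : (![2*e+1, e, 0] : Fin 3 → ℤ) ∈
        ({![2*e+1, 0, e], ![e, 2*e+1, 0], ![0, e, 2*e+1]} : Set (Fin 3 → ℤ)) := by
      rw [← h]; simp
    simp only [Set.mem_insert_iff, Set.mem_singleton_iff] at hm
    rcases hm with h' | h' | h'
    · exact vec_ne1 (by omega) h'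
    · exact vec_ne0 (by omega) h'
    · exact vec_ne0 (by omega) h'
  refine ⟨fun C hC _ => classify_s3 he hC, ?_, ?_⟩
  · have hset : {C : Set (Fin 3 → ℤ) | IsPerfectCode 2 (3 * e + 1) e C ∧ C.Nontrivial} =
        {{![2*e+1, e, 0], ![0, 2*e+1, e], ![e, 0, 2*e+1]},
         {![2*e+1, 0, e], ![e, 2*e+1, 0], ![0, e, 2*e+1]}} := by
      ext C
      simp only [Set.mem_setOf_eq, Set.mem_insert_iff, Set.mem_singleton_iff]
      constructor
      · rintro ⟨h, -⟩
        exact classify_s3 he h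
      · rintro (rfl | rfl)
        · exact ⟨hS1, ![2*e+1, e, 0], by simp, ![0, 2*e+1, e], by simp, vec_ne0 (by omega)⟩
        · exact ⟨hS2, ![2*e+1, 0, e], by simp, ![e, 2*e+1, 0], by simp, vec_ne0 (by omega)⟩
    rw [hset]
    exact Set.ncard_pair hne12
  · intro C hC hnt
    rcases classify_s3 he hC with rfl | rfl
    · exact Set.ncard_eq_three.mpr
        ⟨_, _, _, vec_ne0 (by omega), vec_ne0 (by omega), vec_ne0 (by omega), rfl⟩
    · exact Set.ncard_eq_three.mpr
        ⟨_, _, _, vec_ne0 (by omega), vec_ne0 (by omega), vec_ne0 (by omega), rfl⟩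
end

section
/- For every integer n ≥ 3, there is no nontrivial e-perfect code in the discrete n-simplex Δ_ℓ^n for any integers e ≥ 1 and ℓ ≥ 0. -/
section aux
variable {n : ℕ} {ℓ : ℤ}

lemma sdist_nonneg' (x y : Fin (n+1) → ℤ) : 0 ≤ sdist x y :=
  Finset.sum_nonneg fun i _ => le_max_right _ _

lemma term_le_sdist (x y : Fin (n+1) → ℤ) (i : Fin (n+1)) : x i - y i ≤ sdist x y :=
  le_trans (le_max_left _ _) (Finset.single_le_sum (f := fun j => max (x j - y j) 0)
    (fun j _ => le_max_right _ _) (Finset.mem_univ i))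

lemma sdist_symm {x y : Fin (n+1) → ℤ} (hx : x ∈ simplex n ℓ) (hy : y ∈ simplex n ℓ) :
    sdist x y = sdist y x := by
  have key : sdist x y - sdist y x = ∑ i, (x i - y i) := by
    unfold sdist
    rw [← Finset.sum_sub_distrib]
    apply Finset.sum_congr rfl
    intro i _
    rcases le_total (x i - y i) 0 with h | h <;> omega
  have : ∑ i, (x i - y i) = 0 := by
    rw [Finset.sum_sub_distrib, hx.2, hy.2]; ring
  omega

lemma sdist_triangle (x y z : Fin (n+1) → ℤ) : sdist x z ≤ sdist x y + sdist y z := by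
  unfold sdist
  rw [← Finset.sum_add_distrib]
  apply Finset.sum_le_sum
  intro i _
  rcases le_total (x i - y i) 0 with h | h <;> rcases le_total (y i - z i) 0 with h' | h' <;> omega

/-- selection lemma: a point between `lo` and `hi` with prescribed sum. -/
lemma select_between (lo hi : Fin (n+1) → ℤ) (hlh : ∀ i, lo i ≤ hi i) (t : ℤ)
    (h1 : ∑ i, lo i ≤ t) (h2 : t ≤ ∑ i, hi i) :
    ∃ w : Fin (n+1) → ℤ, (∀ i, lo i ≤ w i) ∧ (∀ i, w i ≤ hi i) ∧ ∑ i, w i = t := by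
  have key : ∀ m : ℕ, ∀ t : ℤ, t - ∑ i, lo i = (m : ℤ) → t ≤ ∑ i, hi i →
      ∃ w : Fin (n+1) → ℤ, (∀ i, lo i ≤ w i) ∧ (∀ i, w i ≤ hi i) ∧ ∑ i, w i = t := by
    intro m
    induction m with
    | zero =>
      intro t ht _
      exact ⟨lo, fun i => le_refl _, hlh, by omega⟩
    | succ m ih =>
      intro t ht hle
      obtain ⟨w, hw1, hw2, hw3⟩ := ih (t-1) (by push_cast; omega) (by omega)
      have : ∃ i, w i < hi i := by
        by_contra hc
        push_neg at hc
        have : ∑ i, hi i ≤ ∑ i, w i := Finset.sum_le_sum (fun i _ => hc i)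
        omega
      obtain ⟨i, hi'⟩ := this
      refine ⟨Function.update w i (w i + 1), ?_, ?_, ?_⟩
      · intro j
        rcases eq_or_ne j i with rfl | hj
        · simp; have := hw1 j; omega
        · simp [Function.update_of_ne hj]; exact hw1 j
      · intro j
        rcases eq_or_ne j i with rfl | hj
        · simp; omega
        · simp [Function.update_of_ne hj]; exact hw2 j
      · rw [Finset.sum_update_of_mem (Finset.mem_univ i)]
        rw [Finset.sum_eq_sum_sdiff_singleton_add (Finset.mem_univ i) w] at hw3
        omega
  have hnn : 0 ≤ t - ∑ i, lo i := by omega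
  exact key (t - ∑ i, lo i).toNat t (by omega) h2

end aux

section geo
variable {n : ℕ} {ℓ : ℤ}

lemma sum_tail {w : Fin (n+1) → ℤ} (hw : w ∈ simplex n ℓ) :
    ∑ i ∈ Finset.univ.erase 0, w i = ℓ - w 0 := by
  have := hw.2
  rw [← Finset.add_sum_erase _ _ (Finset.mem_univ (0 : Fin (n+1)))] at this
  omega

/-- one geodesic step towards y -/
lemma geo_step {m y : Fin (n+1) → ℤ} (hm : m ∈ simplex n ℓ) (hy : y ∈ simplex n ℓ)
    (hpos : 1 ≤ sdist m y) :
    ∃ m' ∈ simplex n ℓ, sdist m m' = 1 ∧ sdist m' y = sdist m y - 1 := by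
  have hex : ∃ i, y i < m i := by
    by_contra hc
    push_neg at hc
    have : sdist m y ≤ 0 := by
      apply le_of_eq
      unfold sdist
      apply Finset.sum_eq_zero
      intro i _
      have := hc i
      simp [max_eq_right]; omega
    omega
  obtain ⟨i, hi⟩ := hex
  have hex2 : ∃ j, m j < y j := by
    by_contra hc
    push_neg at hc
    have h1 : ∑ k, y k < ∑ k, m k := by
      apply Finset.sum_lt_sum (fun k _ => hc k) ⟨i, Finset.mem_univ i, hi⟩
    rw [hm.2, hy.2] at h1; omega
  obtain ⟨j, hj⟩ := hex2
  have hij : i ≠ j := by intro h; rw [h] at hi; omega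
  set m' : Fin (n+1) → ℤ := fun k => if k = i then m i - 1 else if k = j then m j + 1 else m k with hm'
  have hmi : m' i = m i - 1 := by simp [hm']
  have hmj : m' j = m j + 1 := by simp [hm', hij.symm]
  have hmo : ∀ k, k ≠ i → k ≠ j → m' k = m k := by
    intro k h1 h2; simp [hm', h1, h2]
  have hsum : ∀ f g : Fin (n+1) → ℤ, (∀ k, k ≠ i → k ≠ j → f k = g k) →
      ∑ k, f k - ∑ k, g k = (f i - g i) + (f j - g j) := by
    intro f g hfg
    have e1 : ∑ k, f k - ∑ k, g k = ∑ k, (f k - g k) := by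
      rw [Finset.sum_sub_distrib]
    rw [e1]
    rw [← Finset.add_sum_erase _ _ (Finset.mem_univ i)]
    rw [← Finset.add_sum_erase _ (fun k => f k - g k)
        (Finset.mem_erase.mpr ⟨hij.symm, Finset.mem_univ j⟩)]
    have : ∑ k ∈ (Finset.univ.erase i).erase j, (f k - g k) = 0 := by
      apply Finset.sum_eq_zero
      intro k hk
      simp only [Finset.mem_erase] at hk
      rw [hfg k hk.2.1 hk.1]; ring
    omega
  have hsimplex : m' ∈ simplex n ℓ := by
    constructor
    · intro k
      rcases eq_or_ne k i with rfl | h1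
      · rw [hmi]; have := hy.1 k; omega
      rcases eq_or_ne k j with rfl | h2
      · rw [hmj]; have := hm.1 k; omega
      · rw [hmo k h1 h2]; exact hm.1 k
    · have := hsum m' m hmo
      rw [hm.2] at this
      rw [hmi, hmj] at this
      omega
  refine ⟨m', hsimplex, ?_, ?_⟩
  · unfold sdist
    have : ∀ k, k ≠ i → k ≠ j → max (m k - m' k) 0 = 0 := by
      intro k h1 h2; rw [hmo k h1 h2]; simp
    have hs := hsum (fun k => max (m k - m' k) 0) (fun _ => (0:ℤ)) (by
      intro k h1 h2; rw [this k h1 h2])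
    simp only [Finset.sum_const_zero] at hs
    rw [hmi, hmj] at hs
    simp at hs
    omega
  · unfold sdist
    have hs := hsum (fun k => max (m' k - y k) 0) (fun k => max (m k - y k) 0) (by
      intro k h1 h2; rw [hmo k h1 h2])
    rw [hmi, hmj] at hs
    have e1 : max (m i - 1 - y i) 0 - max (m i - y i) 0 = -1 := by omega
    have e2 : max (m j + 1 - y j) 0 - max (m j - y j) 0 = 0 := by omega
    rw [e1, e2] at hs
    omega

lemma geodesic {x y : Fin (n+1) → ℤ} (hx : x ∈ simplex n ℓ) (hy : y ∈ simplex n ℓ)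
    (k : ℤ) (hk0 : 0 ≤ k) (hkD : k ≤ sdist x y) :
    ∃ m ∈ simplex n ℓ, sdist x m ≤ k ∧ sdist m y ≤ sdist x y - k := by
  have key : ∀ N : ℕ, ∀ k : ℤ, k = (N:ℤ) → k ≤ sdist x y →
      ∃ m ∈ simplex n ℓ, sdist x m ≤ k ∧ sdist m y ≤ sdist x y - k := by
    intro N
    induction N with
    | zero =>
      intro k hkN _
      refine ⟨x, hx, ?_, ?_⟩ <;> subst hkN
      · unfold sdist; simp
      · simp
    | succ N ih =>
      intro k hkN hkD
      obtain ⟨m, hmS, h1, h2⟩ := ih (k-1) (by push_cast; omega) (by omega)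
      rcases le_or_gt (sdist m y) (sdist x y - k) with h | h
      · exact ⟨m, hmS, by omega, h⟩
      · have hpos : 1 ≤ sdist m y := by
          have := sdist_nonneg' x y; omega
        obtain ⟨m', hm'S, hstep1, hstep2⟩ := geo_step hmS hy hpos
        refine ⟨m', hm'S, ?_, by omega⟩
        calc sdist x m' ≤ sdist x m + sdist m m' := sdist_triangle _ _ _
        _ ≤ k := by omega
  exact key k.toNat k (by omega) hkD

end geo

section helpers
variable {n : ℕ} {ℓ : ℤ}

open Finset

lemma sum_of_support2 (f : Fin (n+1) → ℤ) (i j : Fin (n+1)) (hij : i ≠ j)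
    (h : ∀ t, t ≠ i → t ≠ j → f t = 0) : ∑ t, f t = f i + f j := by
  rw [← Finset.sum_subset (Finset.subset_univ {i, j})]
  · rw [Finset.sum_insert (by simp [hij]), Finset.sum_singleton]
  · intro t _ ht
    simp only [Finset.mem_insert, Finset.mem_singleton] at ht
    push_neg at ht
    exact h t ht.1 ht.2

lemma sum_of_support3 (f : Fin (n+1) → ℤ) (i j k : Fin (n+1)) (hij : i ≠ j) (hik : i ≠ k)
    (hjk : j ≠ k) (h : ∀ t, t ≠ i → t ≠ j → t ≠ k → f t = 0) :
    ∑ t, f t = f i + f j + f k := by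
  rw [← Finset.sum_subset (Finset.subset_univ {i, j, k})]
  · rw [Finset.sum_insert (by simp [hij, hik]), Finset.sum_insert (by simp [hjk]),
      Finset.sum_singleton]; ring
  · intro t _ ht
    simp only [Finset.mem_insert, Finset.mem_singleton] at ht
    push_neg at ht
    exact h t ht.1 ht.2.1 ht.2.2

lemma sdist_split0 (x w : Fin (n+1) → ℤ) :
    sdist x w = max (x 0 - w 0) 0 + ∑ i ∈ Finset.univ.erase 0, max (x i - w i) 0 := by
  unfold sdist
  rw [← Finset.add_sum_erase _ _ (Finset.mem_univ (0 : Fin (n+1)))]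

lemma tail_nonneg {w : Fin (n+1) → ℤ} (hw : w ∈ simplex n ℓ) : 0 ≤ ℓ - w 0 := by
  have := sum_tail hw
  have h0 : ∀ i ∈ Finset.univ.erase (0 : Fin (n+1)), (0:ℤ) ≤ w i := fun i _ => hw.1 i
  have := Finset.sum_nonneg h0
  omega

lemma coord_le_of_mem {w : Fin (n+1) → ℤ} (hw : w ∈ simplex n ℓ) (i : Fin (n+1)) : w i ≤ ℓ := by
  have h2 := hw.2
  rw [← Finset.add_sum_erase _ _ (Finset.mem_univ i)] at h2
  have := Finset.sum_nonneg (fun j (_ : j ∈ Finset.univ.erase i) => hw.1 j)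
  omega

/-- if `w ≤ x` off coordinate 0, then `sdist x w` is the difference of tails -/
lemma sdist_of_tail_dom {x w : Fin (n+1) → ℤ} (hx : x ∈ simplex n ℓ) (hw : w ∈ simplex n ℓ)
    (hdom : ∀ i, i ≠ 0 → w i ≤ x i) : sdist x w = (ℓ - x 0) - (ℓ - w 0) := by
  rw [sdist_split0]
  have h1 : ∑ i ∈ Finset.univ.erase 0, max (x i - w i) 0
      = ∑ i ∈ Finset.univ.erase 0, (x i - w i) := by
    apply Finset.sum_congr rfl
    intro i hi
    have := hdom i (Finset.mem_erase.mp hi).1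
    omega
  have h2 : ∑ i ∈ Finset.univ.erase 0, (x i - w i)
      = (ℓ - x 0) - (ℓ - w 0) := by
    rw [Finset.sum_sub_distrib, sum_tail hx, sum_tail hw]
  have h3 : x 0 ≤ w 0 := by
    have := sum_tail hx
    have := sum_tail hw
    have hle : ∑ i ∈ Finset.univ.erase 0, w i ≤ ∑ i ∈ Finset.univ.erase 0, x i :=
      Finset.sum_le_sum (fun i hi => hdom i (Finset.mem_erase.mp hi).1)
    omega
  rw [h1, h2]
  omega

lemma tail_sdist_ge {x w : Fin (n+1) → ℤ} (hx : x ∈ simplex n ℓ) (hw : w ∈ simplex n ℓ) :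
    (ℓ - x 0) - (ℓ - w 0) ≤ sdist x w := by
  rw [sdist_split0]
  have h1 : ∑ i ∈ Finset.univ.erase 0, (x i - w i)
      ≤ ∑ i ∈ Finset.univ.erase 0, max (x i - w i) 0 :=
    Finset.sum_le_sum (fun i _ => le_max_left _ _)
  rw [Finset.sum_sub_distrib, sum_tail hx, sum_tail hw] at h1
  have : (0:ℤ) ≤ max (x 0 - w 0) 0 := le_max_right _ _
  omega

/-- if `sdist x w ≤ (ℓ - x 0) - (ℓ - w 0)` then `w ≤ x` off coordinate 0. -/
lemma box_of_cov {x w : Fin (n+1) → ℤ} (hx : x ∈ simplex n ℓ) (hw : w ∈ simplex n ℓ)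
    (hcov : sdist x w ≤ (ℓ - x 0) - (ℓ - w 0)) : ∀ i, i ≠ 0 → w i ≤ x i := by
  have hsymm := sdist_symm hw hx
  have hB : ∑ i ∈ Finset.univ.erase 0, max (w i - x i) 0 ≤ 0 := by
    have hsplit := sdist_split0 w x
    have h0 : (ℓ - x 0) - (ℓ - w 0) ≤ max (w 0 - x 0) 0 := by
      have := le_max_left (w 0 - x 0) 0; omega
    omega
  intro i hi
  have hterm : max (w i - x i) 0 ≤ 0 := by
    have hnn : ∀ j ∈ Finset.univ.erase (0:Fin (n+1)), (0:ℤ) ≤ max (w j - x j) 0 :=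
      fun j _ => le_max_right _ _
    have := Finset.single_le_sum hnn (Finset.mem_erase.mpr ⟨hi, Finset.mem_univ i⟩)
    omega
  have := le_max_left (w i - x i) (0:ℤ)
  omega

/-- explicit "corner word" with tail τ at coordinate k -/
def cwt (n : ℕ) (ℓ τ : ℤ) (k : Fin (n+1)) : Fin (n+1) → ℤ :=
  fun t => if t = 0 then ℓ - τ else if t = k then τ else 0

lemma cwt_mem (τ : ℤ) (k : Fin (n+1)) (hk : k ≠ 0) (h1 : 0 ≤ τ) (h2 : τ ≤ ℓ) :
    cwt n ℓ τ k ∈ simplex n ℓ := by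
  constructor
  · intro i
    unfold cwt
    rcases eq_or_ne i 0 with rfl | h0
    · simp; omega
    rcases eq_or_ne i k with rfl | hik
    · simp [h0, h2]; omega
    · simp [h0, hik]
  · have := sum_of_support2 (cwt n ℓ τ k) 0 k (Ne.symm hk) (by
      intro t ht0 htk; unfold cwt; simp [ht0, htk])
    rw [this]
    unfold cwt
    simp [hk, Ne.symm hk]

lemma sdist_cwt_left (τ : ℤ) (k : Fin (n+1)) (hk : k ≠ 0) {w : Fin (n+1) → ℤ}
    (hw : w ∈ simplex n ℓ) :
    sdist (cwt n ℓ τ k) w = max ((ℓ - w 0) - τ) 0 + max (τ - w k) 0 := by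
  have := sum_of_support2 (fun t => max (cwt n ℓ τ k t - w t) 0) 0 k (Ne.symm hk) (by
    intro t ht0 htk
    unfold cwt
    simp only [ht0, htk, if_false]
    have := hw.1 t
    omega)
  have e0 : cwt n ℓ τ k 0 = ℓ - τ := by unfold cwt; simp
  have ek : cwt n ℓ τ k k = τ := by unfold cwt; simp [hk, Ne.symm hk]
  unfold sdist
  rw [this]
  rw [e0, ek]
  have h' : ℓ - τ - w 0 = (ℓ - w 0) - τ := by ring
  rw [h']

lemma sdist_corner0 {w : Fin (n+1) → ℤ} (hw : w ∈ simplex n ℓ) {k : Fin (n+1)} (hk : k ≠ 0)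
    (hl : 0 ≤ ℓ) : sdist w (cwt n ℓ 0 k) = ℓ - w 0 := by
  have hcwS := cwt_mem (n := n) (ℓ := ℓ) 0 k hk le_rfl hl
  rw [sdist_symm hw hcwS, sdist_cwt_left 0 k hk hw]
  have h1 := tail_nonneg hw
  have h2 := hw.1 k
  rw [max_eq_left (by omega), max_eq_right (by omega)]
  ring

lemma min_posPart (a b : ℤ) : min a b + max (a - b) 0 = a := by omega

lemma tail_min_split {w c' : Fin (n+1) → ℤ} (hw : w ∈ simplex n ℓ) :
    ∑ i ∈ Finset.univ.erase 0, min (w i) (c' i)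
      + ∑ i ∈ Finset.univ.erase 0, max (w i - c' i) 0 = ℓ - w 0 := by
  rw [← Finset.sum_add_distrib]
  rw [← sum_tail hw]
  apply Finset.sum_congr rfl
  intro i _
  omega

lemma sum_erase_pair (f : Fin (n+1) → ℤ) {i j : Fin (n+1)} (hi : i ≠ 0) (hj : j ≠ 0)
    (hij : i ≠ j) :
    ∑ t ∈ Finset.univ.erase 0, f t
      = f i + f j + ∑ t ∈ ((Finset.univ.erase 0).erase i).erase j, f t := by
  rw [← Finset.add_sum_erase _ f (show i ∈ Finset.univ.erase 0 by simp [hi])]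
  rw [← Finset.add_sum_erase _ f
    (show j ∈ (Finset.univ.erase 0).erase i from
      Finset.mem_erase.mpr ⟨Ne.symm hij, by simp [hj]⟩)]
  ring

lemma pair_le_tail {w : Fin (n+1) → ℤ} (hw : w ∈ simplex n ℓ) {i j : Fin (n+1)}
    (hi : i ≠ 0) (hj : j ≠ 0) (hij : i ≠ j) : w i + w j ≤ ℓ - w 0 := by
  rw [← sum_tail hw, sum_erase_pair w hi hj hij]
  have : (0:ℤ) ≤ ∑ t ∈ ((Finset.univ.erase 0).erase i).erase j, w t :=
    Finset.sum_nonneg fun t _ => hw.1 t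
  omega

def pt3 (n : ℕ) (A B Cv : ℤ) (j k : Fin (n+1)) : Fin (n+1) → ℤ :=
  fun t => if t = 0 then A else if t = j then B else if t = k then Cv else 0

lemma pt3_0 {A B Cv : ℤ} {j k : Fin (n+1)} : pt3 n A B Cv j k 0 = A := if_pos rfl

lemma pt3_j {A B Cv : ℤ} {j k : Fin (n+1)} (hj : j ≠ 0) : pt3 n A B Cv j k j = B := by
  unfold pt3; rw [if_neg hj, if_pos rfl]

lemma pt3_k {A B Cv : ℤ} {j k : Fin (n+1)} (hk : k ≠ 0) (hkj : k ≠ j) :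
    pt3 n A B Cv j k k = Cv := by
  unfold pt3; rw [if_neg hk, if_neg hkj, if_pos rfl]

lemma pt3_other {A B Cv : ℤ} {j k : Fin (n+1)} {t : Fin (n+1)} (h1 : t ≠ 0) (h2 : t ≠ j)
    (h3 : t ≠ k) : pt3 n A B Cv j k t = 0 := by
  unfold pt3; rw [if_neg h1, if_neg h2, if_neg h3]

end helpers

section code
variable {n : ℕ} {ℓ e : ℤ} {C : Set (Fin (n+1) → ℤ)}

lemma cov_unique (hPC : IsPerfectCode n ℓ e C) {w : Fin (n+1) → ℤ} (hw : w ∈ simplex n ℓ)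
    {u v : Fin (n+1) → ℤ} (hu : u ∈ C) (hv : v ∈ C)
    (hcu : sdist u w ≤ e) (hcv : sdist v w ≤ e) : u = v := by
  obtain ⟨z, _, hz⟩ := hPC.2 w hw
  rw [hz u ⟨hu, hcu⟩, hz v ⟨hv, hcv⟩]

lemma exists_cov (hPC : IsPerfectCode n ℓ e C) {w : Fin (n+1) → ℤ} (hw : w ∈ simplex n ℓ) :
    ∃ x ∈ C, sdist x w ≤ e := by
  obtain ⟨z, ⟨hz1, hz2⟩, _⟩ := hPC.2 w hw
  exact ⟨z, hz1, hz2⟩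

lemma sdist_self' (x : Fin (n+1) → ℤ) : sdist x x = 0 := by
  unfold sdist; simp

lemma separation (hPC : IsPerfectCode n ℓ e C) (he : 1 ≤ e) {x y : Fin (n+1) → ℤ}
    (hx : x ∈ C) (hy : y ∈ C) (hxy : x ≠ y) : 2*e+1 ≤ sdist x y := by
  by_contra hcon
  push_neg at hcon
  have hxS := hPC.1 hx
  have hyS := hPC.1 hy
  rcases le_or_gt (sdist x y) e with h | h
  · have h0 : sdist y y ≤ e := by rw [sdist_self']; omega
    exact hxy (cov_unique hPC hyS hx hy h h0)
  · obtain ⟨m, hmS, h1, h2⟩ := geodesic hxS hyS (sdist x y - e) (by omega) (by omega)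
    have hym : sdist y m ≤ e := by
      rw [← sdist_symm hmS hyS]; omega
    exact hxy (cov_unique hPC hmS hx hy (by omega) hym)

end code

set_option maxHeartbeats 4000000 in
theorem stmt_4 (n : ℕ) (hn : 3 ≤ n) (e ℓ : ℤ) (he : 1 ≤ e) (hℓ : 0 ≤ ℓ) :
    ¬ ∃ C : Set (Fin (n + 1) → ℤ), IsPerfectCode n ℓ e C ∧ C.Nontrivial := by
  classical
  rintro ⟨C, hPC, x₀, hx₀, y₀, hy₀, hxy₀⟩
  obtain ⟨hsub, huq⟩ := id hPC
  -- the corner point V0 (tail 0 at coordinate 1)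
  have hk1 : (⟨1, by omega⟩ : Fin (n+1)) ≠ 0 := by
    intro h
    have := congrArg Fin.val h
    simp at this
  have hV0S : cwt n ℓ 0 ⟨1, by omega⟩ ∈ simplex n ℓ := cwt_mem 0 _ hk1 le_rfl hℓ
  obtain ⟨c, hcC, hcV0⟩ := exists_cov hPC hV0S
  have hcS : c ∈ simplex n ℓ := hsub hcC
  have hs0 : 0 ≤ ℓ - c 0 := tail_nonneg hcS
  have hse : ℓ - c 0 ≤ e := by
    have h1 : sdist (cwt n ℓ 0 ⟨1, by omega⟩) c ≤ e := by
      rw [sdist_symm hV0S hcS]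
      exact hcV0
    rw [sdist_cwt_left 0 _ hk1 hcS] at h1
    have := le_max_left ((ℓ - c 0) - 0) (0:ℤ)
    have := le_max_right (0 - c ⟨1, by omega⟩) (0:ℤ)
    omega
  -- c covers all low levels
  have low_cov : ∀ w ∈ simplex n ℓ, ℓ - w 0 ≤ e → sdist c w ≤ e := by
    intro w hwS hwt
    rw [sdist_split0]
    have h1 : ∑ i ∈ Finset.univ.erase 0, max (c i - w i) 0
        ≤ ∑ i ∈ Finset.univ.erase 0, c i := by
      apply Finset.sum_le_sum
      intro i _
      have := hwS.1 i
      have := hcS.1 i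
      omega
    rw [sum_tail hcS] at h1
    rcases le_total (c 0 - w 0) 0 with h | h
    · rw [max_eq_right h]; omega
    · rw [max_eq_left h]; omega
  -- every other codeword is deep
  have tail_ge0 : ∀ x ∈ C, x ≠ c → 2*e+1 ≤ ℓ - x 0 := by
    intro x hxC hxc
    by_contra hcon
    push_neg at hcon
    have hxS := hsub hxC
    have hxt0 : 0 ≤ ℓ - x 0 := tail_nonneg hxS
    rcases le_or_gt (ℓ - x 0) e with h | h
    · have h1 : sdist c x ≤ e := low_cov x hxS h
      have h2 : sdist x x ≤ e := by rw [sdist_self']; omega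
      exact hxc (cov_unique hPC hxS hxC hcC h2 h1)
    · -- e < tail x ≤ 2e : midpoint towards V0
      have hDx : sdist x (cwt n ℓ 0 ⟨1, by omega⟩) = ℓ - x 0 := sdist_corner0 hxS hk1 hℓ
      obtain ⟨m, hmS, h1, h2⟩ := geodesic hxS hV0S e (by omega) (by rw [hDx]; omega)
      rw [hDx] at h2
      have hmt : ℓ - m 0 ≤ e := by
        have h3 : sdist m (cwt n ℓ 0 ⟨1, by omega⟩) = ℓ - m 0 := sdist_corner0 hmS hk1 hℓ
        omega
      have h4 : sdist c m ≤ e := low_cov m hmS hmt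
      exact hxc (cov_unique hPC hmS hxC hcC h1 h4)
  -- second codeword and the minimal deep tail T
  have hex2 : ∃ x, x ∈ C ∧ x ≠ c := by
    rcases eq_or_ne x₀ c with rfl | h
    · exact ⟨y₀, hy₀, fun h' => hxy₀ h'.symm⟩
    · exact ⟨x₀, hx₀, h⟩
  obtain ⟨T, ⟨b, hbC, hbc, hbT⟩, hTmin⟩ :=
    Int.exists_least_of_bdd (P := fun T => ∃ x, x ∈ C ∧ x ≠ c ∧ ℓ - x 0 = T)
      ⟨2*e+1, by rintro z ⟨x, hxC, hxc, rfl⟩; exact tail_ge0 x hxC hxc⟩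
      (by obtain ⟨x, h1, h2⟩ := hex2; exact ⟨ℓ - x 0, x, h1, h2, rfl⟩)
  have hbS := hsub hbC
  have hq0 : 0 ≤ T - (2*e+1) := by have := tail_ge0 b hbC hbc; omega
  have hTl : T ≤ ℓ := by have := hbS.1 0; omega
  have tailT : ∀ x ∈ C, x ≠ c → T ≤ ℓ - x 0 := fun x hx hne => hTmin _ ⟨x, hx, hne, rfl⟩
  set q := T - (2*e+1) with hqdef
  -- M2 : all tail coordinates of c are ≥ q
  have hM2 : ∀ i, i ≠ 0 → q ≤ c i := by
    intro i hi0
    have hWS : cwt n ℓ (e+q) i ∈ simplex n ℓ := cwt_mem _ _ hi0 (by omega) (by omega)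
    obtain ⟨y, hyC, hycov⟩ := exists_cov hPC hWS
    rcases eq_or_ne y c with hyc | hyc
    · subst hyc
      have h1 : sdist (cwt n ℓ (e+q) i) y ≤ e := by rw [sdist_symm hWS (hsub hyC)]; exact hycov
      rw [sdist_cwt_left _ _ hi0 (hsub hyC)] at h1
      have := le_max_left ((e+q) - y i) (0:ℤ)
      have := le_max_right ((ℓ - y 0) - (e+q)) (0:ℤ)
      omega
    · exfalso
      have h1 := tail_sdist_ge (hsub hyC) hWS
      have h2 : ℓ - (cwt n ℓ (e+q) i) 0 = e + q := by unfold cwt; simp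
      have h3 := tailT y hyC hyc
      omega
  -- M4 : a coordinate j0 with c j0 = q
  obtain ⟨j0, hj00, hcj0⟩ : ∃ j0, j0 ≠ 0 ∧ c j0 = q := by
    obtain ⟨w', hw1, hw2, hw3⟩ := select_between
      (fun t => if t = 0 then ℓ - (e+q+1) else 0)
      (fun t => if t = 0 then ℓ - (e+q+1) else b t)
      (by intro i; rcases eq_or_ne i 0 with rfl | h
          · simp
          · simp [h]; exact hbS.1 i)
      ℓ
      (by rw [Finset.sum_ite_eq' Finset.univ (0 : Fin (n+1)) (fun _ => ℓ - (e+q+1))]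
          simp; omega)
      (by rw [← Finset.add_sum_erase _ _ (Finset.mem_univ (0 : Fin (n+1)))]
          simp only [if_pos rfl]
          have : ∑ i ∈ Finset.univ.erase 0, (if i = 0 then ℓ - (e+q+1) else b i)
              = ∑ i ∈ Finset.univ.erase 0, b i := by
            apply Finset.sum_congr rfl
            intro i hi
            rw [if_neg (Finset.mem_erase.mp hi).1]
          rw [this, sum_tail hbS]
          omega)
    have hw'0 : w' 0 = ℓ - (e+q+1) := by
      have h1 := hw1 0; have h2 := hw2 0
      simp at h1 h2; omega
    have hw'S : w' ∈ simplex n ℓ := by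
      constructor
      · intro i
        have h1 := hw1 i
        rcases eq_or_ne i 0 with rfl | h
        · simp at h1; omega
        · simp [h] at h1; omega
      · exact hw3
    have hw'dom : ∀ i, i ≠ 0 → w' i ≤ b i := by
      intro i h; have := hw2 i; simp [h] at this; exact this
    have hcovb : sdist b w' ≤ e := by
      rw [sdist_of_tail_dom hbS hw'S hw'dom, hbT, hw'0]
      omega
    have hnc : ¬ sdist c w' ≤ e := by
      intro h
      exact hbc (cov_unique hPC hw'S hbC hcC hcovb h)
    have hEsum : e + 1 ≤ ∑ i ∈ Finset.univ.erase 0, max (w' i - c i) 0 := by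
      have h1 : ¬ sdist w' c ≤ e := by rw [sdist_symm hw'S hcS]; exact hnc
      rw [sdist_split0] at h1
      rw [max_eq_right (by rw [hw'0]; omega)] at h1
      omega
    have hmins := tail_min_split (c' := c) hw'S
    rw [hw'0] at hmins
    by_contra hno
    push_neg at hno
    have hM2' : ∀ i, i ≠ 0 → q + 1 ≤ c i := by
      intro i h
      have := hM2 i h
      have h2 := hno i h
      omega
    have hwle : ∀ i ∈ Finset.univ.erase (0 : Fin (n+1)), w' i ≤ q := by
      intro i hi
      by_contra hgt
      push_neg at hgt
      have hminnn : ∀ j ∈ Finset.univ.erase (0 : Fin (n+1)), (0:ℤ) ≤ min (w' j) (c j) := by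
        intro j hj
        have := hw'S.1 j
        have := hcS.1 j
        simp; omega
      have h1 := Finset.single_le_sum hminnn hi
      have h2 : q + 1 ≤ min (w' i) (c i) := by
        have := hM2' i (Finset.mem_erase.mp hi).1
        simp; omega
      omega
    have heq : ∑ i ∈ Finset.univ.erase 0, min (w' i) (c i)
        = ∑ i ∈ Finset.univ.erase 0, w' i := by
      apply Finset.sum_congr rfl
      intro i hi
      have h1 := hwle i hi
      have h2 := hM2' i (Finset.mem_erase.mp hi).1
      simp; omega
    rw [heq, sum_tail hw'S, hw'0] at hmins
    omega
  -- the codeword a covering the corner point at level v = e+q+1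
  have hZ0S : cwt n ℓ (e+q+1) j0 ∈ simplex n ℓ := cwt_mem _ _ hj00 (by omega) (by omega)
  have hZ0c : ¬ sdist c (cwt n ℓ (e+q+1) j0) ≤ e := by
    intro h1
    rw [sdist_symm hcS hZ0S, sdist_cwt_left _ _ hj00 hcS] at h1
    rw [max_eq_right (by omega), max_eq_left (by omega), hcj0] at h1
    omega
  obtain ⟨a, haC, hacov⟩ := exists_cov hPC hZ0S
  have hac : a ≠ c := by rintro rfl; exact hZ0c hacov
  have haS := hsub haC
  have haT : ℓ - a 0 = T := by
    have h1 := tail_sdist_ge haS hZ0S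
    have h2 : ℓ - (cwt n ℓ (e+q+1) j0) 0 = e+q+1 := by unfold cwt; simp
    have h3 := tailT a haC hac
    omega
  have habox : ∀ i, i ≠ 0 → cwt n ℓ (e+q+1) j0 i ≤ a i := by
    apply box_of_cov haS hZ0S
    have h2 : ℓ - (cwt n ℓ (e+q+1) j0) 0 = e+q+1 := by unfold cwt; simp
    omega
  have haj0 : e+q+1 ≤ a j0 := by
    have := habox j0 hj00
    unfold cwt at this
    simp [hj00] at this
    omega
  -- ===================== BRANCH SPLIT =====================
  by_cases hBr1 : ∃ k, k ≠ 0 ∧ k ≠ j0 ∧ c k = 0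
  · -- Branch 1 : two zero tail coordinates of c
    obtain ⟨k', hk'0, hk'j0, hck'⟩ := hBr1
    have hq00 : q = 0 := by have := hM2 k' hk'0; omega
    have hak' : a k' ≤ e := by
      have h1 := pair_le_tail haS hj00 hk'0 (Ne.symm hk'j0)
      omega
    have hak'0 : 0 ≤ a k' := haS.1 k'
    set z' : Fin (n+1) → ℤ := fun t => if t = 0 then ℓ - (e+1)
      else if t = j0 then e - a k' else if t = k' then a k' + 1 else 0 with hz'
    have hz'0 : z' 0 = ℓ - (e+1) := by simp [hz']
    have hz'j0 : z' j0 = e - a k' := by simp [hz', hj00]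
    have hz'k' : z' k' = a k' + 1 := by simp [hz', hk'0, hk'j0]
    have hz'other : ∀ t, t ≠ 0 → t ≠ j0 → t ≠ k' → z' t = 0 := by
      intro t h1 h2 h3; simp [hz', h1, h2, h3]
    have hz'S : z' ∈ simplex n ℓ := by
      constructor
      · intro i
        rcases eq_or_ne i 0 with rfl | h1
        · rw [hz'0]; omega
        rcases eq_or_ne i j0 with rfl | h2
        · rw [hz'j0]; omega
        rcases eq_or_ne i k' with rfl | h3
        · rw [hz'k']; omega
        · rw [hz'other i h1 h2 h3]
      · rw [sum_of_support3 z' 0 j0 k' (Ne.symm hj00) (Ne.symm hk'0) (Ne.symm hk'j0) hz'other]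
        rw [hz'0, hz'j0, hz'k']
        ring
    have hnc : ¬ sdist c z' ≤ e := by
      intro h
      have h1 : sdist z' c ≤ e := by rw [sdist_symm hz'S hcS]; exact h
      have h2 : sdist z' c = e + 1 := by
        unfold sdist
        rw [sum_of_support3 _ 0 j0 k' (Ne.symm hj00) (Ne.symm hk'0) (Ne.symm hk'j0) (by
          intro t h1 h2 h3
          rw [hz'other t h1 h2 h3]
          have := hcS.1 t
          omega)]
        rw [hz'0, hz'j0, hz'k', hcj0, hck', hq00]
        rw [max_eq_right (by omega), max_eq_left (by omega), max_eq_left (by omega)]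
        ring
      omega
    obtain ⟨x, hxC, hxcov⟩ := exists_cov hPC hz'S
    have hxc : x ≠ c := by rintro rfl; exact hnc hxcov
    have hxS := hsub hxC
    have hxT : ℓ - x 0 = 2*e+1 := by
      have h1 := tail_sdist_ge hxS hz'S
      have h2 := tailT x hxC hxc
      rw [hz'0] at h1
      omega
    have hxbox : ∀ i, i ≠ 0 → z' i ≤ x i := by
      apply box_of_cov hxS hz'S
      rw [hxT, hz'0]
      omega
    have hxa : x ≠ a := by
      intro h
      have h1 := hxbox k' hk'0
      rw [hz'k', h] at h1
      omega
    have hsep := separation hPC he haC hxC (fun h => hxa h.symm)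
    -- upper bound on sdist a x
    have hub : sdist a x ≤ e + 1 := by
      rw [sdist_split0]
      rw [sum_erase_pair _ hj00 hk'0 (Ne.symm hk'j0)]
      have e0 : max (a 0 - x 0) 0 = 0 := by
        rw [max_eq_right]
        omega
      have e1 : max (a j0 - x j0) 0 ≤ a j0 - (e - a k') := by
        have h1 := hxbox j0 hj00
        rw [hz'j0] at h1
        rcases le_total (a j0 - x j0) 0 with h | h
        · rw [max_eq_right h]; omega
        · rw [max_eq_left h]; omega
      have e2 : max (a k' - x k') 0 = 0 := by
        have h1 := hxbox k' hk'0
        rw [hz'k'] at h1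
        rw [max_eq_right (by omega)]
      have e3 : ∑ t ∈ ((Finset.univ.erase 0).erase j0).erase k', max (a t - x t) 0
          ≤ ∑ t ∈ ((Finset.univ.erase 0).erase j0).erase k', a t := by
        apply Finset.sum_le_sum
        intro t _
        have := hxS.1 t
        have := haS.1 t
        omega
      have e4 : ∑ t ∈ ((Finset.univ.erase 0).erase j0).erase k', a t
          = (ℓ - a 0) - a j0 - a k' := by
        have := sum_erase_pair a hj00 hk'0 (Ne.symm hk'j0)
        rw [sum_tail haS] at this
        omega
      rw [e0, e2]
      rw [e4] at e3
      linarith [e1, e3]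
    linarith [hub, hsep, he]
  · -- Branch 2
    push_neg at hBr1
    have hB2 : ∀ k, k ≠ 0 → k ≠ j0 → 1 ≤ c k := by
      intro k h1 h2
      have h3 := hBr1 k h1 h2
      have := hcS.1 k
      omega
    -- ============ BRANCH 2 ============
    -- purity of a
    have hapure : ∀ i, i ≠ 0 → i ≠ j0 → a i = 0 := by
      intro i hi0 hij0
      by_contra hne
      have hai : 1 ≤ a i := by have := haS.1 i; omega
      set W : Fin (n+1) → ℤ := fun t => if t = 0 then ℓ - (e+q+1)
        else if t = j0 then e+q else if t = i then 1 else 0 with hW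
      have hW0 : W 0 = ℓ - (e+q+1) := by simp [hW]
      have hWj0 : W j0 = e+q := by simp [hW, hj00]
      have hWi : W i = 1 := by simp [hW, hi0, hij0]
      have hWother : ∀ t, t ≠ 0 → t ≠ j0 → t ≠ i → W t = 0 := by
        intro t h1 h2 h3; simp [hW, h1, h2, h3]
      have hWS : W ∈ simplex n ℓ := by
        constructor
        · intro t
          rcases eq_or_ne t 0 with rfl | h1
          · rw [hW0]; omega
          rcases eq_or_ne t j0 with rfl | h2
          · rw [hWj0]; omega
          rcases eq_or_ne t i with rfl | h3
          · rw [hWi]; omega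
          · rw [hWother t h1 h2 h3]
        · rw [sum_of_support3 W 0 j0 i (Ne.symm hj00) (Ne.symm hi0) (Ne.symm hij0) hWother]
          rw [hW0, hWj0, hWi]; ring
      have hcovaW : sdist a W ≤ e := by
        rw [sdist_of_tail_dom haS hWS (by
          intro t ht0
          rcases eq_or_ne t j0 with rfl | h2
          · rw [hWj0]; omega
          rcases eq_or_ne t i with rfl | h3
          · rw [hWi]; omega
          · rw [hWother t ht0 h2 h3]; exact haS.1 t), haT, hW0]
        omega
      have hcovcW : sdist c W ≤ e := by
        rw [sdist_symm hcS hWS]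
        unfold sdist
        rw [sum_of_support3 _ 0 j0 i (Ne.symm hj00) (Ne.symm hi0) (Ne.symm hij0) (by
          intro t h1 h2 h3
          rw [hWother t h1 h2 h3]
          have := hcS.1 t
          omega)]
        rw [hW0, hWj0, hWi, hcj0]
        have hci := hB2 i hi0 hij0
        rw [max_eq_right (by omega), max_eq_left (by omega), max_eq_right (by omega)]
        omega
      exact hac (cov_unique hPC hWS haC hcC hcovaW hcovcW)
    have haj0T : a j0 = T := by
      have h1 := sum_tail haS
      rw [haT] at h1
      rw [← Finset.add_sum_erase _ a (show j0 ∈ Finset.univ.erase 0 by simp [hj00])] at h1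
      have h2 : ∑ t ∈ (Finset.univ.erase 0).erase j0, a t = 0 := by
        apply Finset.sum_eq_zero
        intro t ht
        simp only [Finset.mem_erase] at ht
        exact hapure t ht.2.1 ht.1
      omega
    have haeq : a = cwt n ℓ T j0 := by
      funext t
      unfold cwt
      rcases eq_or_ne t 0 with rfl | h1
      · simp; omega
      rcases eq_or_ne t j0 with rfl | h2
      · simp [h1, haj0T]
      · simp [h1, h2, hapure t h1 h2]
    -- the minimum g' of c over tail coordinates other than j0
    have hcard : 2 ≤ ((Finset.univ.erase (0 : Fin (n+1))).erase j0).card := by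
      rw [Finset.card_erase_of_mem (by simp [hj00]), Finset.card_erase_of_mem (Finset.mem_univ _)]
      simp [Finset.card_univ]
      omega
    have hE'ne : ((Finset.univ.erase (0:Fin (n+1))).erase j0).Nonempty :=
      Finset.card_pos.mp (by omega)
    obtain ⟨k₁, hk₁mem, hk₁min⟩ :=
      Finset.exists_min_image ((Finset.univ.erase (0:Fin (n+1))).erase j0) c hE'ne
    have hk₁j0 : k₁ ≠ j0 := (Finset.mem_erase.mp hk₁mem).1
    have hk₁0 : k₁ ≠ 0 := (Finset.mem_erase.mp (Finset.mem_erase.mp hk₁mem).2).1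
    set g' := c k₁ with hg'def
    have hg'min : ∀ k, k ≠ 0 → k ≠ j0 → g' ≤ c k := by
      intro k h1 h2
      exact hk₁min k (by simp [Finset.mem_erase, h1, h2])
    have hg'1 : 1 ≤ g' := hB2 k₁ hk₁0 hk₁j0
    have hg'q : q ≤ g' := hM2 k₁ hk₁0
    -- a third coordinate and the bound q + 2g' ≤ e
    have hq2g : q + 2*g' ≤ e := by
      obtain ⟨l, hl⟩ := Finset.card_pos.mp
        (show 0 < (((Finset.univ.erase (0:Fin (n+1))).erase j0).erase k₁).card by
          rw [Finset.card_erase_of_mem hk₁mem]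
          omega)
      have hl0 : l ≠ 0 := by
        have := Finset.mem_erase.mp (Finset.mem_erase.mp (Finset.mem_erase.mp hl).2).2
        exact this.1
      have hlj0 : l ≠ j0 := (Finset.mem_erase.mp (Finset.mem_erase.mp hl).2).1
      have hlk₁ : l ≠ k₁ := (Finset.mem_erase.mp hl).1
      have hsum3 := sum_erase_pair c hj00 hk₁0 (fun h => hk₁j0 h.symm)
      rw [sum_tail hcS] at hsum3
      have hlsum : c l ≤ ∑ t ∈ ((Finset.univ.erase 0).erase j0).erase k₁, c t := by
        apply Finset.single_le_sum (fun t _ => hcS.1 t)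
        simp [Finset.mem_erase, hl0, hlj0, hlk₁]
      have hcl := hg'min l hl0 hlj0
      omega
    -- ===== covering lemma =====
    have covlem : ∀ M : ℤ, M ≤ q + g' →
        (∀ k, k ≠ 0 → k ≠ j0 → c k < M → cwt n ℓ (2*e+1+c k) k ∈ C) →
        ∀ w ∈ simplex n ℓ, ℓ - w 0 ≤ e + M →
        ∃ y, y ∈ C ∧ sdist y w ≤ e ∧
          (y = c ∨ y = a ∨ ∃ k, k ≠ 0 ∧ k ≠ j0 ∧ c k < M ∧ y = cwt n ℓ (2*e+1+c k) k) := by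
      intro M hM hproc w hwS hwt
      by_cases h1 : ℓ - w 0 ≤ e
      · exact ⟨c, hcC, low_cov w hwS h1, Or.inl rfl⟩
      push_neg at h1
      by_cases h2 : e+q+1 ≤ w j0
      · refine ⟨a, haC, ?_, Or.inr (Or.inl rfl)⟩
        rw [haeq, sdist_cwt_left T j0 hj00 hwS]
        rw [max_eq_right (by omega)]
        have : max (T - w j0) 0 ≤ e := max_le (by omega) (by omega)
        omega
      push_neg at h2
      by_cases h3 : ∃ k, k ≠ 0 ∧ k ≠ j0 ∧ c k < M ∧ e+1+ c k ≤ w k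
      · obtain ⟨k, hk0, hkj0, hckM, hwk⟩ := h3
        refine ⟨_, hproc k hk0 hkj0 hckM, ?_, Or.inr (Or.inr ⟨k, hk0, hkj0, hckM, rfl⟩)⟩
        rw [sdist_cwt_left _ _ hk0 hwS]
        have hck0 : 0 ≤ c k := hcS.1 k
        rw [max_eq_right (by omega)]
        have : max (2*e+1+c k - w k) 0 ≤ e := max_le (by omega) (by omega)
        omega
      · push_neg at h3
        refine ⟨c, hcC, ?_, Or.inl rfl⟩
        rw [sdist_symm hcS hwS, sdist_split0]
        rw [max_eq_right (by omega)]
        have hcore : ∑ i ∈ Finset.univ.erase 0, max (w i - c i) 0 ≤ e := by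
          by_contra hcon
          push_neg at hcon
          have hmins := tail_min_split (c' := c) hwS
          have hminle : ∑ i ∈ Finset.univ.erase 0, min (w i) (c i) ≤ M - 1 := by omega
          have hminnn : ∀ j ∈ Finset.univ.erase (0:Fin (n+1)), (0:ℤ) ≤ min (w j) (c j) := by
            intro j _
            have := hwS.1 j; have := hcS.1 j
            omega
          by_cases hk : ∃ k, k ≠ 0 ∧ k ≠ j0 ∧ c k < w k
          · obtain ⟨k, hk0, hkj0, hck⟩ := hk
            have hkE : k ∈ Finset.univ.erase (0:Fin (n+1)) := by simp [hk0]
            have hgk := hg'min k hk0 hkj0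
            by_cases hMk : M ≤ c k
            · have hle := Finset.single_le_sum hminnn hkE
              have : min (w k) (c k) = c k := by omega
              omega
            · push_neg at hMk
              have hwk := h3 k hk0 hkj0 hMk
              have hsplitθ := Finset.add_sum_erase _ (fun i => max (w i - c i) 0) hkE
              have hθk : max (w k - c k) 0 ≤ e := max_le (by omega) (by omega)
              have hrest : 1 ≤ ∑ i ∈ (Finset.univ.erase 0).erase k, max (w i - c i) 0 := by
                omega
              have hex : ∃ k', k' ∈ (Finset.univ.erase (0:Fin (n+1))).erase k
                  ∧ 0 < max (w k' - c k') 0 := by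
                by_contra hcc
                push_neg at hcc
                have : ∑ i ∈ (Finset.univ.erase (0:Fin (n+1))).erase k,
                    max (w i - c i) 0 ≤ 0 :=
                  Finset.sum_nonpos (fun i hi => hcc i hi)
                omega
              obtain ⟨k', hk'mem, hk'pos⟩ := hex
              have hk'k : k' ≠ k := (Finset.mem_erase.mp hk'mem).1
              have hk'0 : k' ≠ 0 := (Finset.mem_erase.mp (Finset.mem_erase.mp hk'mem).2).1
              have hwck' : c k' < w k' := by
                by_contra hcc
                push_neg at hcc
                rw [max_eq_right (by omega)] at hk'pos
                omega
              have hpairmin := sum_erase_pair (fun i => min (w i) (c i)) hk'0 hk0 hk'k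
              have hrestnn : (0:ℤ) ≤ ∑ t ∈ ((Finset.univ.erase 0).erase k').erase k,
                  min (w t) (c t) := by
                apply Finset.sum_nonneg
                intro t _
                have := hwS.1 t; have := hcS.1 t
                omega
              rcases eq_or_ne k' j0 with rfl | hk'j0
              · -- k' = j0 : min there is q
                have hminj0 : min (w k') (c k') = q := by rw [hcj0]; omega
                have hmink : min (w k) (c k) = c k := by omega
                omega
              · have hgk' := hg'min k' hk'0 hk'j0
                have hminj0 : g' ≤ min (w k') (c k') := by omega
                have hmink : min (w k) (c k) = c k := by omega
                omega
          · push_neg at hk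
            have hsplitθ := Finset.add_sum_erase _ (fun i => max (w i - c i) 0)
              (show j0 ∈ Finset.univ.erase (0:Fin (n+1)) by simp [hj00])
            have hzero : ∑ i ∈ (Finset.univ.erase 0).erase j0, max (w i - c i) 0 = 0 := by
              apply Finset.sum_eq_zero
              intro i hi
              simp only [Finset.mem_erase] at hi
              have := hk i hi.2.1 hi.1
              simp; omega
            have hθj0 : max (w j0 - c j0) 0 ≤ e := by
              rw [hcj0]
              exact max_le (by omega) (by omega)
            omega
        omega
    -- ===== equality lemma =====
    have eqlem : ∀ M : ℤ, g' ≤ M → M ≤ q + g' - 1 →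
        ∀ w ∈ simplex n ℓ, ℓ - w 0 = e + M + 1 →
        ¬ sdist c w ≤ e → ¬ sdist a w ≤ e →
        (∀ k, k ≠ 0 → k ≠ j0 → c k < M → ¬ sdist (cwt n ℓ (2*e+1+c k) k) w ≤ e) →
        ∃ k, k ≠ 0 ∧ k ≠ j0 ∧ c k = M ∧ w k = e+M+1 ∧ ∀ i, i ≠ 0 → i ≠ k → w i = 0 := by
      intro M hMg hMle w hwS hwt hnc hna hnproc
      have hq1 : 1 ≤ q := by omega
      -- w j0 ≤ e + q
      have hwj0 : w j0 ≤ e + q := by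
        rw [haeq, sdist_cwt_left T j0 hj00 hwS] at hna
        push_neg at hna
        rw [max_eq_right (by omega)] at hna
        have := le_max_left (T - w j0) (0:ℤ)
        have := le_max_right (T - w j0) (0:ℤ)
        rcases le_total (T - w j0) 0 with h | h
        · rw [max_eq_right h] at hna; omega
        · rw [max_eq_left h] at hna; omega
      -- processed coordinates are capped
      have hcap : ∀ k, k ≠ 0 → k ≠ j0 → c k < M → w k ≤ e + c k := by
        intro k hk0 hkj0 hckM
        have h := hnproc k hk0 hkj0 hckM
        rw [sdist_cwt_left _ _ hk0 hwS] at h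
        push_neg at h
        have hck0 : 0 ≤ c k := hcS.1 k
        have hgk := hg'min k hk0 hkj0
        rw [max_eq_right (by omega)] at h
        rcases le_total (2*e+1+c k - w k) 0 with hh | hh
        · rw [max_eq_right hh] at h; omega
        · rw [max_eq_left hh] at h; omega
      -- excess sum ≥ e+1
      have hexc : e + 1 ≤ ∑ i ∈ Finset.univ.erase 0, max (w i - c i) 0 := by
        have h1 : ¬ sdist w c ≤ e := by rw [sdist_symm hwS hcS]; exact hnc
        rw [sdist_split0] at h1
        rw [max_eq_right (by omega)] at h1
        omega
      have hmins := tail_min_split (c' := c) hwS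
      have hminle : ∑ i ∈ Finset.univ.erase 0, min (w i) (c i) ≤ M := by omega
      have hminnn : ∀ j ∈ Finset.univ.erase (0:Fin (n+1)), (0:ℤ) ≤ min (w j) (c j) := by
        intro j _
        have := hwS.1 j; have := hcS.1 j
        simp; omega
      -- there is k ≠ 0, j0 with c k < w k
      have hk : ∃ k, k ≠ 0 ∧ k ≠ j0 ∧ c k < w k := by
        by_contra hcc
        push_neg at hcc
        have hsplitθ := Finset.add_sum_erase _ (fun i => max (w i - c i) 0)
          (show j0 ∈ Finset.univ.erase (0:Fin (n+1)) by simp [hj00])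
        have hzero : ∑ i ∈ (Finset.univ.erase 0).erase j0, max (w i - c i) 0 = 0 := by
          apply Finset.sum_eq_zero
          intro i hi
          simp only [Finset.mem_erase] at hi
          have := hcc i hi.2.1 hi.1
          omega
        have hθj0 : max (w j0 - c j0) 0 ≤ e := by
          rw [hcj0]
          exact max_le (by omega) (by omega)
        omega
      obtain ⟨k, hk0, hkj0, hck⟩ := hk
      have hkE : k ∈ Finset.univ.erase (0:Fin (n+1)) := by simp [hk0]
      have hgk := hg'min k hk0 hkj0
      have hckM : c k = M := by
        rcases lt_trichotomy (c k) M with hlt | heq | hgt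
        · -- c k < M : capped, need a second excess coordinate, both impossible
          exfalso
          have hwk := hcap k hk0 hkj0 hlt
          have hsplitθ := Finset.add_sum_erase _ (fun i => max (w i - c i) 0) hkE
          have hθk : max (w k - c k) 0 ≤ e := max_le (by omega) (by omega)
          have hex : ∃ k', k' ∈ (Finset.univ.erase (0:Fin (n+1))).erase k
              ∧ 0 < max (w k' - c k') 0 := by
            by_contra hcc
            push_neg at hcc
            have : ∑ i ∈ (Finset.univ.erase (0:Fin (n+1))).erase k,
                max (w i - c i) 0 ≤ 0 :=
              Finset.sum_nonpos (fun i hi => hcc i hi)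
            omega
          obtain ⟨k', hk'mem, hk'pos⟩ := hex
          have hk'k : k' ≠ k := (Finset.mem_erase.mp hk'mem).1
          have hk'0 : k' ≠ 0 := (Finset.mem_erase.mp (Finset.mem_erase.mp hk'mem).2).1
          have hwck' : c k' < w k' := by
            by_contra hcc
            push_neg at hcc
            rw [max_eq_right (by omega)] at hk'pos
            omega
          have hpairmin := sum_erase_pair (fun i => min (w i) (c i)) hk'0 hk0 hk'k
          have hrestnn : (0:ℤ) ≤ ∑ t ∈ ((Finset.univ.erase 0).erase k').erase k,
              min (w t) (c t) := by
            apply Finset.sum_nonneg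
            intro t _
            have := hwS.1 t; have := hcS.1 t
            omega
          have hmink : min (w k) (c k) = c k := by omega
          rcases eq_or_ne k' j0 with rfl | hk'j0
          · have hminj0 : min (w k') (c k') = q := by rw [hcj0]; omega
            omega
          · have hgk' := hg'min k' hk'0 hk'j0
            have hminj0 : g' ≤ min (w k') (c k') := by omega
            omega
        · exact heq
        · -- c k > M : min sum already too big
          exfalso
          have hle := Finset.single_le_sum hminnn hkE
          have : min (w k) (c k) = c k := by omega
          omega
      -- no other excess coordinate
      have huniq : ∀ i, i ∈ (Finset.univ.erase (0:Fin (n+1))).erase k →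
          max (w i - c i) 0 = 0 := by
        intro i himem
        have hik : i ≠ k := (Finset.mem_erase.mp himem).1
        have hi0 : i ≠ 0 := (Finset.mem_erase.mp (Finset.mem_erase.mp himem).2).1
        by_contra hcc
        have hipos : 0 < max (w i - c i) 0 := by
          have := le_max_right (w i - c i) (0:ℤ)
          omega
        have hwci : c i < w i := by
          by_contra hc2
          push_neg at hc2
          rw [max_eq_right (by omega)] at hipos
          omega
        have hpairmin := sum_erase_pair (fun t => min (w t) (c t)) hi0 hk0 hik
        have hrestnn : (0:ℤ) ≤ ∑ t ∈ ((Finset.univ.erase 0).erase i).erase k,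
            min (w t) (c t) := by
          apply Finset.sum_nonneg
          intro t _
          have := hwS.1 t; have := hcS.1 t
          omega
        have hmink : min (w k) (c k) = c k := by omega
        rcases eq_or_ne i j0 with rfl | hij0
        · have hminj0 : min (w i) (c i) = q := by rw [hcj0]; omega
          omega
        · have hgi := hg'min i hi0 hij0
          have hminj0 : g' ≤ min (w i) (c i) := by omega
          omega
      -- θ concentrated at k, and min-parts vanish off k
      have hsplitθ := Finset.add_sum_erase _ (fun i => max (w i - c i) 0) hkE
      have hzeroθ : ∑ i ∈ (Finset.univ.erase 0).erase k, max (w i - c i) 0 = 0 :=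
        Finset.sum_eq_zero huniq
      have hθk : e + 1 ≤ max (w k - c k) 0 := by omega
      have hwk : e + M + 1 ≤ w k := by
        have := le_max_left (w k - c k) (0:ℤ)
        rcases le_total (w k - c k) 0 with h | h
        · rw [max_eq_right h] at hθk; omega
        · rw [max_eq_left h] at hθk; omega
      have hsplitmin := Finset.add_sum_erase _ (fun i => min (w i) (c i)) hkE
      have hmink : min (w k) (c k) = M := by omega
      have hminrest : ∑ i ∈ (Finset.univ.erase 0).erase k, min (w i) (c i) ≤ 0 := by
        omega
      have hwzero : ∀ i, i ≠ 0 → i ≠ k → w i = 0 := by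
        intro i hi0 hik
        have himem : i ∈ (Finset.univ.erase (0:Fin (n+1))).erase k := by
          simp [Finset.mem_erase, hi0, hik]
        have h1 : min (w i) (c i) ≤ 0 := by
          have hnn : ∀ t ∈ (Finset.univ.erase (0:Fin (n+1))).erase k,
              (0:ℤ) ≤ min (w t) (c t) := by
            intro t _
            have := hwS.1 t; have := hcS.1 t
            omega
          have h2 := Finset.single_le_sum hnn himem
          omega
        have hci : 1 ≤ c i := by
          rcases eq_or_ne i j0 with rfl | hij0
          · omega
          · have := hg'min i hi0 hij0; omega
        have := hwS.1 i
        omega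
      -- w k = e + M + 1 exactly
      have hwkeq : w k = e + M + 1 := by
        have h1 := sum_tail hwS
        rw [← Finset.add_sum_erase _ w hkE] at h1
        have h2 : ∑ i ∈ (Finset.univ.erase 0).erase k, w i = 0 := by
          apply Finset.sum_eq_zero
          intro i hi
          simp only [Finset.mem_erase] at hi
          exact hwzero i hi.2.1 hi.1
        omega
      exact ⟨k, hk0, hkj0, hckM, hwkeq, hwzero⟩
    -- ===== pure corner codewords by strong induction =====
    have pureInd : ∀ m : ℕ, ∀ k, k ≠ 0 → k ≠ j0 → c k ≤ q + g' - 1 → c k = (m:ℤ) →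
        cwt n ℓ (2*e+1+c k) k ∈ C := by
      intro m
      induction m using Nat.strong_induction_on with
      | _ m ih =>
      intro k hk0 hkj0 hkle hckm
      have hgk : g' ≤ c k := hg'min k hk0 hkj0
      have hq1 : 1 ≤ q := by omega
      have hck0 : 0 ≤ c k := hcS.1 k
      have hprior : ∀ k', k' ≠ 0 → k' ≠ j0 → c k' < c k → cwt n ℓ (2*e+1+c k') k' ∈ C := by
        intro k' h0 hj hlt
        have h1 : 0 ≤ c k' := hcS.1 k'
        have h2 : (c k').toNat < m := by omega
        exact ih (c k').toNat h2 k' h0 hj (by omega) (Int.toNat_of_nonneg h1).symm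
      have hCkS : cwt n ℓ (e+1+c k) k ∈ simplex n ℓ := cwt_mem _ _ hk0 (by omega) (by omega)
      have hCkt : ℓ - (cwt n ℓ (e+1+c k) k) 0 = e+1+c k := by unfold cwt; simp
      have hCkk : (cwt n ℓ (e+1+c k) k) k = e+1+c k := by
        unfold cwt; rw [if_neg hk0, if_pos rfl]
      have hCkj0 : (cwt n ℓ (e+1+c k) k) j0 = 0 := by
        unfold cwt; rw [if_neg hj00, if_neg (fun h => hkj0 h.symm)]
      have hncc : ¬ sdist c (cwt n ℓ (e+1+c k) k) ≤ e := by
        intro h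
        have h1 : sdist (cwt n ℓ (e+1+c k) k) c ≤ e := by
          rw [sdist_symm hCkS hcS]; exact h
        rw [sdist_cwt_left _ _ hk0 hcS] at h1
        omega
      obtain ⟨x, hxC, hxcov⟩ := exists_cov hPC hCkS
      have hxS := hsub hxC
      have hxc : x ≠ c := by rintro rfl; exact hncc hxcov
      have hxa : x ≠ a := by
        rintro rfl
        rw [haeq, sdist_cwt_left T j0 hj00 hCkS, hCkj0, hCkt] at hxcov
        omega
      have hxproc : ∀ k', k' ≠ 0 → k' ≠ j0 → c k' < c k →
          x ≠ cwt n ℓ (2*e+1+c k') k' := by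
        intro k' h0 hj hlt heq
        have hk'k : k' ≠ k := by intro h; rw [h] at hlt; omega
        have hCkk' : (cwt n ℓ (e+1+c k) k) k' = 0 := by
          unfold cwt; rw [if_neg h0, if_neg hk'k]
        rw [heq, sdist_cwt_left _ _ h0 hCkS, hCkk', hCkt] at hxcov
        have h1 : 0 ≤ c k' := hcS.1 k'
        omega
      have hxub : ℓ - x 0 ≤ 2*e+1+c k := by
        have h1 := tail_sdist_ge hxS hCkS
        omega
      have hxge : T ≤ ℓ - x 0 := tailT x hxC hxc
      have hxT : ℓ - x 0 = 2*e+1+c k := by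
        by_contra hne
        have hxle : ℓ - x 0 ≤ 2*e + c k := by omega
        obtain ⟨w', hw1, hw2, hw3⟩ := select_between
          (fun t => if t = 0 then x 0 + e else 0)
          (fun t => if t = 0 then x 0 + e else x t)
          (by intro i; rcases eq_or_ne i 0 with rfl | h
              · simp
              · simp [h]; exact hxS.1 i)
          ℓ
          (by rw [Finset.sum_ite_eq' Finset.univ (0 : Fin (n+1)) (fun _ => x 0 + e)]
              simp
              have := tail_nonneg hxS
              omega)
          (by rw [← Finset.add_sum_erase _ _ (Finset.mem_univ (0 : Fin (n+1)))]
              simp only [if_pos rfl]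
              have heq2 : ∑ i ∈ Finset.univ.erase 0, (if i = 0 then x 0 + e else x i)
                  = ∑ i ∈ Finset.univ.erase 0, x i := by
                apply Finset.sum_congr rfl
                intro i hi
                rw [if_neg (Finset.mem_erase.mp hi).1]
              rw [heq2, sum_tail hxS]
              omega)
        have hw'0 : w' 0 = x 0 + e := by
          have h1 := hw1 0; have h2 := hw2 0
          simp at h1 h2; omega
        have hw'S : w' ∈ simplex n ℓ := by
          constructor
          · intro i
            have h1 := hw1 i
            rcases eq_or_ne i 0 with rfl | h
            · simp at h1; have := hxS.1 0; omega
            · simp [h] at h1; omega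
          · exact hw3
        have hw'dom : ∀ i, i ≠ 0 → w' i ≤ x i := by
          intro i h; have := hw2 i; simp [h] at this; exact this
        have hcovxw' : sdist x w' ≤ e := by
          rw [sdist_of_tail_dom hxS hw'S hw'dom, hw'0]
          omega
        obtain ⟨y, hyC, hycov, hyk⟩ := covlem (c k) (by omega) hprior w' hw'S
          (by rw [hw'0]; omega)
        have hxy := cov_unique hPC hw'S hxC hyC hcovxw' hycov
        rcases hyk with h | h | ⟨k', h0, hj, hlt, h⟩ <;> rw [h] at hxy
        · exact hxc hxy
        · exact hxa hxy
        · exact hxproc k' h0 hj hlt hxy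
      have hxbox : ∀ i, i ≠ 0 → (cwt n ℓ (e+1+c k) k) i ≤ x i := by
        apply box_of_cov hxS hCkS
        omega
      have hxk : e+1+c k ≤ x k := by
        have := hxbox k hk0
        rw [hCkk] at this
        exact this
      have hxpure : ∀ i, i ≠ 0 → i ≠ k → x i = 0 := by
        intro i hi0 hik
        by_contra hne
        have hxi : 1 ≤ x i := by have := hxS.1 i; omega
        set w'' : Fin (n+1) → ℤ := fun t => if t = 0 then ℓ - (e + c k + 1)
          else if t = k then e + c k else if t = i then 1 else 0 with hw''def
        have hw''0 : w'' 0 = ℓ - (e + c k + 1) := by simp [hw''def]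
        have hw''k : w'' k = e + c k := by simp [hw''def, hk0]
        have hw''i : w'' i = 1 := by simp [hw''def, hi0, hik]
        have hw''other : ∀ t, t ≠ 0 → t ≠ k → t ≠ i → w'' t = 0 := by
          intro t h1 h2 h3; simp [hw''def, h1, h2, h3]
        have hw''S : w'' ∈ simplex n ℓ := by
          constructor
          · intro t
            rcases eq_or_ne t 0 with rfl | h1
            · rw [hw''0]; omega
            rcases eq_or_ne t k with rfl | h2
            · rw [hw''k]; omega
            rcases eq_or_ne t i with rfl | h3
            · rw [hw''i]; omega
            · rw [hw''other t h1 h2 h3]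
          · rw [sum_of_support3 w'' 0 k i (Ne.symm hk0) (Ne.symm hi0) (Ne.symm hik) hw''other]
            rw [hw''0, hw''k, hw''i]; ring
        have hcovxw'' : sdist x w'' ≤ e := by
          rw [sdist_of_tail_dom hxS hw''S (by
            intro t ht0
            rcases eq_or_ne t k with rfl | h2
            · rw [hw''k]; omega
            rcases eq_or_ne t i with rfl | h3
            · rw [hw''i]; omega
            · rw [hw''other t ht0 h2 h3]; exact hxS.1 t), hw''0]
          omega
        have hnc'' : ¬ sdist c w'' ≤ e :=
          fun h => hxc (cov_unique hPC hw''S hxC hcC hcovxw'' h)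
        have hna'' : ¬ sdist a w'' ≤ e :=
          fun h => hxa (cov_unique hPC hw''S hxC haC hcovxw'' h)
        have hnp'' : ∀ k', k' ≠ 0 → k' ≠ j0 → c k' < c k →
            ¬ sdist (cwt n ℓ (2*e+1+c k') k') w'' ≤ e :=
          fun k' h0 hj hlt h => hxproc k' h0 hj hlt
            (cov_unique hPC hw''S hxC (hprior k' h0 hj hlt) hcovxw'' h)
        obtain ⟨k'', h1, h2, h3, h4, h5⟩ := eqlem (c k) hgk (by omega) w'' hw''S
          (by rw [hw''0]; ring) hnc'' hna'' hnp''
        rcases eq_or_ne k'' k with rfl | hkk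
        · have := h5 i hi0 hik
          rw [hw''i] at this
          omega
        · have := h5 k hk0 (fun h => hkk h.symm)
          rw [hw''k] at this
          omega
      have hxeq : x = cwt n ℓ (2*e+1+c k) k := by
        funext t
        unfold cwt
        rcases eq_or_ne t 0 with rfl | h1
        · simp; omega
        rcases eq_or_ne t k with rfl | h2
        · rw [if_neg h1, if_pos rfl]
          have hsum := sum_tail hxS
          rw [← Finset.add_sum_erase _ x (show t ∈ Finset.univ.erase 0 by simp [h1])] at hsum
          have hz : ∑ i ∈ (Finset.univ.erase 0).erase t, x i = 0 := by
            apply Finset.sum_eq_zero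
            intro i hi
            simp only [Finset.mem_erase] at hi
            exact hxpure i hi.2.1 hi.1
          omega
        · rw [if_neg h1, if_neg h2]; exact hxpure t h1 h2
      rw [← hxeq]; exact hxC
    -- ===== full processed set =====
    have hprocAll : ∀ k, k ≠ 0 → k ≠ j0 → c k < q + g' → cwt n ℓ (2*e+1+c k) k ∈ C := by
      intro k h0 hj hlt
      have h1 : 0 ≤ c k := hcS.1 k
      exact pureInd (c k).toNat k h0 hj (by omega) (Int.toNat_of_nonneg h1).symm
    -- ===== final point W' and the contradiction =====
    have hW'0 : pt3 n (ℓ - (e+q+g'+1)) (e+q) (g'+1) j0 k₁ 0 = ℓ - (e+q+g'+1) := pt3_0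
    have hW'j0 : pt3 n (ℓ - (e+q+g'+1)) (e+q) (g'+1) j0 k₁ j0 = e + q := pt3_j hj00
    have hW'k₁ : pt3 n (ℓ - (e+q+g'+1)) (e+q) (g'+1) j0 k₁ k₁ = g' + 1 := pt3_k hk₁0 hk₁j0
    have hW'other : ∀ t, t ≠ 0 → t ≠ j0 → t ≠ k₁ →
        pt3 n (ℓ - (e+q+g'+1)) (e+q) (g'+1) j0 k₁ t = 0 :=
      fun t h1 h2 h3 => pt3_other h1 h2 h3
    set W' := pt3 n (ℓ - (e+q+g'+1)) (e+q) (g'+1) j0 k₁ with hW'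
    have hW'S : W' ∈ simplex n ℓ := by
      constructor
      · intro t
        rcases eq_or_ne t 0 with rfl | h1
        · rw [hW'0]; omega
        rcases eq_or_ne t j0 with rfl | h2
        · rw [hW'j0]; omega
        rcases eq_or_ne t k₁ with rfl | h3
        · rw [hW'k₁]; omega
        · rw [hW'other t h1 h2 h3]
      · rw [sum_of_support3 W' 0 j0 k₁ (Ne.symm hj00) (Ne.symm hk₁0) (Ne.symm hk₁j0) hW'other]
        rw [hW'0, hW'j0, hW'k₁]; ring
    have hW't : ℓ - W' 0 = e+q+g'+1 := by rw [hW'0]; ring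
    have hncW : ¬ sdist c W' ≤ e := by
      intro h
      have h1 : sdist W' c ≤ e := by rw [sdist_symm hW'S hcS]; exact h
      unfold sdist at h1
      rw [sum_of_support3 _ 0 j0 k₁ (Ne.symm hj00) (Ne.symm hk₁0) (Ne.symm hk₁j0) (by
        intro t h1 h2 h3
        rw [hW'other t h1 h2 h3]
        have := hcS.1 t
        omega)] at h1
      rw [hW'0, hW'j0, hW'k₁, hcj0] at h1
      omega
    have hnaW : ¬ sdist a W' ≤ e := by
      rw [haeq, sdist_cwt_left T j0 hj00 hW'S, hW't, hW'j0]
      omega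
    have hnpW : ∀ k, k ≠ 0 → k ≠ j0 → c k < q + g' →
        ¬ sdist (cwt n ℓ (2*e+1+c k) k) W' ≤ e := by
      intro k h0 hj hlt
      rw [sdist_cwt_left _ _ h0 hW'S, hW't]
      have hgk := hg'min k h0 hj
      rcases eq_or_ne k k₁ with rfl | hkk
      · rw [hW'k₁]; omega
      · rw [hW'other k h0 hj hkk]; omega
    obtain ⟨x₃, hx₃C, hx₃cov⟩ := exists_cov hPC hW'S
    have hx₃S := hsub hx₃C
    have hx₃c : x₃ ≠ c := by rintro rfl; exact hncW hx₃cov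
    have hx₃a : x₃ ≠ a := by rintro rfl; exact hnaW hx₃cov
    have hx₃p : ∀ k, k ≠ 0 → k ≠ j0 → c k < q + g' → x₃ ≠ cwt n ℓ (2*e+1+c k) k := by
      intro k h0 hj hlt heq
      exact hnpW k h0 hj hlt (by rw [← heq]; exact hx₃cov)
    have hx₃ub : ℓ - x₃ 0 ≤ (e+q+g'+1) + e := by
      have h1 := tail_sdist_ge hx₃S hW'S
      omega
    have hx₃ge : T ≤ ℓ - x₃ 0 := tailT x₃ hx₃C hx₃c
    have hx₃T : ℓ - x₃ 0 = (e+q+g'+1) + e := by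
      by_contra hne
      have hxle : ℓ - x₃ 0 ≤ 2*e + (q + g') := by omega
      obtain ⟨w', hw1, hw2, hw3⟩ := select_between
        (fun t => if t = 0 then x₃ 0 + e else 0)
        (fun t => if t = 0 then x₃ 0 + e else x₃ t)
        (by intro i; rcases eq_or_ne i 0 with rfl | h
            · simp
            · simp [h]; exact hx₃S.1 i)
        ℓ
        (by rw [Finset.sum_ite_eq' Finset.univ (0 : Fin (n+1)) (fun _ => x₃ 0 + e)]
            simp
            have := tail_nonneg hx₃S
            omega)
        (by rw [← Finset.add_sum_erase _ _ (Finset.mem_univ (0 : Fin (n+1)))]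
            simp only [if_pos rfl]
            have heq2 : ∑ i ∈ Finset.univ.erase 0, (if i = 0 then x₃ 0 + e else x₃ i)
                = ∑ i ∈ Finset.univ.erase 0, x₃ i := by
              apply Finset.sum_congr rfl
              intro i hi
              rw [if_neg (Finset.mem_erase.mp hi).1]
            rw [heq2, sum_tail hx₃S]
            omega)
      have hw'0 : w' 0 = x₃ 0 + e := by
        have h1 := hw1 0; have h2 := hw2 0
        simp at h1 h2; omega
      have hw'S : w' ∈ simplex n ℓ := by
        constructor
        · intro i
          have h1 := hw1 i
          rcases eq_or_ne i 0 with rfl | h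
          · simp at h1; have := hx₃S.1 0; omega
          · simp [h] at h1; omega
        · exact hw3
      have hw'dom : ∀ i, i ≠ 0 → w' i ≤ x₃ i := by
        intro i h; have := hw2 i; simp [h] at this; exact this
      have hcovxw' : sdist x₃ w' ≤ e := by
        rw [sdist_of_tail_dom hx₃S hw'S hw'dom, hw'0]
        omega
      obtain ⟨y, hyC, hycov, hyk⟩ := covlem (q + g') le_rfl hprocAll w' hw'S
        (by rw [hw'0]; omega)
      have hxy := cov_unique hPC hw'S hx₃C hyC hcovxw' hycov
      rcases hyk with h | h | ⟨k', h0, hj, hlt, h⟩ <;> rw [h] at hxy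
      · exact hx₃c hxy
      · exact hx₃a hxy
      · exact hx₃p k' h0 hj hlt hxy
    have hx₃box : ∀ i, i ≠ 0 → W' i ≤ x₃ i := by
      apply box_of_cov hx₃S hW'S
      omega
    have hx₃j0 : e + q ≤ x₃ j0 := by
      have := hx₃box j0 hj00
      rw [hW'j0] at this
      exact this
    have hsep := separation hPC he haC hx₃C (fun h => hx₃a h.symm)
    have hub : sdist a x₃ ≤ g' + e + 1 := by
      rw [haeq, sdist_cwt_left T j0 hj00 hx₃S]
      omega
    omega
end

section
/- Let e ≥ 1 and write ℓ = q(2e+1) + r with q ≥ 1 and 0 ≤ r < 2e+1. Then there are exactly M = min{r + 1, 2e + 1 − r} > 0 nontrivial e-perfect codes in the discrete 1-simplex Δ_ℓ^1, and each of them has q + 1 = ⌈(ℓ+1)/(2e+1)⌉ codewords. -/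
/-! ### Integer-side development -/

/-- perfect code on the integer interval `[0,ℓ]` -/
def zPC (e ℓ : ℤ) (S : Set ℤ) : Prop :=
  S ⊆ Set.Icc 0 ℓ ∧ ∀ t ∈ Set.Icc 0 ℓ, ∃! s, s ∈ S ∧ |s - t| ≤ e

def zCode (e ℓ a : ℤ) : Set ℤ := {s | 0 ≤ s ∧ s ≤ ℓ ∧ (2*e+1) ∣ (s - a)}

lemma zgap {e ℓ : ℤ} {S : Set ℤ} (h : zPC e ℓ S) (he : 1 ≤ e)
    {s s' : ℤ} (hs : s ∈ S) (hs' : s' ∈ S) (hd : |s - s'| ≤ 2*e) : s = s' := by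
  obtain ⟨hsub, huniq⟩ := h
  obtain ⟨h0s, hsl⟩ := hsub hs
  obtain ⟨h0s', hsl'⟩ := hsub hs'
  obtain ⟨hd1, hd2⟩ := abs_le.mp hd
  set t := max 0 (max s s' - e) with ht
  obtain ⟨u, _, hu⟩ := huniq t ⟨by omega, by omega⟩
  have h1 : s = u := hu s ⟨hs, abs_le.mpr ⟨by omega, by omega⟩⟩
  have h2 : s' = u := hu s' ⟨hs', abs_le.mpr ⟨by omega, by omega⟩⟩
  omega

lemma zup {e ℓ : ℤ} {S : Set ℤ} (h : zPC e ℓ S) (he : 1 ≤ e)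
    {s : ℤ} (hs : s ∈ S) (hsl : s + e < ℓ) : s + (2*e+1) ∈ S := by
  obtain ⟨h0s, hsl'⟩ := h.1 hs
  obtain ⟨u, ⟨huS, hud⟩, hu⟩ := h.2 (s + e + 1) ⟨by omega, by omega⟩
  obtain ⟨hd1, hd2⟩ := abs_le.mp hud
  by_cases hc : u = s + (2*e+1)
  · rwa [← hc]
  · exfalso
    have : s = u := zgap h he hs huS (abs_le.mpr ⟨by omega, by omega⟩)
    omega

lemma zdown {e ℓ : ℤ} {S : Set ℤ} (h : zPC e ℓ S) (he : 1 ≤ e)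
    {s : ℤ} (hs : s ∈ S) (hsl : e < s) : s - (2*e+1) ∈ S := by
  obtain ⟨h0s, hsl'⟩ := h.1 hs
  obtain ⟨u, ⟨huS, hud⟩, hu⟩ := h.2 (s - e - 1) ⟨by omega, by omega⟩
  obtain ⟨hd1, hd2⟩ := abs_le.mp hud
  by_cases hc : u = s - (2*e+1)
  · rwa [← hc]
  · exfalso
    have : s = u := zgap h he hs huS (abs_le.mpr ⟨by omega, by omega⟩)
    omega

lemma zdvd {e ℓ : ℤ} {S : Set ℤ} (h : zPC e ℓ S) (he : 1 ≤ e)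
    {a : ℤ} (ha : a ∈ S) (hae : a ≤ e) : ∀ s ∈ S, (2*e+1) ∣ (s - a) := by
  obtain ⟨ha0, hal⟩ := h.1 ha
  have key : ∀ n : ℕ, ∀ s ∈ S, s ≤ (n : ℤ) → (2*e+1) ∣ (s - a) := by
    intro n
    induction n with
    | zero =>
      intro s hs hsn
      obtain ⟨h0, _⟩ := h.1 hs
      have : s = a := zgap h he hs ha (abs_le.mpr ⟨by omega, by omega⟩)
      simp [this]
    | succ n ih =>
      intro s hs hsn
      obtain ⟨h0, _⟩ := h.1 hs
      by_cases hse : s ≤ e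
      · have : s = a := zgap h he hs ha (abs_le.mpr ⟨by omega, by omega⟩)
        simp [this]
      · have hdn : s - (2*e+1) ∈ S := zdown h he hs (by omega)
        obtain ⟨c, hc⟩ := ih _ hdn (by push_cast at hsn ⊢; omega)
        exact ⟨c + 1, by linear_combination hc⟩
  intro s hs
  obtain ⟨h0, _⟩ := h.1 hs
  exact key s.toNat s hs (by omega)

lemma zupchain {e ℓ : ℤ} {S : Set ℤ} (h : zPC e ℓ S) (he : 1 ≤ e)
    {a : ℤ} (ha : a ∈ S) : ∀ k : ℕ, a + (k : ℤ) * (2*e+1) ≤ ℓ → a + (k : ℤ) * (2*e+1) ∈ S := by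
  intro k
  induction k with
  | zero => simpa using fun _ => ha
  | succ k ih =>
    intro hk
    push_cast at hk ⊢
    have hstep : ((k : ℤ) + 1) * (2*e+1) = (k : ℤ) * (2*e+1) + (2*e+1) := by ring
    rw [hstep] at hk
    have h1 : a + (k : ℤ) * (2*e+1) ∈ S := ih (by linarith)
    have h2 := zup h he h1 (by linarith)
    have : a + ((k : ℤ) + 1) * (2*e+1) = a + (k : ℤ) * (2*e+1) + (2*e+1) := by ring
    rw [this]
    exact h2

lemma zPC_char {e q r ℓ : ℤ} (he : 1 ≤ e) (hq : 1 ≤ q) (hr0 : 0 ≤ r) (hr : r < 2 * e + 1)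
    (hℓ : ℓ = q * (2 * e + 1) + r) (S : Set ℤ) :
    zPC e ℓ S ↔ ∃ a, (max 0 (r - e) ≤ a ∧ a ≤ min r e) ∧ S = zCode e ℓ a := by
  have hm : (0:ℤ) < 2*e+1 := by omega
  have hq1 : 1 * (2*e+1) ≤ q * (2*e+1) := mul_le_mul_of_nonneg_right hq (by omega)
  have hℓ0 : 0 ≤ ℓ := by linarith
  constructor
  · intro h
    obtain ⟨a, ⟨haS, had⟩, hauniq⟩ := h.2 0 ⟨le_refl _, hℓ0⟩
    obtain ⟨ha0, hal⟩ := h.1 haS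
    have hae : a ≤ e := by obtain ⟨h1, h2⟩ := abs_le.mp had; omega
    -- the codeword covering ℓ
    obtain ⟨u, ⟨huS, hud⟩, _⟩ := h.2 ℓ ⟨hℓ0, le_refl _⟩
    obtain ⟨hu0, hul⟩ := h.1 huS
    obtain ⟨k, hk⟩ := zdvd h he haS hae u huS
    obtain ⟨hud1, hud2⟩ := abs_le.mp hud
    -- show k = q : ℓ - u = (q - k)(2e+1) + (r - a) ∈ [0, e]
    have hkq : k = q := by
      by_contra hkq
      rcases lt_or_gt_of_ne hkq with hlt | hgt
      · have h3 : (2*e+1) * k ≤ (2*e+1) * (q - 1) :=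
          mul_le_mul_of_nonneg_left (by omega) (by omega)
        nlinarith
      · have h3 : (2*e+1) * (q + 1) ≤ (2*e+1) * k :=
          mul_le_mul_of_nonneg_left (by omega) (by omega)
        nlinarith
    rw [hkq] at hk
    have har1 : a ≤ r := by nlinarith
    have har2 : r - e ≤ a := by nlinarith
    refine ⟨a, ⟨by omega, by omega⟩, ?_⟩
    ext s
    simp only [zCode, Set.mem_setOf_eq]
    constructor
    · intro hs
      obtain ⟨h1, h2⟩ := h.1 hs
      exact ⟨h1, h2, zdvd h he haS hae s hs⟩
    · rintro ⟨h1, h2, j, hj⟩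
      have hj0 : 0 ≤ j := by
        by_contra hc
        push_neg at hc
        have : (2*e+1) * j ≤ (2*e+1) * (-1) :=
          mul_le_mul_of_nonneg_left (by omega) (by omega)
        nlinarith
      have hs : s = a + (j.toNat : ℤ) * (2*e+1) := by
        rw [Int.toNat_of_nonneg hj0]
        linear_combination hj
      rw [hs]
      exact zupchain h he haS j.toNat (hs ▸ h2)
  · rintro ⟨a, ⟨hlo, hhi⟩, rfl⟩
    have ha0 : 0 ≤ a := by omega
    have hae : a ≤ e := by omega
    have har : a ≤ r := by omega
    have hare : r - e ≤ a := by omega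
    constructor
    · intro s hs
      exact ⟨hs.1, hs.2.1⟩
    · rintro t ⟨ht0, htl⟩
      have hmod := Int.emod_nonneg (t - a + e) (by omega : (2*e+1) ≠ 0)
      have hmod2 := Int.emod_lt_of_pos (t - a + e) hm
      have hdm := Int.mul_ediv_add_emod (t - a + e) (2*e+1)
      set k := (t - a + e) / (2*e+1) with hkdef
      set ρ := (t - a + e) % (2*e+1) with hρ
      have hk0 : 0 ≤ k := Int.ediv_nonneg (by omega) (by omega)
      have hmk0 : 0 ≤ (2*e+1) * k := mul_nonneg (by omega) hk0
      have hkq : k ≤ q := by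
        by_contra hc
        push_neg at hc
        have h3 : (2*e+1) * (q + 1) ≤ (2*e+1) * k :=
          mul_le_mul_of_nonneg_left (by omega) (by omega)
        nlinarith
      have hmkq : (2*e+1) * k ≤ (2*e+1) * q := mul_le_mul_of_nonneg_left hkq (by omega)
      refine ⟨a + (2*e+1) * k, ⟨⟨by linarith, by nlinarith, ⟨k, by ring⟩⟩,
        abs_le.mpr ⟨by linarith, by linarith⟩⟩, ?_⟩
      rintro s ⟨⟨h1, h2, j, hj⟩, hd⟩
      obtain ⟨hd1, hd2⟩ := abs_le.mp hd
      have hdvd : (2*e+1) ∣ (s - (a + (2*e+1)*k)) := ⟨j - k, by linear_combination hj⟩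
      have habs : |s - (a + (2*e+1)*k)| < 2*e+1 :=
        abs_lt.mpr ⟨by linarith, by linarith⟩
      have := Int.eq_zero_of_abs_lt_dvd hdvd habs
      linarith

lemma zCode_eq_image {e q r ℓ : ℤ} (he : 1 ≤ e) (hq : 1 ≤ q) (hr0 : 0 ≤ r)
    (hr : r < 2 * e + 1) (hℓ : ℓ = q * (2 * e + 1) + r) {a : ℤ} (ha0 : 0 ≤ a) (har : a ≤ r) :
    zCode e ℓ a = (fun k => a + (2*e+1) * k) '' Set.Icc 0 q := by
  ext s
  simp only [zCode, Set.mem_setOf_eq, Set.mem_image, Set.mem_Icc]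
  constructor
  · rintro ⟨h1, h2, j, hj⟩
    refine ⟨j, ⟨?_, ?_⟩, by linarith⟩
    · by_contra hc
      push_neg at hc
      have : (2*e+1) * j ≤ (2*e+1) * (-1) :=
        mul_le_mul_of_nonneg_left (by omega) (by omega)
      nlinarith
    · by_contra hc
      push_neg at hc
      have : (2*e+1) * (q+1) ≤ (2*e+1) * j :=
        mul_le_mul_of_nonneg_left (by omega) (by omega)
      nlinarith
  · rintro ⟨j, ⟨hj0, hjq⟩, rfl⟩
    have h1 : 0 ≤ (2*e+1) * j := mul_nonneg (by omega) hj0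
    have h2 : (2*e+1) * j ≤ (2*e+1) * q := mul_le_mul_of_nonneg_left hjq (by omega)
    exact ⟨by linarith, by nlinarith, ⟨j, by ring⟩⟩

lemma zCode_ncard {e q r ℓ : ℤ} (he : 1 ≤ e) (hq : 1 ≤ q) (hr0 : 0 ≤ r)
    (hr : r < 2 * e + 1) (hℓ : ℓ = q * (2 * e + 1) + r) {a : ℤ} (ha0 : 0 ≤ a) (har : a ≤ r) :
    ((zCode e ℓ a).ncard : ℤ) = q + 1 := by
  rw [zCode_eq_image he hq hr0 hr hℓ ha0 har]
  have hinj : Function.Injective (fun k : ℤ => a + (2*e+1) * k) := by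
    intro x y hxy
    simp only at hxy
    have : (2*e+1) * x = (2*e+1) * y := by linarith
    exact mul_left_cancel₀ (by omega) this
  rw [Set.ncard_image_of_injective _ hinj]
  rw [← Finset.coe_Icc, Set.ncard_coe_finset, Int.card_Icc]
  omega

lemma zCode_self_mem {e q r ℓ : ℤ} (he : 1 ≤ e) (hq : 1 ≤ q) (hℓ : ℓ = q * (2 * e + 1) + r)
    (hr0 : 0 ≤ r) {a : ℤ} (ha0 : 0 ≤ a) (har : a ≤ r) :
    a ∈ zCode e ℓ a := by
  have hq1 : 1 * (2*e+1) ≤ q * (2*e+1) := mul_le_mul_of_nonneg_right hq (by omega)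
  exact ⟨ha0, by linarith, ⟨0, by ring⟩⟩

lemma zCode_inj {e q r ℓ : ℤ} (he : 1 ≤ e) (hq : 1 ≤ q) (hr0 : 0 ≤ r)
    (hr : r < 2 * e + 1) (hℓ : ℓ = q * (2 * e + 1) + r) :
    Set.InjOn (zCode e ℓ) (Set.Icc (max 0 (r - e)) (min r e)) := by
  intro a ha b hb hab
  simp only [Set.mem_Icc] at ha hb
  have hma : a ∈ zCode e ℓ b := by
    rw [← hab]
    exact zCode_self_mem he hq hℓ hr0 (by omega) (by omega)
  obtain ⟨-, -, j, hj⟩ := hma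
  have ha' : r - e ≤ a ∧ a ≤ e ∧ a ≤ r ∧ 0 ≤ a := by omega
  have hb' : r - e ≤ b ∧ b ≤ e ∧ b ≤ r ∧ 0 ≤ b := by omega
  have hj0 : j = 0 := by
    by_contra hc
    rcases lt_or_gt_of_ne hc with h | h
    · have : (2*e+1) * j ≤ (2*e+1) * (-1) :=
        mul_le_mul_of_nonneg_left (by omega) (by omega)
      nlinarith
    · have : (2*e+1) * 1 ≤ (2*e+1) * j :=
        mul_le_mul_of_nonneg_left (by omega) (by omega)
      nlinarith
  rw [hj0, mul_zero] at hj
  omega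

/-! ### Transfer to the simplex -/

def pmap (ℓ : ℤ) (t : ℤ) : Fin 2 → ℤ := ![t, ℓ - t]

lemma pmap_inj (ℓ : ℤ) : Function.Injective (pmap ℓ) := by
  intro s t h
  have := congrFun h 0
  simpa [pmap] using this

lemma pmap_mem_simplex {ℓ t : ℤ} : pmap ℓ t ∈ simplex 1 ℓ ↔ 0 ≤ t ∧ t ≤ ℓ := by
  simp only [simplex, Set.mem_setOf_eq, Fin.sum_univ_two, pmap]
  constructor
  · rintro ⟨h1, -⟩
    have h0 := h1 0
    have h2 := h1 1
    simp at h0 h2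
    omega
  · rintro ⟨h1, h2⟩
    refine ⟨fun i => ?_, by simp⟩
    fin_cases i <;> simp <;> omega

lemma eq_pmap {ℓ : ℤ} {x : Fin 2 → ℤ} (hx : x ∈ simplex 1 ℓ) : x = pmap ℓ (x 0) := by
  obtain ⟨-, hsum⟩ := hx
  rw [Fin.sum_univ_two] at hsum
  funext i
  fin_cases i <;> simp [pmap] <;> omega

lemma sdist_pmap {ℓ s t : ℤ} : sdist (pmap ℓ s) (pmap ℓ t) = |s - t| := by
  simp only [sdist, Fin.sum_univ_two, pmap]
  rcases abs_cases (s - t) with ⟨h1, h2⟩ | ⟨h1, h2⟩ <;> rw [h1] <;> simp <;> omega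

lemma isPC_iff {e ℓ : ℤ} (hℓ0 : 0 ≤ ℓ) (C : Set (Fin 2 → ℤ)) :
    IsPerfectCode 1 ℓ e C ↔ ∃ S, zPC e ℓ S ∧ C = pmap ℓ '' S := by
  constructor
  · intro h
    refine ⟨{t | pmap ℓ t ∈ C}, ⟨?_, ?_⟩, ?_⟩
    · intro t ht
      exact Set.mem_Icc.mpr (pmap_mem_simplex.mp (h.1 ht))
    · rintro t ⟨ht0, htl⟩
      obtain ⟨c, ⟨hcC, hcd⟩, hcu⟩ := h.2 (pmap ℓ t) (pmap_mem_simplex.mpr ⟨ht0, htl⟩)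
      have hc : c = pmap ℓ (c 0) := eq_pmap (h.1 hcC)
      refine ⟨c 0, ⟨by simp only [Set.mem_setOf_eq]; rw [← hc]; exact hcC, by rw [← sdist_pmap (ℓ := ℓ), ← hc]; exact hcd⟩, ?_⟩
      rintro s ⟨hsC, hsd⟩
      have : pmap ℓ s = c := hcu _ ⟨hsC, by rw [sdist_pmap]; exact hsd⟩
      rw [← this]
      simp [pmap]
    · ext x
      simp only [Set.mem_image, Set.mem_setOf_eq]
      constructor
      · intro hx
        exact ⟨x 0, by rw [← eq_pmap (h.1 hx)]; exact hx, (eq_pmap (h.1 hx)).symm⟩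
      · rintro ⟨t, ht, rfl⟩
        exact ht
  · rintro ⟨S, hS, rfl⟩
    constructor
    · rintro x ⟨t, ht, rfl⟩
      exact pmap_mem_simplex.mpr (Set.mem_Icc.mp (hS.1 ht))
    · intro w hw
      have hw' : w = pmap ℓ (w 0) := eq_pmap hw
      obtain ⟨hw0, hwl⟩ := pmap_mem_simplex.mp (hw' ▸ hw)
      obtain ⟨s, ⟨hsS, hsd⟩, hsu⟩ := hS.2 (w 0) ⟨hw0, hwl⟩
      refine ⟨pmap ℓ s, ⟨⟨s, hsS, rfl⟩, by rw [hw', sdist_pmap]; exact hsd⟩, ?_⟩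
      rintro c ⟨⟨t, htS, rfl⟩, hcd⟩
      rw [hw', sdist_pmap] at hcd
      rw [hsu t ⟨htS, hcd⟩]

theorem stmt_5 (e q r ℓ : ℤ) (he : 1 ≤ e) (hq : 1 ≤ q) (hr0 : 0 ≤ r) (hr : r < 2 * e + 1)
    (hℓ : ℓ = q * (2 * e + 1) + r) :
    0 < min (r + 1) (2 * e + 1 - r) ∧
    ({C : Set (Fin 2 → ℤ) | IsPerfectCode 1 ℓ e C ∧ C.Nontrivial}.ncard : ℤ)
      = min (r + 1) (2 * e + 1 - r) ∧
    (q + 1 : ℤ) = ⌈((ℓ : ℚ) + 1) / (2 * (e : ℚ) + 1)⌉ ∧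
    (∀ C : Set (Fin 2 → ℤ), IsPerfectCode 1 ℓ e C → C.Nontrivial →
      (C.ncard : ℤ) = q + 1) := by
  have hq1 : 1 * (2*e+1) ≤ q * (2*e+1) := mul_le_mul_of_nonneg_right hq (by omega)
  have hℓ0 : 0 ≤ ℓ := by linarith
  have hcard : ∀ C : Set (Fin 2 → ℤ), IsPerfectCode 1 ℓ e C → (C.ncard : ℤ) = q + 1 := by
    intro C hC
    obtain ⟨S, hS, rfl⟩ := (isPC_iff hℓ0 C).mp hC
    obtain ⟨a, ⟨hlo, hhi⟩, rfl⟩ := (zPC_char he hq hr0 hr hℓ S).mp hS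
    rw [Set.ncard_image_of_injective _ (pmap_inj ℓ)]
    exact zCode_ncard he hq hr0 hr hℓ (by omega) (by omega)
  have hnt : ∀ C : Set (Fin 2 → ℤ), IsPerfectCode 1 ℓ e C → C.Nontrivial := by
    intro C hC
    obtain ⟨S, hS, rfl⟩ := (isPC_iff hℓ0 C).mp hC
    obtain ⟨a, ⟨hlo, hhi⟩, rfl⟩ := (zPC_char he hq hr0 hr hℓ S).mp hS
    refine ⟨pmap ℓ a, ⟨a, zCode_self_mem he hq hℓ hr0 (by omega) (by omega), rfl⟩,
      pmap ℓ (a + (2*e+1)), ⟨a + (2*e+1),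
        ⟨by omega, by linarith [min_le_left r e, le_max_left (0:ℤ) (r-e), hhi], ⟨1, by ring⟩⟩,
        rfl⟩, ?_⟩
    intro hcon
    have := pmap_inj ℓ hcon
    omega
  refine ⟨by omega, ?_, ?_, fun C hC _ => hcard C hC⟩
  · have hset : {C : Set (Fin 2 → ℤ) | IsPerfectCode 1 ℓ e C ∧ C.Nontrivial}
        = (Set.image (pmap ℓ)) '' (zCode e ℓ '' Set.Icc (max 0 (r - e)) (min r e)) := by
      ext C
      simp only [Set.mem_setOf_eq, Set.mem_image]
      constructor
      · rintro ⟨hC, -⟩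
        obtain ⟨S, hS, rfl⟩ := (isPC_iff hℓ0 C).mp hC
        obtain ⟨a, ⟨hlo, hhi⟩, rfl⟩ := (zPC_char he hq hr0 hr hℓ S).mp hS
        exact ⟨zCode e ℓ a, ⟨a, Set.mem_Icc.mpr ⟨hlo, hhi⟩, rfl⟩, rfl⟩
      · rintro ⟨S, ⟨a, ha, rfl⟩, rfl⟩
        rw [Set.mem_Icc] at ha
        have hpc : IsPerfectCode 1 ℓ e (pmap ℓ '' zCode e ℓ a) :=
          (isPC_iff hℓ0 _).mpr ⟨zCode e ℓ a,
            (zPC_char he hq hr0 hr hℓ _).mpr ⟨a, ⟨ha.1, ha.2⟩, rfl⟩, rfl⟩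
        exact ⟨hpc, hnt _ hpc⟩
    rw [hset]
    rw [Set.ncard_image_of_injective _ (Set.image_injective.mpr (pmap_inj ℓ))]
    rw [Set.ncard_image_of_injOn (zCode_inj he hq hr0 hr hℓ)]
    rw [← Finset.coe_Icc, Set.ncard_coe_finset, Int.card_Icc]
    omega
  · rw [eq_comm, Int.ceil_eq_iff]
    have hm : (0:ℚ) < 2 * (e:ℚ) + 1 := by
      have : (1:ℚ) ≤ (e:ℚ) := by exact_mod_cast he
      linarith
    have hQ : (ℓ:ℚ) = (q:ℚ) * (2 * (e:ℚ) + 1) + (r:ℚ) := by exact_mod_cast hℓ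
    have hr0Q : (0:ℚ) ≤ (r:ℚ) := by exact_mod_cast hr0
    have hrQ : (r:ℚ) ≤ 2 * (e:ℚ) := by exact_mod_cast (show r ≤ 2*e by omega)
    constructor
    · rw [lt_div_iff₀ hm]
      push_cast
      nlinarith
    · rw [div_le_iff₀ hm]
      push_cast
      nlinarith
end

section
/- Let e ≥ 1, write ℓ = q(2e+1) + r with q ≥ 1 and 0 ≤ r < 2e+1, and set M = min{r + 1, 2e + 1 − r} and s = min{r, e}. Then for each m with 1 ≤ m ≤ M, the code C₁^(m) = {(ℓ − s + m − 1 − i(2e+1), s − m + 1 + i(2e+1)) : i = 0, 1, …, q} is an e-perfect code in the discrete 1-simplex Δ_ℓ^1. -/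
lemma sdist_two (c w : Fin 2 → ℤ) (h : c 0 + c 1 = w 0 + w 1) :
    sdist c w = |c 1 - w 1| := by
  have h0 : c 0 - w 0 = -(c 1 - w 1) := by linarith
  have hsum : sdist c w = max (c 0 - w 0) 0 + max (c 1 - w 1) 0 := by
    simp [sdist, Fin.sum_univ_succ]
  rw [hsum, h0]
  rcases le_total (c 1 - w 1) 0 with hh | hh
  · rw [abs_of_nonpos hh, max_eq_left (by linarith), max_eq_right hh]; ring
  · rw [abs_of_nonneg hh, max_eq_right (by linarith), max_eq_left hh]; ring

theorem stmt_6 (e q r ℓ s : ℤ) (he : 1 ≤ e) (hq : 1 ≤ q) (hr0 : 0 ≤ r) (hr : r < 2 * e + 1)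
    (hℓ : ℓ = q * (2 * e + 1) + r) (hs : s = min r e)
    (m : ℤ) (hm1 : 1 ≤ m) (hm2 : m ≤ min (r + 1) (2 * e + 1 - r)) :
    IsPerfectCode 1 ℓ e
      {p : Fin 2 → ℤ | ∃ i : ℤ, 0 ≤ i ∧ i ≤ q ∧
        p = ![ℓ - s + m - 1 - i * (2 * e + 1), s - m + 1 + i * (2 * e + 1)]} := by
  have ht0 : 0 ≤ s - m + 1 := by omega
  have hte : s - m + 1 ≤ e := by omega
  have htr : s - m + 1 ≤ r := by omega
  have hret : r ≤ s - m + 1 + e := by omega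
  set t : ℤ := s - m + 1 with htdef
  set N : ℤ := 2 * e + 1 with hNdef
  have hN : 0 < N := by omega
  have hmem : ∀ i : ℤ, 0 ≤ i → i ≤ q →
      (![ℓ - s + m - 1 - i * N, s - m + 1 + i * N] : Fin 2 → ℤ) ∈ simplex 1 ℓ := by
    intro i hi0 hiq
    have hle : i * N ≤ q * N := mul_le_mul_of_nonneg_right hiq hN.le
    have hge : 0 ≤ i * N := mul_nonneg hi0 hN.le
    refine ⟨?_, ?_⟩
    · intro k
      fin_cases k <;> simp <;> omega
    · simp [Fin.sum_univ_two]
      try ring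
  constructor
  · intro p hp
    obtain ⟨i, hi0, hiq, rfl⟩ := hp
    exact hmem i hi0 hiq
  · intro w hw
    obtain ⟨hwpos, hwsum⟩ := hw
    have hw0 := hwpos 0
    have hw1 := hwpos 1
    have hwsum' : w 0 + w 1 = ℓ := by simpa [Fin.sum_univ_two] using hwsum
    have hw1le : w 1 ≤ ℓ := by linarith
    set i : ℤ := (w 1 - t + e) / N with hidef
    have hdiv := Int.mul_ediv_add_emod (w 1 - t + e) N
    have hmod0 : 0 ≤ (w 1 - t + e) % N := Int.emod_nonneg _ (by omega)
    have hmodlt : (w 1 - t + e) % N < N := Int.emod_lt_of_pos _ hN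
    have hi0 : 0 ≤ i := Int.ediv_nonneg (by omega) hN.le
    have hiq : i ≤ q := by
      have h1 : N * i < N * (q + 1) := by
        have : N * i ≤ w 1 - t + e := by rw [hidef]; omega
        nlinarith
      have := lt_of_mul_lt_mul_left h1 hN.le
      omega
    have hNi : N * i = w 1 - t + e - (w 1 - t + e) % N := by rw [hidef]; omega
    have hdist : |t + i * N - w 1| ≤ e := by
      rw [abs_le]
      constructor <;> nlinarith [hNi]
    refine ⟨![ℓ - s + m - 1 - i * N, s - m + 1 + i * N], ⟨⟨i, hi0, hiq, rfl⟩, ?_⟩, ?_⟩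
    · have hc := hmem i hi0 hiq
      have hcsum : (![ℓ - s + m - 1 - i * N, s - m + 1 + i * N] : Fin 2 → ℤ) 0 +
          (![ℓ - s + m - 1 - i * N, s - m + 1 + i * N] : Fin 2 → ℤ) 1 = w 0 + w 1 := by
        simp; linarith
      rw [sdist_two _ _ hcsum]
      simpa using hdist
    · rintro c' ⟨⟨j, hj0, hjq, rfl⟩, hd'⟩
      have hcsum' : (![ℓ - s + m - 1 - j * N, s - m + 1 + j * N] : Fin 2 → ℤ) 0 +
          (![ℓ - s + m - 1 - j * N, s - m + 1 + j * N] : Fin 2 → ℤ) 1 = w 0 + w 1 := by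
        simp; linarith
      rw [sdist_two _ _ hcsum'] at hd'
      have hd'' : |t + j * N - w 1| ≤ e := by simpa using hd'
      have hij : j = i := by
        rw [abs_le] at hdist hd''
        by_contra hne
        rcases lt_or_gt_of_ne hne with h | h
        · have h1 : 1 ≤ i - j := by omega
          have h2 : 1 * N ≤ (i - j) * N := mul_le_mul_of_nonneg_right h1 hN.le
          have h3 : (i - j) * N = i * N - j * N := by ring
          linarith
        · have h1 : 1 ≤ j - i := by omega
          have h2 : 1 * N ≤ (j - i) * N := mul_le_mul_of_nonneg_right h1 hN.le
          have h3 : (j - i) * N = j * N - i * N := by ring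
          linarith
      rw [hij]
end

section
/- Let e ≥ 1, write ℓ = q(2e+1) + r with q ≥ 1 and 0 ≤ r < 2e+1, and set M = min{r + 1, 2e + 1 − r} and s = min{r, e}. Then every nontrivial e-perfect code in the discrete 1-simplex Δ_ℓ^1 is equal to C₁^(m) = {(ℓ − s + m − 1 − i(2e+1), s − m + 1 + i(2e+1)) : i = 0, 1, …, q} for some m with 1 ≤ m ≤ M. -/
theorem stmt_7 (e q r ℓ s : ℤ) (he : 1 ≤ e) (hq : 1 ≤ q) (hr0 : 0 ≤ r) (hr : r < 2 * e + 1)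
    (hℓ : ℓ = q * (2 * e + 1) + r) (hs : s = min r e) :
    ∀ C : Set (Fin 2 → ℤ), IsPerfectCode 1 ℓ e C → C.Nontrivial →
      ∃ m : ℤ, 1 ≤ m ∧ m ≤ min (r + 1) (2 * e + 1 - r) ∧
        C = {p : Fin 2 → ℤ | ∃ i : ℤ, 0 ≤ i ∧ i ≤ q ∧
          p = ![ℓ - s + m - 1 - i * (2 * e + 1), s - m + 1 + i * (2 * e + 1)]} := by
  intro C hC _hnt
  obtain ⟨hsub, huniq⟩ := hC
  have hℓbig : 2 * e + 1 + r ≤ ℓ := by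
    have h1 : 1 * (2 * e + 1) ≤ q * (2 * e + 1) :=
      mul_le_mul_of_nonneg_right hq (by omega)
    linarith
  -- basic shape of codewords
  have hx : ∀ p ∈ C, p = ![ℓ - p 1, p 1] ∧ 0 ≤ p 1 ∧ p 1 ≤ ℓ := by
    intro p hp
    obtain ⟨hpos, hsum⟩ := hsub hp
    rw [Fin.sum_univ_two] at hsum
    have h0 := hpos 0
    have h1 := hpos 1
    refine ⟨?_, h1, by omega⟩
    funext i
    fin_cases i <;> simp <;> omega
  -- distance formula
  have hd : ∀ a b : ℤ, sdist ![ℓ - a, a] ![ℓ - b, b] = max (b - a) 0 + max (a - b) 0 := by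
    intro a b
    simp [sdist, Fin.sum_univ_two]
  -- simplex membership
  have hsimp : ∀ t : ℤ, 0 ≤ t → t ≤ ℓ → ![ℓ - t, t] ∈ simplex 1 ℓ := by
    intro t ht0 htl
    constructor
    · intro i; fin_cases i <;> simp <;> omega
    · simp [Fin.sum_univ_two]
  -- bounds for codewords (second coordinate)
  have hbd : ∀ c : ℤ, ![ℓ - c, c] ∈ C → 0 ≤ c ∧ c ≤ ℓ := by
    intro c hc
    have h := hx _ hc
    have h1 : (![ℓ - c, c] : Fin 2 → ℤ) 1 = c := by simp
    rw [h1] at h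
    exact h.2
  -- unique covering, in terms of second coordinate
  have key : ∀ t : ℤ, 0 ≤ t → t ≤ ℓ →
      ∃ c : ℤ, (![ℓ - c, c] ∈ C ∧ c - t ≤ e ∧ t - c ≤ e) ∧
        ∀ c' : ℤ, ![ℓ - c', c'] ∈ C → c' - t ≤ e → t - c' ≤ e → c' = c := by
    intro t ht0 htl
    obtain ⟨p, ⟨hpC, hpd⟩, hup⟩ := huniq ![ℓ - t, t] (hsimp t ht0 htl)
    obtain ⟨hpe, _hp0, _hpl⟩ := hx p hpC
    rw [hpe, hd] at hpd
    refine ⟨p 1, ⟨by rwa [← hpe], by omega, by omega⟩, ?_⟩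
    intro c' hc' h1 h2
    have hdist : sdist ![ℓ - c', c'] ![ℓ - t, t] ≤ e := by rw [hd]; omega
    have := hup ![ℓ - c', c'] ⟨hc', hdist⟩
    have := congrFun this 1
    rw [hpe]
    simpa using this
  -- separation: distinct codewords are ≥ 2e+1 apart
  have hsep : ∀ c c' : ℤ, ![ℓ - c, c] ∈ C → ![ℓ - c', c'] ∈ C → c < c' →
      c + 2 * e + 1 ≤ c' := by
    intro c c' hc hc' hlt
    by_contra hcon
    push_neg at hcon
    obtain ⟨hc0, hcl⟩ := hbd c hc
    obtain ⟨hc'0, hc'l⟩ := hbd c' hc'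
    set t : ℤ := max (c' - e) c with ht
    obtain ⟨u, _, hu⟩ := key t (by omega) (by omega)
    have e1 := hu c hc (by omega) (by omega)
    have e2 := hu c' hc' (by omega) (by omega)
    omega
  -- step: may advance by 2e+1
  have hstep : ∀ c : ℤ, ![ℓ - c, c] ∈ C → c + e < ℓ →
      ![ℓ - (c + (2 * e + 1)), c + (2 * e + 1)] ∈ C := by
    intro c hc hlt
    obtain ⟨hc0, hcl⟩ := hbd c hc
    obtain ⟨u, ⟨huC, hu1, hu2⟩, _⟩ := key (c + e + 1) (by omega) (by omega)
    have hgt : c < u := by omega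
    have h2 := hsep c u hc huC hgt
    have heq : u = c + (2 * e + 1) := by omega
    rwa [heq] at huC
  -- the minimal codeword c₀
  obtain ⟨c₀, ⟨hc₀C, hc₀1, hc₀2⟩, _⟩ := key 0 le_rfl (by omega)
  obtain ⟨hc₀0, hc₀l⟩ := hbd c₀ hc₀C
  have hc₀e : c₀ ≤ e := by omega
  have hmin : ∀ c : ℤ, ![ℓ - c, c] ∈ C → c₀ ≤ c := by
    intro c hc
    by_contra hcon
    push_neg at hcon
    have := hsep c c₀ hc hc₀C hcon
    have := (hbd c hc).1
    omega
  -- the maximal codeword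
  obtain ⟨ct, ⟨hctC, hct1, hct2⟩, _⟩ := key ℓ (by omega) le_rfl
  obtain ⟨hct0, hctl⟩ := hbd ct hctC
  have hmax : ∀ c : ℤ, ![ℓ - c, c] ∈ C → c ≤ ct := by
    intro c hc
    by_contra hcon
    push_neg at hcon
    have := hsep ct c hctC hc hcon
    have := (hbd c hc).2
    omega
  -- the arithmetic progression is in C
  have hprog : ∀ i : ℕ, (i : ℤ) ≤ q → ![ℓ - (c₀ + (i : ℤ) * (2 * e + 1)), c₀ + (i : ℤ) * (2 * e + 1)] ∈ C := by
    intro i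
    induction i with
    | zero => intro _; simpa using hc₀C
    | succ n ih =>
      intro hn
      have hn1 : (n : ℤ) + 1 ≤ q := by push_cast at hn; omega
      have hmemn := ih (by omega)
      have hlt : c₀ + (n : ℤ) * (2 * e + 1) + e < ℓ := by
        have hmul : (n : ℤ) * (2 * e + 1) ≤ (q - 1) * (2 * e + 1) :=
          mul_le_mul_of_nonneg_right (by omega) (by omega)
        nlinarith
      have := hstep _ hmemn hlt
      have heq : c₀ + ((n : ℤ) + 1) * (2 * e + 1) = c₀ + (n : ℤ) * (2 * e + 1) + (2 * e + 1) := by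
        ring
      push_cast
      rw [heq]
      exact this
  have hqprog : ![ℓ - (c₀ + q * (2 * e + 1)), c₀ + q * (2 * e + 1)] ∈ C := by
    have := hprog q.toNat (by rw [Int.toNat_of_nonneg (by omega)])
    rwa [Int.toNat_of_nonneg (by omega : (0:ℤ) ≤ q)] at this
  -- the top codeword equals c₀ + q(2e+1)
  have hcteq : ct = c₀ + q * (2 * e + 1) := by
    have h1 := hmax _ hqprog
    by_contra hcon
    have hlt : c₀ + q * (2 * e + 1) < ct := by omega
    have := hsep _ ct hqprog hctC hlt
    omega
  -- bounds on c₀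
  have hc₀r1 : r - e ≤ c₀ := by omega
  have hc₀r2 : c₀ ≤ r := by omega
  -- characterization of codewords
  have hDchar : ∀ c : ℤ, ![ℓ - c, c] ∈ C ↔
      ∃ i : ℤ, 0 ≤ i ∧ i ≤ q ∧ c = c₀ + i * (2 * e + 1) := by
    intro c
    constructor
    · intro hc
      have hlow := hmin c hc
      have hhigh := hmax c hc
      rw [hcteq] at hhigh
      set d : ℤ := c - c₀ with hdd
      set i : ℤ := d / (2 * e + 1) with hi
      set ρ : ℤ := d % (2 * e + 1) with hρ
      have hdiv : i * (2 * e + 1) + ρ = d := by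
        have := Int.mul_ediv_add_emod d (2 * e + 1); linarith
      have hρ0 : 0 ≤ ρ := Int.emod_nonneg d (by omega)
      have hρlt : ρ < 2 * e + 1 := Int.emod_lt_of_pos d (by omega)
      have hi0 : 0 ≤ i := Int.ediv_nonneg (by omega) (by omega)
      have hiq : i ≤ q := by
        by_contra hcon
        push_neg at hcon
        have h2 : (q + 1) * (2 * e + 1) ≤ i * (2 * e + 1) :=
          mul_le_mul_of_nonneg_right (by omega) (by omega)
        nlinarith
      have hmemi : ![ℓ - (c₀ + i * (2 * e + 1)), c₀ + i * (2 * e + 1)] ∈ C := by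
        have := hprog i.toNat (by rw [Int.toNat_of_nonneg hi0]; exact hiq)
        rwa [Int.toNat_of_nonneg hi0] at this
      have hceq : c = c₀ + i * (2 * e + 1) := by
        by_contra hne
        have hlt : c₀ + i * (2 * e + 1) < c := by omega
        have := hsep _ c hmemi hc hlt
        omega
      exact ⟨i, hi0, hiq, hceq⟩
    · rintro ⟨i, hi0, hiq, rfl⟩
      have := hprog i.toNat (by rw [Int.toNat_of_nonneg hi0]; exact hiq)
      rwa [Int.toNat_of_nonneg hi0] at this
  -- conclude
  refine ⟨s - c₀ + 1, by omega, by omega, ?_⟩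
  ext p
  simp only [Set.mem_setOf_eq]
  constructor
  · intro hp
    obtain ⟨hpe, hp0, hpl⟩ := hx p hp
    have hpD : ![ℓ - p 1, p 1] ∈ C := by rwa [← hpe]
    obtain ⟨i, hi0, hiq, hci⟩ := (hDchar (p 1)).1 hpD
    refine ⟨i, hi0, hiq, ?_⟩
    rw [hpe, hci]
    congr 1 <;> ring
  · rintro ⟨i, hi0, hiq, rfl⟩
    have hmem := (hDchar (s - (s - c₀ + 1) + 1 + i * (2 * e + 1))).2
      ⟨i, hi0, hiq, by ring⟩
    have heq : (![ℓ - s + (s - c₀ + 1) - 1 - i * (2 * e + 1),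
        s - (s - c₀ + 1) + 1 + i * (2 * e + 1)] : Fin 2 → ℤ) =
        ![ℓ - (s - (s - c₀ + 1) + 1 + i * (2 * e + 1)),
          s - (s - c₀ + 1) + 1 + i * (2 * e + 1)] := by
      congr 1 <;> ring
    rw [heq]
    exact hmem
end

section
/- For every integer e ≥ 1, the codes C₂^(1) = {(2e+1, e, 0), (0, 2e+1, e), (e, 0, 2e+1)} and C₂^(2) = {(2e+1, 0, e), (e, 2e+1, 0), (0, e, 2e+1)} are e-perfect codes in the discrete 2-simplex Δ_{3e+1}^2. -/
set_option maxHeartbeats 2000000 in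
theorem stmt_8 (e : ℤ) (he : 1 ≤ e) :
    IsPerfectCode 2 (3 * e + 1) e
      {![2 * e + 1, e, 0], ![0, 2 * e + 1, e], ![e, 0, 2 * e + 1]} ∧
    IsPerfectCode 2 (3 * e + 1) e
      {![2 * e + 1, 0, e], ![e, 2 * e + 1, 0], ![0, e, 2 * e + 1]} := by
  constructor <;> constructor
  · intro c hc
    simp only [Set.mem_insert_iff, Set.mem_singleton_iff] at hc
    rcases hc with rfl | rfl | rfl <;>
      exact ⟨fun i => by fin_cases i <;> simp <;> omega,
        by simp [Fin.sum_univ_three]; ring⟩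
  · rintro w ⟨hpos, hsum⟩
    have h0 := hpos 0; have h1 := hpos 1; have h2 := hpos 2
    rw [Fin.sum_univ_three] at hsum
    rcases show sdist ![2 * e + 1, e, 0] w ≤ e ∨ sdist ![0, 2 * e + 1, e] w ≤ e ∨
        sdist ![e, 0, 2 * e + 1] w ≤ e by
        simp [sdist, Fin.sum_univ_succ]; omega with h | h | h
    · refine ⟨_, ⟨by simp, h⟩, ?_⟩
      rintro c ⟨hc, hdc⟩
      simp only [Set.mem_insert_iff, Set.mem_singleton_iff] at hc
      rcases hc with rfl | rfl | rfl
      · rfl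
      · simp [sdist, Fin.sum_univ_succ] at h hdc; omega
      · simp [sdist, Fin.sum_univ_succ] at h hdc; omega
    · refine ⟨_, ⟨by simp, h⟩, ?_⟩
      rintro c ⟨hc, hdc⟩
      simp only [Set.mem_insert_iff, Set.mem_singleton_iff] at hc
      rcases hc with rfl | rfl | rfl
      · simp [sdist, Fin.sum_univ_succ] at h hdc; omega
      · rfl
      · simp [sdist, Fin.sum_univ_succ] at h hdc; omega
    · refine ⟨_, ⟨by simp, h⟩, ?_⟩
      rintro c ⟨hc, hdc⟩
      simp only [Set.mem_insert_iff, Set.mem_singleton_iff] at hc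
      rcases hc with rfl | rfl | rfl
      · simp [sdist, Fin.sum_univ_succ] at h hdc; omega
      · simp [sdist, Fin.sum_univ_succ] at h hdc; omega
      · rfl
  · intro c hc
    simp only [Set.mem_insert_iff, Set.mem_singleton_iff] at hc
    rcases hc with rfl | rfl | rfl <;>
      exact ⟨fun i => by fin_cases i <;> simp <;> omega,
        by simp [Fin.sum_univ_three]; ring⟩
  · rintro w ⟨hpos, hsum⟩
    have h0 := hpos 0; have h1 := hpos 1; have h2 := hpos 2
    rw [Fin.sum_univ_three] at hsum
    rcases show sdist ![2 * e + 1, 0, e] w ≤ e ∨ sdist ![e, 2 * e + 1, 0] w ≤ e ∨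
        sdist ![0, e, 2 * e + 1] w ≤ e by
        simp [sdist, Fin.sum_univ_succ]; omega with h | h | h
    · refine ⟨_, ⟨by simp, h⟩, ?_⟩
      rintro c ⟨hc, hdc⟩
      simp only [Set.mem_insert_iff, Set.mem_singleton_iff] at hc
      rcases hc with rfl | rfl | rfl
      · rfl
      · simp [sdist, Fin.sum_univ_succ] at h hdc; omega
      · simp [sdist, Fin.sum_univ_succ] at h hdc; omega
    · refine ⟨_, ⟨by simp, h⟩, ?_⟩
      rintro c ⟨hc, hdc⟩
      simp only [Set.mem_insert_iff, Set.mem_singleton_iff] at hc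
      rcases hc with rfl | rfl | rfl
      · simp [sdist, Fin.sum_univ_succ] at h hdc; omega
      · rfl
      · simp [sdist, Fin.sum_univ_succ] at h hdc; omega
    · refine ⟨_, ⟨by simp, h⟩, ?_⟩
      rintro c ⟨hc, hdc⟩
      simp only [Set.mem_insert_iff, Set.mem_singleton_iff] at hc
      rcases hc with rfl | rfl | rfl
      · simp [sdist, Fin.sum_univ_succ] at h hdc; omega
      · simp [sdist, Fin.sum_univ_succ] at h hdc; omega
      · rfl
end

section
/- Let e ≥ 0, let {k, l, m} = {0, 1, 2} be three distinct indices, and let x, y, w ∈ Δ_ℓ^2 be such that d(x, w) = d(y, w) = e + 1 and d(x, w + f_{k,l}) = d(x, w + f_{m,l}) = d(y, w + f_{k,m}) = e (the displaced points being assumed to lie in Δ_ℓ^2). Then any z ∈ Δ_ℓ^2 such that w ∈ B(z, e), B(x, e) ∩ B(z, e) = ∅, and B(y, e) ∩ B(z, e) = ∅ must equal z = w + e·f_{l,k}. -/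
lemma ball_iff' (ℓ e : ℤ) (u P : Fin 3 → ℤ) :
    P ∈ ball 2 ℓ u e ↔ (0 ≤ P 0 ∧ 0 ≤ P 1 ∧ 0 ≤ P 2 ∧ P 0 + P 1 + P 2 = ℓ ∧
      max (u 0 - P 0) 0 + max (u 1 - P 1) 0 + max (u 2 - P 2) 0 ≤ e) := by
  constructor
  · rintro ⟨⟨h0, h1⟩, h2⟩
    rw [Fin.sum_univ_three] at h1
    rw [sdist, Fin.sum_univ_three] at h2
    exact ⟨h0 0, h0 1, h0 2, h1, h2⟩
  · rintro ⟨h0, h1, h2, h3, h4⟩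
    refine ⟨⟨fun i => ?_, ?_⟩, ?_⟩
    · fin_cases i <;> assumption
    · rw [Fin.sum_univ_three]; exact h3
    · rw [sdist, Fin.sum_univ_three]; exact h4

lemma simplex_iff' (ℓ : ℤ) (u : Fin 3 → ℤ) :
    u ∈ simplex 2 ℓ ↔ (0 ≤ u 0 ∧ 0 ≤ u 1 ∧ 0 ≤ u 2 ∧ u 0 + u 1 + u 2 = ℓ) := by
  constructor
  · rintro ⟨h0, h1⟩
    rw [Fin.sum_univ_three] at h1
    exact ⟨h0 0, h0 1, h0 2, h1⟩
  · rintro ⟨h0, h1, h2, h3⟩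
    refine ⟨fun i => ?_, ?_⟩
    · fin_cases i <;> assumption
    · rw [Fin.sum_univ_three]; exact h3

/-- If two balls of radius `e` have centers at distance at most `2e`, they intersect. -/
lemma exists_mid (ℓ e : ℤ) (he : 0 ≤ e) (u v : Fin 3 → ℤ)
    (hu : u ∈ simplex 2 ℓ) (hv : v ∈ simplex 2 ℓ) (hd : sdist u v ≤ 2 * e) :
    ∃ P, P ∈ ball 2 ℓ u e ∧ P ∈ ball 2 ℓ v e := by
  rw [simplex_iff'] at hu hv
  rw [sdist, Fin.sum_univ_three] at hd
  obtain ⟨hu0, hu1, hu2, hus⟩ := hu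
  obtain ⟨hv0, hv1, hv2, hvs⟩ := hv
  obtain ⟨L0, hL0⟩ : ∃ L0, L0 = max (max (u 0) (v 0) - e) 0 := ⟨_, rfl⟩
  obtain ⟨L1, hL1⟩ : ∃ L1, L1 = max (max (u 1) (v 1) - e) 0 := ⟨_, rfl⟩
  obtain ⟨L2, hL2⟩ : ∃ L2, L2 = max (max (u 2) (v 2) - e) 0 := ⟨_, rfl⟩
  obtain ⟨U0, hU0⟩ : ∃ U0, U0 = min (u 0) (v 0) + e := ⟨_, rfl⟩
  obtain ⟨U1, hU1⟩ : ∃ U1, U1 = min (u 1) (v 1) + e := ⟨_, rfl⟩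
  obtain ⟨U2, hU2⟩ : ∃ U2, U2 = min (u 2) (v 2) + e := ⟨_, rfl⟩
  have hLsum : L0 + L1 + L2 ≤ ℓ := by omega
  have hUsum : ℓ ≤ U0 + U1 + U2 := by
    clear * - hU0 hU1 hU2 hd hus hvs he; omega
  have hb0 : L0 ≤ U0 ∧ 0 ≤ L0 ∧ u 0 - e ≤ L0 ∧ v 0 - e ≤ L0 ∧ U0 ≤ u 0 + e ∧ U0 ≤ v 0 + e := by
    clear * - hL0 hU0 hd hus hvs he hu0 hv0 hu1 hv1 hu2 hv2; omega
  have hb1 : L1 ≤ U1 ∧ 0 ≤ L1 ∧ u 1 - e ≤ L1 ∧ v 1 - e ≤ L1 ∧ U1 ≤ u 1 + e ∧ U1 ≤ v 1 + e := by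
    clear * - hL1 hU1 hd hus hvs he hu0 hv0 hu1 hv1 hu2 hv2; omega
  have hb2 : L2 ≤ U2 ∧ 0 ≤ L2 ∧ u 2 - e ≤ L2 ∧ v 2 - e ≤ L2 ∧ U2 ≤ u 2 + e ∧ U2 ≤ v 2 + e := by
    clear * - hL2 hU2 hd hus hvs he hu0 hv0 hu1 hv1 hu2 hv2; omega
  clear hL0 hL1 hL2 hU0 hU1 hU2 hd
  obtain ⟨p0, hp0a, hp0b, hp0c, hp0d⟩ :
      ∃ p0, L0 ≤ p0 ∧ p0 ≤ U0 ∧ ℓ - U1 - U2 ≤ p0 ∧ p0 ≤ ℓ - L1 - L2 :=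
    ⟨max L0 (ℓ - U1 - U2), by omega, by omega, by omega, by omega⟩
  obtain ⟨p1, hp1a, hp1b, hp1c, hp1d⟩ :
      ∃ p1, L1 ≤ p1 ∧ p1 ≤ U1 ∧ ℓ - p0 - U2 ≤ p1 ∧ p1 ≤ ℓ - p0 - L2 :=
    ⟨max L1 (ℓ - p0 - U2), by omega, by omega, by omega, by omega⟩
  have key : ∃ p0 p1 p2 : ℤ, 0 ≤ p0 ∧ 0 ≤ p1 ∧ 0 ≤ p2 ∧ p0 + p1 + p2 = ℓ ∧
      max (u 0 - p0) 0 + max (u 1 - p1) 0 + max (u 2 - p2) 0 ≤ e ∧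
      max (v 0 - p0) 0 + max (v 1 - p1) 0 + max (v 2 - p2) 0 ≤ e :=
    ⟨p0, p1, ℓ - p0 - p1, by omega, by omega, by omega, by omega, by omega, by omega⟩
  obtain ⟨p0, p1, p2, h0, h1, h2, h3, h4, h5⟩ := key
  exact ⟨fun i => if i = 0 then p0 else if i = 1 then p1 else p2,
    (ball_iff' ℓ e u _).2 (by norm_num; exact ⟨h0, h1, h2, h3, h4⟩),
    (ball_iff' ℓ e v _).2 (by norm_num; exact ⟨h0, h1, h2, h3, h5⟩)⟩

lemma sum_perm3 (k l m : Fin 3) (hkl : k ≠ l) (hkm : k ≠ m) (hlm : l ≠ m) (f : Fin 3 → ℤ) :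
    ∑ i, f i = f k + f l + f m := by
  fin_cases k <;> fin_cases l <;> fin_cases m <;>
    simp_all [Fin.sum_univ_three] <;> ring

lemma fin3_cover (k l m i : Fin 3) (hkl : k ≠ l) (hkm : k ≠ m) (hlm : l ≠ m) :
    i = k ∨ i = l ∨ i = m := by
  have h1 : k.val ≠ l.val := fun h => hkl (Fin.ext h)
  have h2 : k.val ≠ m.val := fun h => hkm (Fin.ext h)
  have h3 : l.val ≠ m.val := fun h => hlm (Fin.ext h)
  have : i.val = k.val ∨ i.val = l.val ∨ i.val = m.val := by
    have := i.isLt; have := k.isLt; have := l.isLt; have := m.isLt; omega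
  rcases this with h | h | h
  · exact Or.inl (Fin.ext h)
  · exact Or.inr (Or.inl (Fin.ext h))
  · exact Or.inr (Or.inr (Fin.ext h))

theorem stmt_11 (e ℓ : ℤ) (he : 0 ≤ e) (k l m : Fin 3)
    (hkl : k ≠ l) (hkm : k ≠ m) (hlm : l ≠ m)
    (x y w : Fin 3 → ℤ)
    (hx : x ∈ simplex 2 ℓ) (hy : y ∈ simplex 2 ℓ) (hw : w ∈ simplex 2 ℓ)
    (hkl' : w + fvec 2 k l ∈ simplex 2 ℓ) (hml' : w + fvec 2 m l ∈ simplex 2 ℓ)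
    (hkm' : w + fvec 2 k m ∈ simplex 2 ℓ)
    (hxw : sdist x w = e + 1) (hyw : sdist y w = e + 1)
    (hx1 : sdist x (w + fvec 2 k l) = e) (hx2 : sdist x (w + fvec 2 m l) = e)
    (hy1 : sdist y (w + fvec 2 k m) = e) :
    ∀ z ∈ simplex 2 ℓ, w ∈ ball 2 ℓ z e →
      ball 2 ℓ x e ∩ ball 2 ℓ z e = ∅ → ball 2 ℓ y e ∩ ball 2 ℓ z e = ∅ →
      z = w + e • fvec 2 l k := by
  intro z hz hwz hxz hyz
  have hzw : sdist z w ≤ e := hwz.2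
  have hdx : 2 * e + 1 ≤ sdist x z := by
    by_contra h
    push_neg at h
    obtain ⟨P, hP1, hP2⟩ := exists_mid ℓ e he x z hx hz (by omega)
    exact Set.notMem_empty P (hxz ▸ Set.mem_inter hP1 hP2)
  have hdy : 2 * e + 1 ≤ sdist y z := by
    by_contra h
    push_neg at h
    obtain ⟨P, hP1, hP2⟩ := exists_mid ℓ e he y z hy hz (by omega)
    exact Set.notMem_empty P (hyz ▸ Set.mem_inter hP1 hP2)
  -- evaluate the direction vectors
  have A1 : fvec 2 k l k = 1 := by simp [fvec, hkl]
  have A2 : fvec 2 k l l = -1 := by simp [fvec, hkl.symm]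
  have A3 : fvec 2 k l m = 0 := by simp [fvec, hkm.symm, hlm.symm]
  have B1 : fvec 2 m l m = 1 := by simp [fvec, hlm.symm]
  have B2 : fvec 2 m l l = -1 := by simp [fvec, hlm]
  have B3 : fvec 2 m l k = 0 := by simp [fvec, hkm, hkl]
  have C1 : fvec 2 k m k = 1 := by simp [fvec, hkm]
  have C2 : fvec 2 k m m = -1 := by simp [fvec, hkm.symm]
  have C3 : fvec 2 k m l = 0 := by simp [fvec, hkl.symm, hlm]
  have D1 : fvec 2 l k l = 1 := by simp [fvec, hkl.symm]
  have D2 : fvec 2 l k k = -1 := by simp [fvec, hkl]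
  have D3 : fvec 2 l k m = 0 := by simp [fvec, hkm.symm, hlm.symm]
  -- expand all distances and sums in coordinates k, l, m
  obtain ⟨hx0, hxs⟩ := hx
  obtain ⟨hy0, hys⟩ := hy
  obtain ⟨hw0, hws⟩ := hw
  obtain ⟨hz0, hzs⟩ := hz
  rw [sum_perm3 k l m hkl hkm hlm] at hxs hys hws hzs
  rw [sdist, sum_perm3 k l m hkl hkm hlm] at hxw hyw hx1 hx2 hy1 hzw hdx hdy
  simp only [Pi.add_apply, A1, A2, A3] at hx1
  simp only [Pi.add_apply, B1, B2, B3] at hx2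
  simp only [Pi.add_apply, C1, C2, C3] at hy1
  -- the arithmetic core
  have s1 : w k + 1 ≤ x k ∧ x l ≤ w l - 1 := by clear * - hxw hx1; omega
  have s2 : w m + 1 ≤ x m ∧ x l ≤ w l - 1 := by clear * - hxw hx2; omega
  have s3 : w k + 1 ≤ y k ∧ y m ≤ w m - 1 := by clear * - hyw hy1; omega
  have s4 : x l - w l = -(e + 1) ∧ (x k - w k) + (x m - w m) = e + 1 := by
    clear * - hxw hxs hws s1 s2; omega
  have s5 : (y k - w k) + max (y l - w l) 0 = e + 1 := by
    clear * - hyw s3; omega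
  have s6 : w k - e ≤ z k ∧ z k ≤ w k + e ∧ w l - e ≤ z l ∧ z l ≤ w l + e ∧
      w m - e ≤ z m ∧ z m ≤ w m + e := by
    clear * - hzw hzs hws; omega
  have s7 : z l = w l + e ∧ z k ≤ w k ∧ z m ≤ w m := by
    clear * - hdx hzw hzs hws s1 s2 s4 s6 he; omega
  have s8 : z k = w k - e ∧ z m = w m := by
    clear * - hdy hzs hws s3 s5 s6 s7 he; omega
  funext i
  rcases fin3_cover k l m i hkl hkm hlm with h | h | h <;> subst h <;>
    simp only [Pi.add_apply, Pi.smul_apply, smul_eq_mul, D1, D2, D3] <;>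
    clear * - s7 s8 <;> omega
end
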